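/- arXiv:2407.13457 — 7 statements merged into one kernel-verified Lean document; each statement's English description precedes it below -/
import Mathlib

section
/- Duality, direction (b)⇒(a): Let (Ω, F, P) be a probability space, T₁,…,T_M measure-preserving Markov operators with adjoints T_i^⋆, κ ∈ (0,1), θ a probability vector, and set c_i = θ_i/(1−κ). If the generalized Brascamp–Lieb inequality E[∏_i e^{c_i T_i φ_i}] ≤ ∏_i E[e^{φ_i}]^{c_i} holds for all bounded measurable φ_1,…,φ_M, then for every bounded nonnegative f with E[f] = 1 one has ∑_i θ_i Ent(T_i^⋆ f) ≤ (1−κ) Ent(f). -/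
open MeasureTheory ProbabilityTheory
open scoped BigOperators ENNReal

/-- Action of a transition kernel on functions: `(Tf)(x) = ∫ f(y) T(x,dy)`. -/
noncomputable def kapp {Ω : Type*} [MeasurableSpace Ω] (T : Kernel Ω Ω) (f : Ω → ℝ) (x : Ω) : ℝ :=
  ∫ y, f y ∂(T x)

/-- The entropy functional `Ent(g) = E[g log g] - E[g] log E[g]`. -/
noncomputable def ent {Ω : Type*} [MeasurableSpace Ω] (P : Measure Ω) (g : Ω → ℝ) : ℝ :=
  (∫ x, g x * Real.log (g x) ∂P) - (∫ x, g x ∂P) * Real.log (∫ x, g x ∂P)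

section AuxLemmas

variable {Ω : Type*} [MeasurableSpace Ω] {P : Measure Ω}

lemma int_bdd [IsFiniteMeasure P] {g : Ω → ℝ} (hg : Measurable g) {C : ℝ}
    (h : ∀ x, |g x| ≤ C) : Integrable g P :=
  (integrable_const C).mono' hg.aestronglyMeasurable (Filter.Eventually.of_forall h)

lemma measurable_kapp (K : Kernel Ω Ω) [IsMarkovKernel K] {g : Ω → ℝ} (hg : Measurable g) :
    Measurable (kapp K g) :=
  (MeasureTheory.StronglyMeasurable.integral_kernel_prod_right (κ := K)
    (f := fun _ y => g y) (hg.stronglyMeasurable.comp_measurable measurable_snd)).measurable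

lemma abs_kapp_le (K : Kernel Ω Ω) [IsMarkovKernel K] {g : Ω → ℝ} (hg : Measurable g)
    {C : ℝ} (h : ∀ x, |g x| ≤ C) (x : Ω) : |kapp K g x| ≤ C := by
  calc |∫ y, g y ∂(K x)| ≤ ∫ y, |g y| ∂(K x) := by
        simpa [Real.norm_eq_abs] using norm_integral_le_integral_norm (μ := K x) g
    _ ≤ ∫ _, C ∂(K x) := integral_mono (int_bdd hg h).abs (integrable_const C)
        (fun y => h y)
    _ = C := by simp

lemma kapp_nonneg (K : Kernel Ω Ω) {g : Ω → ℝ} (h : ∀ x, 0 ≤ g x) (x : Ω) :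
    0 ≤ kapp K g x := integral_nonneg h

lemma lint_ne_top (μ : Measure Ω) [IsProbabilityMeasure μ] {g : Ω → ℝ} {D : ℝ}
    (hgD : ∀ x, g x ≤ D) : ∫⁻ y, ENNReal.ofReal (g y) ∂μ ≠ ∞ := by
  refine ne_top_of_le_ne_top (b := ENNReal.ofReal D) (by simp) ?_
  calc ∫⁻ y, ENNReal.ofReal (g y) ∂μ ≤ ∫⁻ _, ENNReal.ofReal D ∂μ :=
        lintegral_mono (fun y => ENNReal.ofReal_le_ofReal (hgD y))
    _ = ENNReal.ofReal D := by simp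

lemma ofReal_kapp (K : Kernel Ω Ω) [IsMarkovKernel K] {g : Ω → ℝ} (hg : Measurable g)
    (hg0 : ∀ x, 0 ≤ g x) {D : ℝ} (hgD : ∀ x, g x ≤ D) (x : Ω) :
    ENNReal.ofReal (kapp K g x) = ∫⁻ y, ENNReal.ofReal (g y) ∂(K x) := by
  rw [show kapp K g x = (∫⁻ y, ENNReal.ofReal (g y) ∂(K x)).toReal from
    integral_eq_lintegral_of_nonneg_ae (Filter.Eventually.of_forall hg0)
      hg.aestronglyMeasurable]
  exact ENNReal.ofReal_toReal (lint_ne_top (K x) hgD)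

lemma gibbs_pt {a b : ℝ} (ha : 0 ≤ a) : a * b ≤ a * Real.log a - a + Real.exp b := by
  rcases ha.eq_or_lt with h | h
  · simp only [← h, zero_mul, sub_zero, zero_sub, neg_zero, zero_add]
    positivity
  · have h1 : b - Real.log a + 1 ≤ Real.exp (b - Real.log a) := Real.add_one_le_exp _
    have h2 : a * (b - Real.log a + 1) ≤ a * Real.exp (b - Real.log a) :=
      mul_le_mul_of_nonneg_left h1 ha
    have h3 : a * Real.exp (b - Real.log a) = Real.exp b := by
      rw [Real.exp_sub, Real.exp_log h]
      field_simp
    nlinarith [h2, h3]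

lemma abs_xlogx_le {a C : ℝ} (ha : 0 ≤ a) (haC : a ≤ C) : |a * Real.log a| ≤ 1 + C ^ 2 := by
  have hC : 0 ≤ C := le_trans ha haC
  rcases ha.eq_or_lt with h | h
  · rw [← h]; simp; positivity
  · have h2 : Real.log a ≤ a - 1 := Real.log_le_sub_one_of_pos h
    have h1 : Real.log a⁻¹ ≤ a⁻¹ - 1 := Real.log_le_sub_one_of_pos (inv_pos.2 h)
    rw [Real.log_inv] at h1
    have hinv : a * a⁻¹ = 1 := mul_inv_cancel₀ h.ne'
    rw [abs_le]
    constructor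
    · nlinarith [mul_le_mul_of_nonneg_left h1 ha]
    · nlinarith [mul_le_mul_of_nonneg_left h2 ha, sq_nonneg (a - C), sq_nonneg a]

end AuxLemmas

section Adj
variable {Ω : Type*} [MeasurableSpace Ω] {P : Measure Ω} [IsProbabilityMeasure P]
variable {K K' : Kernel Ω Ω} [IsMarkovKernel K] [IsMarkovKernel K']

omit [IsProbabilityMeasure P] in
lemma adjL1 (hadjK : ∀ A B : Set Ω, MeasurableSet A → MeasurableSet B →
      ∫⁻ x in A, K x B ∂P = ∫⁻ x in B, K' x A ∂P)
    {f : Ω → ℝ≥0∞} (hf : Measurable f) {B : Set Ω} (hB : MeasurableSet B) :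
    ∫⁻ x, f x * K x B ∂P = ∫⁻ x in B, ∫⁻ y, f y ∂(K' x) ∂P := by
  refine Measurable.ennreal_induction
    (motive := fun f => ∫⁻ x, f x * K x B ∂P = ∫⁻ x in B, ∫⁻ y, f y ∂(K' x) ∂P) ?_ ?_ ?_ hf
  · intro c s hs
    have h1 : ∀ x, (s.indicator (fun _ => c)) x * K x B
        = s.indicator (fun x => c * K x B) x := by
      intro x
      by_cases hx : x ∈ s <;> simp [hx]
    simp_rw [h1]
    rw [lintegral_indicator hs, lintegral_const_mul c (Kernel.measurable_coe K hB),
      hadjK s B hs hB]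
    have h2 : ∀ x, ∫⁻ y, (s.indicator (fun _ => c)) y ∂(K' x) = c * K' x s := fun x =>
      lintegral_indicator_const hs c
    simp_rw [h2]
    rw [lintegral_const_mul c (Kernel.measurable_coe K' hs)]
  · intro f g _ hfm hgm ihf ihg
    have h1 : ∀ x, (f + g) x * K x B = f x * K x B + g x * K x B := by
      intro x; simp [add_mul]
    simp_rw [h1]
    rw [lintegral_add_left (show Measurable fun x => f x * K x B from hfm.mul (Kernel.measurable_coe K hB)), ihf, ihg]
    have h2 : ∀ x, ∫⁻ y, (f + g) y ∂(K' x) = (∫⁻ y, f y ∂(K' x)) + ∫⁻ y, g y ∂(K' x) := by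
      intro x; exact lintegral_add_left hfm _
    simp_rw [h2]
    rw [lintegral_add_left ((Measurable.lintegral_kernel (κ := K') hfm))]
  · intro f hfm hmono ih
    have h1 : ∀ x, (⨆ n, f n x) * K x B = ⨆ n, f n x * K x B := by
      intro x; exact ENNReal.iSup_mul _ _
    simp_rw [h1]
    rw [lintegral_iSup (fun n => (show Measurable fun x => f n x * K x B from (hfm n).mul (Kernel.measurable_coe K hB)))
      (fun m n hmn x => mul_le_mul_left (hmono hmn x) _)]
    have h2 : ∀ x, ∫⁻ y, ⨆ n, f n y ∂(K' x) = ⨆ n, ∫⁻ y, f n y ∂(K' x) := by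
      intro x; exact lintegral_iSup hfm hmono
    simp_rw [h2]
    rw [lintegral_iSup (fun n => Measurable.lintegral_kernel (hfm n))
      (fun m n hmn x => lintegral_mono (fun y => hmono hmn y))]
    exact iSup_congr ih

omit [IsProbabilityMeasure P] in
lemma adjL2 (hadjK : ∀ A B : Set Ω, MeasurableSet A → MeasurableSet B →
      ∫⁻ x in A, K x B ∂P = ∫⁻ x in B, K' x A ∂P)
    {f : Ω → ℝ≥0∞} (hf : Measurable f) {φ : Ω → ℝ≥0∞} (hφ : Measurable φ) :
    ∫⁻ x, f x * ∫⁻ y, φ y ∂(K x) ∂P = ∫⁻ x, φ x * ∫⁻ y, f y ∂(K' x) ∂P := by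
  refine Measurable.ennreal_induction
    (motive := fun φ => ∫⁻ x, f x * ∫⁻ y, φ y ∂(K x) ∂P = ∫⁻ x, φ x * ∫⁻ y, f y ∂(K' x) ∂P)
    ?_ ?_ ?_ hφ
  · intro c s hs
    have h1 : ∀ x, ∫⁻ y, (s.indicator (fun _ => c)) y ∂(K x) = c * K x s := fun x =>
      lintegral_indicator_const hs c
    simp_rw [h1, mul_left_comm]
    rw [lintegral_const_mul c (show Measurable fun x => f x * K x s from hf.mul (Kernel.measurable_coe K hs)), adjL1 hadjK hf hs]
    have h2 : ∀ x, (s.indicator (fun _ => c)) x * ∫⁻ y, f y ∂(K' x)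
        = s.indicator (fun x => c * ∫⁻ y, f y ∂(K' x)) x := by
      intro x; by_cases hx : x ∈ s <;> simp [hx]
    simp_rw [h2]
    rw [lintegral_indicator hs, lintegral_const_mul c (Measurable.lintegral_kernel hf)]
  · intro φ ψ _ hφm hψm ihφ ihψ
    have h1 : ∀ x, f x * ∫⁻ y, (φ + ψ) y ∂(K x)
        = f x * ∫⁻ y, φ y ∂(K x) + f x * ∫⁻ y, ψ y ∂(K x) := by
      intro x
      rw [show ∫⁻ y, (φ + ψ) y ∂(K x) = (∫⁻ y, φ y ∂(K x)) + ∫⁻ y, ψ y ∂(K x) from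
        lintegral_add_left hφm _, mul_add]
    simp_rw [h1]
    rw [lintegral_add_left (show Measurable fun x => f x * ∫⁻ y, φ y ∂(K x) from hf.mul (Measurable.lintegral_kernel hφm)), ihφ, ihψ]
    have h2 : ∀ x, (φ + ψ) x * ∫⁻ y, f y ∂(K' x)
        = φ x * ∫⁻ y, f y ∂(K' x) + ψ x * ∫⁻ y, f y ∂(K' x) := by
      intro x; simp [add_mul]
    simp_rw [h2]
    rw [lintegral_add_left (show Measurable fun x => φ x * ∫⁻ y, f y ∂(K' x) from hφm.mul (Measurable.lintegral_kernel hf))]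
  · intro φ hφm hmono ih
    have h1 : ∀ x, f x * ∫⁻ y, ⨆ n, φ n y ∂(K x) = ⨆ n, f x * ∫⁻ y, φ n y ∂(K x) := by
      intro x
      rw [show ∫⁻ y, ⨆ n, φ n y ∂(K x) = ⨆ n, ∫⁻ y, φ n y ∂(K x) from
        lintegral_iSup hφm hmono, ENNReal.mul_iSup]
    simp_rw [h1]
    rw [lintegral_iSup (fun n => (show Measurable fun x => f x * ∫⁻ y, φ n y ∂(K x) from hf.mul (Measurable.lintegral_kernel (hφm n))))
      (fun m n hmn x => mul_le_mul_right (lintegral_mono (fun y => hmono hmn y)) _)]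
    have h2 : ∀ x, (⨆ n, φ n x) * ∫⁻ y, f y ∂(K' x) = ⨆ n, φ n x * ∫⁻ y, f y ∂(K' x) := by
      intro x; exact ENNReal.iSup_mul _ _
    simp_rw [h2]
    rw [lintegral_iSup (fun n => (show Measurable fun x => φ n x * ∫⁻ y, f y ∂(K' x) from (hφm n).mul (Measurable.lintegral_kernel hf)))
      (fun m n hmn x => mul_le_mul_left (hmono hmn x) _)]
    exact iSup_congr ih

lemma adj_real (hadjK : ∀ A B : Set Ω, MeasurableSet A → MeasurableSet B →
      ∫⁻ x in A, K x B ∂P = ∫⁻ x in B, K' x A ∂P)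
    {f φ : Ω → ℝ} (hfm : Measurable f) (hf0 : ∀ x, 0 ≤ f x) {C : ℝ} (hfC : ∀ x, f x ≤ C)
    (hφm : Measurable φ) (hφ0 : ∀ x, 0 ≤ φ x) {D : ℝ} (hφD : ∀ x, φ x ≤ D) :
    ∫ x, f x * kapp K φ x ∂P = ∫ x, φ x * kapp K' f x ∂P := by
  have e1 : ∫ x, f x * kapp K φ x ∂P
      = (∫⁻ x, ENNReal.ofReal (f x) * ∫⁻ y, ENNReal.ofReal (φ y) ∂(K x) ∂P).toReal := by
    rw [integral_eq_lintegral_of_nonneg_ae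
      (Filter.Eventually.of_forall fun x => mul_nonneg (hf0 x) (kapp_nonneg K hφ0 x))
      ((hfm.mul (measurable_kapp K hφm)).aestronglyMeasurable)]
    congr 1
    refine lintegral_congr fun x => ?_
    rw [ENNReal.ofReal_mul (hf0 x), ofReal_kapp K hφm hφ0 hφD x]
  have e2 : ∫ x, φ x * kapp K' f x ∂P
      = (∫⁻ x, ENNReal.ofReal (φ x) * ∫⁻ y, ENNReal.ofReal (f y) ∂(K' x) ∂P).toReal := by
    rw [integral_eq_lintegral_of_nonneg_ae
      (Filter.Eventually.of_forall fun x => mul_nonneg (hφ0 x) (kapp_nonneg K' hf0 x))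
      ((hφm.mul (measurable_kapp K' hfm)).aestronglyMeasurable)]
    congr 1
    refine lintegral_congr fun x => ?_
    rw [ENNReal.ofReal_mul (hφ0 x), ofReal_kapp K' hfm hf0 hfC x]
  rw [e1, e2, adjL2 hadjK hfm.ennreal_ofReal hφm.ennreal_ofReal]

lemma kapp_mean (hadjK : ∀ A B : Set Ω, MeasurableSet A → MeasurableSet B →
      ∫⁻ x in A, K x B ∂P = ∫⁻ x in B, K' x A ∂P)
    {f : Ω → ℝ} (hfm : Measurable f) (hf0 : ∀ x, 0 ≤ f x) {C : ℝ} (hfC : ∀ x, f x ≤ C) :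
    ∫ x, kapp K' f x ∂P = ∫ x, f x ∂P := by
  have h := adjL2 (P := P) hadjK hfm.ennreal_ofReal (φ := fun _ => (1:ℝ≥0∞)) measurable_const
  simp only [lintegral_one, measure_univ, mul_one, one_mul] at h
  have e1 : ∫ x, kapp K' f x ∂P = (∫⁻ x, ∫⁻ y, ENNReal.ofReal (f y) ∂(K' x) ∂P).toReal := by
    rw [integral_eq_lintegral_of_nonneg_ae
      (Filter.Eventually.of_forall fun x => kapp_nonneg K' hf0 x)
      ((measurable_kapp K' hfm).aestronglyMeasurable)]
    congr 1
    exact lintegral_congr fun x => ofReal_kapp K' hfm hf0 hfC x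
  have e2 : ∫ x, f x ∂P = (∫⁻ x, ENNReal.ofReal (f x) ∂P).toReal :=
    integral_eq_lintegral_of_nonneg_ae (Filter.Eventually.of_forall hf0)
      hfm.aestronglyMeasurable
  rw [e1, e2, ← h]

end Adj

/-- Duality, direction (b) ⇒ (a): if the generalized Brascamp-Lieb inequality
`E[∏ᵢ e^{cᵢ Tᵢ φᵢ}] ≤ ∏ᵢ E[e^{φᵢ}]^{cᵢ}` holds for all bounded measurable `φᵢ`, then
for every bounded nonnegative `f` with `E[f] = 1`, one has
`∑ᵢ θᵢ Ent(Tᵢ⋆ f) ≤ (1-κ) Ent(f)`. Here the `Tᵢ` are measure-preserving Markov kernels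
with adjoints `Tᵢ⋆` (adjointness expressed through `∫_A Tᵢ(x,B) dP = ∫_B Tᵢ⋆(x,A) dP`),
`θ` is a probability vector, and `cᵢ = θᵢ/(1-κ)`. -/
theorem stmt_4 {Ω : Type*} [MeasurableSpace Ω] (P : Measure Ω) [IsProbabilityMeasure P]
    (M : ℕ) (T Tstar : Fin M → Kernel Ω Ω)
    [∀ i, IsMarkovKernel (T i)] [∀ i, IsMarkovKernel (Tstar i)]
    (hpres : ∀ i, P.bind (fun x => T i x) = P)
    (hpres' : ∀ i, P.bind (fun x => Tstar i x) = P)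
    (hadj : ∀ i, ∀ A B : Set Ω, MeasurableSet A → MeasurableSet B →
      ∫⁻ x in A, T i x B ∂P = ∫⁻ x in B, Tstar i x A ∂P)
    (κ : ℝ) (hκ : κ ∈ Set.Ioo (0:ℝ) 1)
    (θ : Fin M → ℝ) (hθ0 : ∀ i, 0 ≤ θ i) (hθ1 : ∑ i, θ i = 1)
    (c : Fin M → ℝ) (hc : ∀ i, c i = θ i / (1 - κ))
    (hBL : ∀ φ : Fin M → Ω → ℝ, (∀ i, Measurable (φ i)) →
      (∀ i, ∃ C : ℝ, ∀ x, |φ i x| ≤ C) →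
      ∫ x, ∏ i, Real.exp (c i * kapp (T i) (φ i) x) ∂P
        ≤ ∏ i, (∫ x, Real.exp (φ i x) ∂P) ^ (c i))
    (f : Ω → ℝ) (hf : Measurable f) (hf0 : ∀ x, 0 ≤ f x)
    (hbdd : ∃ C : ℝ, ∀ x, f x ≤ C) (hmean : ∫ x, f x ∂P = 1) :
    ∑ i, θ i * ent P (kapp (Tstar i) f) ≤ (1 - κ) * ent P f := by
  obtain ⟨hκ0, hκ1⟩ := hκ
  have hp : (0:ℝ) < 1 - κ := by linarith
  obtain ⟨C₀, hC₀⟩ := hbdd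
  set C : ℝ := max C₀ 1 with hCdef
  have hC1 : (1:ℝ) ≤ C := le_max_right _ _
  have hC0 : (0:ℝ) ≤ C := by linarith
  have hfC : ∀ x, f x ≤ C := fun x => (hC₀ x).trans (le_max_left _ _)
  have hfabs : ∀ x, |f x| ≤ C := fun x => abs_le.2 ⟨by linarith [hf0 x], hfC x⟩
  have hc0 : ∀ i, 0 ≤ c i := fun i => by rw [hc]; exact div_nonneg (hθ0 i) hp.le
  have hcsum : ∑ i, c i = 1 / (1 - κ) := by
    simp_rw [hc]; rw [← Finset.sum_div, hθ1]
  set g : Fin M → Ω → ℝ := fun i => kapp (Tstar i) f with hgdef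
  have hgm : ∀ i, Measurable (g i) := fun i => measurable_kapp _ hf
  have hg0 : ∀ i x, 0 ≤ g i x := fun i x => kapp_nonneg _ hf0 x
  have hgabs : ∀ i x, |g i x| ≤ C := fun i x => abs_kapp_le _ hf hfabs x
  have hgC : ∀ i x, g i x ≤ C := fun i x => (abs_le.1 (hgabs i x)).2
  have hgmean : ∀ i, ∫ x, g i x ∂P = 1 := fun i => by
    rw [hgdef]; rw [kapp_mean (hadj i) hf hf0 hfC, hmean]
  have entf : ent P f = ∫ x, f x * Real.log (f x) ∂P := by
    rw [ent, hmean]; simp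
  have entg : ∀ i, ent P (g i) = ∫ x, g i x * Real.log (g i x) ∂P := fun i => by
    rw [ent, hgmean i]; simp
  -- the key estimate for each ε ∈ (0,1)
  have key : ∀ ε : ℝ, ε ∈ Set.Ioo (0:ℝ) 1 →
      ∑ i, c i * ent P (g i) ≤ ent P f - 1 + (1 + ε) ^ ((1:ℝ)/(1-κ)) := by
    rintro ε ⟨hε0, hε1⟩
    set φ : Fin M → Ω → ℝ := fun i x => Real.log (max (g i x) ε) with hφdef
    have hφm : ∀ i, Measurable (φ i) := fun i =>
      Real.measurable_log.comp ((hgm i).max measurable_const)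
    have hmaxpos : ∀ i x, 0 < max (g i x) ε := fun i x => lt_max_of_lt_right hε0
    have hφlb : ∀ i x, Real.log ε ≤ φ i x := fun i x =>
      Real.log_le_log hε0 (le_max_right _ _)
    have hφub : ∀ i x, φ i x ≤ Real.log C := fun i x =>
      Real.log_le_log (hmaxpos i x) (max_le (hgC i x) (by linarith))
    set Kb : ℝ := max (-Real.log ε) (Real.log C) with hKb
    have hlogε : Real.log ε ≤ 0 := Real.log_nonpos hε0.le hε1.le
    have hlogC : 0 ≤ Real.log C := Real.log_nonneg hC1
    have hKb0 : 0 ≤ Kb := le_trans hlogC (le_max_right _ _)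
    have hφabs : ∀ i x, |φ i x| ≤ Kb := fun i x => abs_le.2
      ⟨by have h1 := hφlb i x
          have h2 : -Kb ≤ Real.log ε := by
            have := le_max_left (-Real.log ε) (Real.log C); linarith
          linarith,
       (hφub i x).trans (le_max_right _ _)⟩
    have hkφm : ∀ i, Measurable (kapp (T i) (φ i)) := fun i => measurable_kapp _ (hφm i)
    have hkφabs : ∀ i x, |kapp (T i) (φ i) x| ≤ Kb := fun i x =>
      abs_kapp_le _ (hφm i) (hφabs i) x
    set h : Ω → ℝ := fun x => ∑ i, c i * kapp (T i) (φ i) x with hhdef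
    have hhm : Measurable h := by
      apply Finset.measurable_sum
      exact fun i _ => (hkφm i).const_mul (c i)
    have hhabs : ∀ x, |h x| ≤ (∑ i, c i) * Kb := by
      intro x
      calc |∑ i, c i * kapp (T i) (φ i) x| ≤ ∑ i, |c i * kapp (T i) (φ i) x| :=
            Finset.abs_sum_le_sum_abs _ _
        _ ≤ ∑ i, c i * Kb := Finset.sum_le_sum fun i _ => by
            rw [abs_mul, abs_of_nonneg (hc0 i)]
            exact mul_le_mul_of_nonneg_left (hkφabs i x) (hc0 i)
        _ = (∑ i, c i) * Kb := (Finset.sum_mul _ _ _).symm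
    -- Step A: entropy bounded by test integral
    have stepA : ∀ i, ent P (g i) ≤ ∫ x, φ i x * g i x ∂P := by
      intro i
      rw [entg i]
      refine integral_mono ?_ ?_ ?_
      · exact int_bdd ((hgm i).mul (Real.measurable_log.comp (hgm i))) (C := 1 + C ^ 2)
          (fun x => abs_xlogx_le (hg0 i x) (hgC i x))
      · exact int_bdd ((hφm i).mul (hgm i)) (C := Kb * C) (fun x => by
          rw [abs_mul]
          exact mul_le_mul (hφabs i x) (hgabs i x) (abs_nonneg _) hKb0)
      · intro x
        rcases (hg0 i x).eq_or_lt with hz | hz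
        · simp [← hz]
        · have hle : Real.log (g i x) ≤ φ i x := Real.log_le_log hz (le_max_left _ _)
          calc g i x * Real.log (g i x) ≤ g i x * φ i x :=
                mul_le_mul_of_nonneg_left hle (hg0 i x)
            _ = φ i x * g i x := mul_comm _ _
    -- Step B: adjointness
    have stepB : ∀ i, ∫ x, φ i x * g i x ∂P = ∫ x, f x * kapp (T i) (φ i) x ∂P := by
      intro i
      set ψ : Ω → ℝ := fun x => φ i x - Real.log ε with hψdef
      have hψm : Measurable ψ := (hφm i).sub measurable_const
      have hψ0 : ∀ x, 0 ≤ ψ x := fun x => by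
        have := hφlb i x; simp only [hψdef]; linarith
      have hψD : ∀ x, ψ x ≤ Real.log C - Real.log ε := fun x => by
        have := hφub i x; simp only [hψdef]; linarith
      have hψabs : ∀ x, |ψ x| ≤ Real.log C - Real.log ε := fun x =>
        abs_le.2 ⟨by have := hψ0 x; linarith [hlogC, hlogε], hψD x⟩
      have hkψ : ∀ x, kapp (T i) ψ x = kapp (T i) (φ i) x - Real.log ε := by
        intro x
        simp only [kapp, hψdef]
        rw [integral_sub (int_bdd (hφm i) (hφabs i)) (integrable_const _)]
        simp
      have hadjr : ∫ x, f x * kapp (T i) ψ x ∂P = ∫ x, ψ x * g i x ∂P :=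
        adj_real (hadj i) hf hf0 hfC hψm hψ0 hψD
      have Iψg : Integrable (fun x => ψ x * g i x) P :=
        int_bdd (hψm.mul (hgm i)) (C := (Real.log C - Real.log ε) * C) (fun x => by
          rw [abs_mul]
          exact mul_le_mul (hψabs x) (hgabs i x) (abs_nonneg _) (by linarith))
      have Ig : Integrable (g i) P := int_bdd (hgm i) (hgabs i)
      have Ifkψ : Integrable (fun x => f x * kapp (T i) ψ x) P :=
        int_bdd (hf.mul (measurable_kapp _ hψm)) (C := C * (Real.log C - Real.log ε))
          (fun x => by
            rw [abs_mul]
            exact mul_le_mul (hfabs x) (abs_kapp_le _ hψm hψabs x) (abs_nonneg _) hC0)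
      have If : Integrable f P := int_bdd hf hfabs
      have e1 : ∫ x, φ i x * g i x ∂P = (∫ x, ψ x * g i x ∂P) + Real.log ε := by
        have hpt : ∀ x, φ i x * g i x = ψ x * g i x + Real.log ε * g i x := by
          intro x; simp only [hψdef]; ring
        rw [integral_congr_ae (Filter.Eventually.of_forall hpt) (g := fun x => ψ x * g i x + Real.log ε * g i x)]
        rw [integral_add Iψg (Ig.const_mul _), integral_const_mul, hgmean i, mul_one]
      have e2 : ∫ x, f x * kapp (T i) (φ i) x ∂P
          = (∫ x, f x * kapp (T i) ψ x ∂P) + Real.log ε := by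
        have hpt : ∀ x, f x * kapp (T i) (φ i) x
            = f x * kapp (T i) ψ x + Real.log ε * f x := by
          intro x; rw [hkψ x]; ring
        rw [integral_congr_ae (Filter.Eventually.of_forall hpt) (g := fun x => f x * kapp (T i) ψ x + Real.log ε * f x)]
        rw [integral_add Ifkψ (If.const_mul _), integral_const_mul, hmean, mul_one]
      rw [e1, e2, hadjr]
    -- Step C: summation
    have hintfk : ∀ i, Integrable (fun x => f x * kapp (T i) (φ i) x) P := fun i =>
      int_bdd (hf.mul (hkφm i)) (C := C * Kb) fun x => by
        rw [abs_mul]; exact mul_le_mul (hfabs x) (hkφabs i x) (abs_nonneg _) hC0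
    have stepC : ∑ i, c i * ∫ x, f x * kapp (T i) (φ i) x ∂P = ∫ x, f x * h x ∂P := by
      calc ∑ i, c i * ∫ x, f x * kapp (T i) (φ i) x ∂P
          = ∑ i, ∫ x, c i * (f x * kapp (T i) (φ i) x) ∂P := by
            exact Finset.sum_congr rfl fun i _ => (integral_const_mul _ _).symm
        _ = ∫ x, ∑ i, c i * (f x * kapp (T i) (φ i) x) ∂P :=
            (integral_finset_sum _ (fun i _ => (hintfk i).const_mul _)).symm
        _ = ∫ x, f x * h x ∂P := by
            refine integral_congr_ae (Filter.Eventually.of_forall fun x => ?_)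
            simp only [hhdef, Finset.mul_sum]
            exact Finset.sum_congr rfl fun i _ => by ring
    -- Step D: Gibbs inequality
    have hintfh : Integrable (fun x => f x * h x) P :=
      int_bdd (hf.mul hhm) (C := C * ((∑ i, c i) * Kb)) fun x => by
        rw [abs_mul]; exact mul_le_mul (hfabs x) (hhabs x) (abs_nonneg _) hC0
    have hintexph : Integrable (fun x => Real.exp (h x)) P :=
      int_bdd (Real.measurable_exp.comp hhm) (C := Real.exp ((∑ i, c i) * Kb)) fun x => by
        rw [abs_of_nonneg (Real.exp_pos _).le]
        exact Real.exp_le_exp.2 ((abs_le.1 (hhabs x)).2)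
    have hintflogf : Integrable (fun x => f x * Real.log (f x)) P :=
      int_bdd (hf.mul (Real.measurable_log.comp hf)) (C := 1 + C ^ 2) fun x =>
        abs_xlogx_le (hf0 x) (hfC x)
    have If : Integrable f P := int_bdd hf hfabs
    have Isub : Integrable (fun x => f x * Real.log (f x) - f x) P := hintflogf.sub If
    have Icomb : Integrable (fun x => f x * Real.log (f x) - f x + Real.exp (h x)) P :=
      Isub.add hintexph
    have stepD : ∫ x, f x * h x ∂P
        ≤ (∫ x, f x * Real.log (f x) ∂P) - 1 + ∫ x, Real.exp (h x) ∂P := by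
      have hmono := integral_mono hintfh Icomb (fun x => gibbs_pt (hf0 x) (b := h x))
      rwa [integral_add Isub hintexph, integral_sub hintflogf If, hmean] at hmono
    -- Step E: Brascamp-Lieb bound
    have hBLa := hBL φ hφm (fun i => ⟨Kb, hφabs i⟩)
    have hintexpphi : ∀ i, ∫ x, Real.exp (φ i x) ∂P ≤ 1 + ε := by
      intro i
      have e : ∀ x, Real.exp (φ i x) = max (g i x) ε := fun x => Real.exp_log (hmaxpos i x)
      rw [integral_congr_ae (Filter.Eventually.of_forall e) (g := fun x => max (g i x) ε)]
      calc ∫ x, max (g i x) ε ∂P ≤ ∫ x, g i x + ε ∂P := integral_mono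
            (int_bdd ((hgm i).max measurable_const) (C := C) fun x => by
              rw [abs_of_nonneg (le_of_lt (hmaxpos i x))]
              exact max_le (hgC i x) (by linarith))
            ((int_bdd (hgm i) (hgabs i)).add (integrable_const ε))
            (fun x => max_le (by linarith [hε0]) (le_add_of_nonneg_left (hg0 i x)))
        _ = 1 + ε := by
            rw [integral_add (int_bdd (hgm i) (hgabs i)) (integrable_const ε), hgmean i]
            simp
    have hexpphi0 : ∀ i, 0 ≤ ∫ x, Real.exp (φ i x) ∂P := fun i =>
      integral_nonneg fun x => (Real.exp_pos _).le
    have hprodle : ∏ i, (∫ x, Real.exp (φ i x) ∂P) ^ (c i) ≤ (1 + ε) ^ ((1:ℝ)/(1-κ)) := by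
      calc ∏ i, (∫ x, Real.exp (φ i x) ∂P) ^ (c i) ≤ ∏ i, (1 + ε) ^ (c i) :=
            Finset.prod_le_prod (fun i _ => Real.rpow_nonneg (hexpphi0 i) _)
              (fun i _ => Real.rpow_le_rpow (hexpphi0 i) (hintexpphi i) (hc0 i))
        _ = (1 + ε) ^ (∑ i, c i) := (Real.rpow_sum_of_pos (by linarith) _ _).symm
        _ = (1 + ε) ^ ((1:ℝ)/(1-κ)) := by rw [hcsum]
    -- assemble
    calc ∑ i, c i * ent P (g i)
        ≤ ∑ i, c i * ∫ x, f x * kapp (T i) (φ i) x ∂P :=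
          Finset.sum_le_sum fun i _ =>
            mul_le_mul_of_nonneg_left ((stepA i).trans_eq (stepB i)) (hc0 i)
      _ = ∫ x, f x * h x ∂P := stepC
      _ ≤ (∫ x, f x * Real.log (f x) ∂P) - 1 + ∫ x, Real.exp (h x) ∂P := stepD
      _ ≤ (∫ x, f x * Real.log (f x) ∂P) - 1 + (1 + ε) ^ ((1:ℝ)/(1-κ)) := by
          have hE : ∫ x, Real.exp (h x) ∂P ≤ (1 + ε) ^ ((1:ℝ)/(1-κ)) := by
            calc ∫ x, Real.exp (h x) ∂P
                = ∫ x, ∏ i, Real.exp (c i * kapp (T i) (φ i) x) ∂P := by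
                  refine integral_congr_ae (Filter.Eventually.of_forall fun x => ?_)
                  simp only [hhdef]
                  exact Real.exp_sum _ _
              _ ≤ ∏ i, (∫ x, Real.exp (φ i x) ∂P) ^ (c i) := hBLa
              _ ≤ (1 + ε) ^ ((1:ℝ)/(1-κ)) := hprodle
          linarith
      _ = ent P f - 1 + (1 + ε) ^ ((1:ℝ)/(1-κ)) := by rw [entf]
  -- take the limit ε → 0⁺
  have hfinal : ∑ i, c i * ent P (g i) ≤ ent P f := by
    have h1 : ContinuousAt (fun ε : ℝ => (1 + ε) ^ ((1:ℝ)/(1-κ))) 0 :=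
      ContinuousAt.rpow ((continuous_const.add continuous_id).continuousAt)
        continuousAt_const (Or.inl (by norm_num))
    have h2 : ContinuousAt (fun ε : ℝ => ent P f - 1 + (1 + ε) ^ ((1:ℝ)/(1-κ))) 0 :=
      continuousAt_const.add h1
    have h0 : ent P f - 1 + ((1:ℝ) + 0) ^ ((1:ℝ)/(1-κ)) = ent P f := by
      norm_num
    have hlim : Filter.Tendsto (fun ε : ℝ => ent P f - 1 + (1 + ε) ^ ((1:ℝ)/(1-κ)))
        (nhdsWithin 0 (Set.Ioi 0)) (nhds (ent P f)) := by
      have h3 := h2.tendsto.mono_left (nhdsWithin_le_nhds (s := Set.Ioi (0:ℝ)))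
      simp only [add_zero, Real.one_rpow] at h3
      convert h3 using 2
      rw [← h0]
      norm_num
    refine ge_of_tendsto hlim ?_
    filter_upwards [Ioo_mem_nhdsGT_of_mem (Set.left_mem_Ico.2 one_pos)] with ε hε
    exact key ε hε
  have hsum : ∑ i, θ i * ent P (g i) = (1 - κ) * ∑ i, c i * ent P (g i) := by
    rw [Finset.mul_sum]
    refine Finset.sum_congr rfl fun i _ => ?_
    rw [hc]
    field_simp
  have hgoal : ∑ i, θ i * ent P (kapp (Tstar i) f) = ∑ i, θ i * ent P (g i) := rfl
  rw [hgoal, hsum]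
  exact mul_le_mul_of_nonneg_left hfinal hp.le
end

section
/- Duality, direction (a)⇒(b): Let (Ω, F, P) be a probability space, T₁,…,T_M measure-preserving Markov operators with adjoints T_i^⋆, κ ∈ (0,1), θ a probability vector, c_i = θ_i/(1−κ). If ∑_i θ_i Ent(T_i^⋆ f) ≤ (1−κ) Ent(f) for all nonnegative f ∈ L log L, then for all bounded measurable φ_1,…,φ_M one has E[∏_{i=1}^M e^{c_i T_i φ_i}] ≤ ∏_{i=1}^M E[e^{φ_i}]^{c_i}. -/
open MeasureTheory ProbabilityTheory
open scoped BigOperators ENNReal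

section Aux
variable {Ω : Type*} [MeasurableSpace Ω]

lemma my_int_bdd (P : Measure Ω) [IsFiniteMeasure P] {f : Ω → ℝ} (hf : Measurable f)
    {C : ℝ} (h : ∀ x, |f x| ≤ C) : Integrable f P := by
  refine Integrable.mono' (integrable_const C) hf.aestronglyMeasurable (ae_of_all _ fun x => ?_)
  simpa [Real.norm_eq_abs] using h x

lemma my_kapp_meas (T : Kernel Ω Ω) [IsSFiniteKernel T] {f : Ω → ℝ} (hf : Measurable f) :
    Measurable (kapp T f) := by
  have : StronglyMeasurable fun x => ∫ y, f y ∂(T x) :=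
    StronglyMeasurable.integral_kernel_prod_right (f := fun _ y => f y)
      ((hf.comp measurable_snd).stronglyMeasurable)
  exact this.measurable

lemma my_kapp_abs_le (T : Kernel Ω Ω) [IsMarkovKernel T] {f : Ω → ℝ} {C : ℝ}
    (h : ∀ x, |f x| ≤ C) (x : Ω) : |kapp T f x| ≤ C := by
  have := norm_integral_le_of_norm_le_const (μ := T x) (f := f) (C := C)
    (ae_of_all _ fun y => by simpa [Real.norm_eq_abs] using h y)
  simpa [kapp, Real.norm_eq_abs] using this

lemma my_kapp_le (T : Kernel Ω Ω) [IsMarkovKernel T] {f : Ω → ℝ} {a b : ℝ}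
    (hf : Measurable f) (h1 : ∀ x, a ≤ f x) (h2 : ∀ x, f x ≤ b) (x : Ω) :
    a ≤ kapp T f x ∧ kapp T f x ≤ b := by
  have hi : Integrable f (T x) := by
    refine my_int_bdd _ hf (C := |a| + |b|) fun y => ?_
    have h1' := h1 y; have h2' := h2 y
    have := neg_abs_le a; have := le_abs_self b
    rw [abs_le]; constructor <;> linarith [abs_nonneg a, abs_nonneg b]
  constructor
  · have := integral_mono (μ := T x) (integrable_const a) hi (fun y => h1 y)
    simpa [kapp] using this
  · have := integral_mono (μ := T x) hi (integrable_const b) (fun y => h2 y)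
    simpa [kapp] using this

lemma my_kapp_add_const (T : Kernel Ω Ω) [IsMarkovKernel T] {f : Ω → ℝ}
    (hf : Measurable f) {C : ℝ} (hC : ∀ x, |f x| ≤ C) (a : ℝ) (x : Ω) :
    kapp T (fun y => f y + a) x = kapp T f x + a := by
  have hi : Integrable f (T x) := my_int_bdd _ hf hC
  simp [kapp, integral_add hi (integrable_const a)]

end Aux

section Adj
variable {Ω : Type*} [MeasurableSpace Ω] (P : Measure Ω)
variable (T Tstar : Kernel Ω Ω) [IsMarkovKernel T] [IsMarkovKernel Tstar]

lemma my_adj1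
    (hadj : ∀ A B : Set Ω, MeasurableSet A → MeasurableSet B →
      ∫⁻ x in A, T x B ∂P = ∫⁻ x in B, Tstar x A ∂P)
    {f : Ω → ℝ≥0∞} (hf : Measurable f) {B : Set Ω} (hB : MeasurableSet B) :
    ∫⁻ x, f x * T x B ∂P = ∫⁻ x in B, ∫⁻ y, f y ∂(Tstar x) ∂P := by
  refine Measurable.ennreal_induction
    (motive := fun f => ∀ B : Set Ω, MeasurableSet B →
      ∫⁻ x, f x * T x B ∂P = ∫⁻ x in B, ∫⁻ y, f y ∂(Tstar x) ∂P)
    ?_ ?_ ?_ hf B hB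
  · intro c s hs B hB
    have h1 : ∀ x : Ω, Set.indicator s (fun _ => c) x * T x B
        = Set.indicator s (fun x => c * T x B) x := by
      intro x; by_cases hx : x ∈ s <;> simp [hx]
    simp only [h1]
    rw [lintegral_indicator hs]
    have h2 : ∫⁻ x in s, c * T x B ∂P = c * ∫⁻ x in s, T x B ∂P :=
      lintegral_const_mul c (Kernel.measurable_coe T hB)
    rw [h2, hadj s B hs hB]
    have h3 : ∀ x : Ω, ∫⁻ y, Set.indicator s (fun _ => c) y ∂(Tstar x) = c * Tstar x s := by
      intro x; rw [lintegral_indicator_const hs]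
    simp only [h3]
    exact (lintegral_const_mul c (Kernel.measurable_coe Tstar hs)).symm
  · intro f g hd hfm hgm hfP hgP B hB
    have hTB : Measurable fun x => T x B := Kernel.measurable_coe T hB
    simp only [Pi.add_apply, add_mul]
    rw [lintegral_add_left (f := fun x => f x * T x B) (hfm.mul hTB)]
    rw [hfP B hB, hgP B hB]
    have h3 : ∀ x : Ω, ∫⁻ y, (f y + g y) ∂(Tstar x) = (∫⁻ y, f y ∂(Tstar x)) + ∫⁻ y, g y ∂(Tstar x) := by
      intro x; exact lintegral_add_left hfm _
    simp only [h3]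
    exact (lintegral_add_left (Measurable.lintegral_kernel hfm) _).symm
  · intro f hfm hmono hP B hB
    have hTB : Measurable fun x => T x B := Kernel.measurable_coe T hB
    have h1 : ∀ x : Ω, (⨆ n, f n x) * T x B = ⨆ n, f n x * T x B := by
      intro x; exact ENNReal.iSup_mul _ _
    simp only [h1]
    rw [lintegral_iSup (f := fun n x => f n x * T x B) (fun n => (hfm n).mul hTB)
      (fun a b hab x => mul_le_mul_left (hmono hab x) _)]
    have h2 : ∀ x : Ω, ∫⁻ y, ⨆ n, f n y ∂(Tstar x) = ⨆ n, ∫⁻ y, f n y ∂(Tstar x) := by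
      intro x; exact lintegral_iSup hfm hmono
    simp only [h2]
    rw [lintegral_iSup (fun n => Measurable.lintegral_kernel (hfm n))
      (fun a b hab x => lintegral_mono (fun y => hmono hab y))]
    simp only [fun n => hP n B hB]

lemma my_adj2
    (hadj : ∀ A B : Set Ω, MeasurableSet A → MeasurableSet B →
      ∫⁻ x in A, T x B ∂P = ∫⁻ x in B, Tstar x A ∂P)
    {f g : Ω → ℝ≥0∞} (hf : Measurable f) (hg : Measurable g) :
    ∫⁻ x, f x * ∫⁻ y, g y ∂(T x) ∂P = ∫⁻ x, (∫⁻ y, f y ∂(Tstar x)) * g x ∂P := by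
  have hF : Measurable fun x => ∫⁻ y, f y ∂(Tstar x) := Measurable.lintegral_kernel hf
  refine Measurable.ennreal_induction
    (motive := fun g => ∫⁻ x, f x * ∫⁻ y, g y ∂(T x) ∂P = ∫⁻ x, (∫⁻ y, f y ∂(Tstar x)) * g x ∂P)
    ?_ ?_ ?_ hg
  · intro c s hs
    have h1 : ∀ x : Ω, ∫⁻ y, Set.indicator s (fun _ => c) y ∂(T x) = c * T x s := by
      intro x; exact lintegral_indicator_const hs c
    simp only [h1]
    have h2 : ∀ x : Ω, f x * (c * T x s) = c * (f x * T x s) := fun x => by ring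
    simp only [h2]
    rw [lintegral_const_mul c (f := fun x => f x * T x s) (hf.mul (Kernel.measurable_coe T hs)),
      my_adj1 P T Tstar hadj hf hs]
    have h3 : ∀ x : Ω, (∫⁻ y, f y ∂(Tstar x)) * Set.indicator s (fun _ => c) x
        = Set.indicator s (fun x => c * ∫⁻ y, f y ∂(Tstar x)) x := by
      intro x; by_cases hx : x ∈ s <;> simp [hx, mul_comm]
    simp only [h3]
    rw [lintegral_indicator hs, lintegral_const_mul c hF]
  · intro g₁ g₂ hd hg1 hg2 hP1 hP2
    have h1 : ∀ x : Ω, ∫⁻ y, (g₁ y + g₂ y) ∂(T x)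
        = (∫⁻ y, g₁ y ∂(T x)) + ∫⁻ y, g₂ y ∂(T x) := by
      intro x; exact lintegral_add_left hg1 _
    simp only [h1, mul_add, Pi.add_apply]
    rw [lintegral_add_left (f := fun x => f x * ∫⁻ y, g₁ y ∂(T x)) (hf.mul (Measurable.lintegral_kernel hg1)),
      lintegral_add_left (f := fun x => (∫⁻ y, f y ∂(Tstar x)) * g₁ x) (hF.mul hg1), hP1, hP2]
  · intro gs hgm hmono hP
    have h1 : ∀ x : Ω, ∫⁻ y, ⨆ n, gs n y ∂(T x) = ⨆ n, ∫⁻ y, gs n y ∂(T x) := by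
      intro x; exact lintegral_iSup hgm hmono
    simp only [h1, ENNReal.mul_iSup, ENNReal.iSup_mul]
    rw [lintegral_iSup (f := fun n x => f x * ∫⁻ y, gs n y ∂(T x)) (fun n => hf.mul (Measurable.lintegral_kernel (hgm n)))
      (fun a b hab x => mul_le_mul_right (lintegral_mono fun y => hmono hab y) _),
      lintegral_iSup (f := fun n x => (∫⁻ y, f y ∂(Tstar x)) * gs n x) (fun n => hF.mul (hgm n))
      (fun a b hab x => mul_le_mul_right (hmono hab x) _)]
    exact iSup_congr hP

end Adj

section RealAdj
set_option linter.unusedSectionVars false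
variable {Ω : Type*} [MeasurableSpace Ω] (P : Measure Ω) [IsProbabilityMeasure P]
variable (T Tstar : Kernel Ω Ω) [IsMarkovKernel T] [IsMarkovKernel Tstar]

lemma my_adj_real_nonneg
    (hadj : ∀ A B : Set Ω, MeasurableSet A → MeasurableSet B →
      ∫⁻ x in A, T x B ∂P = ∫⁻ x in B, Tstar x A ∂P)
    {f φ : Ω → ℝ} (hf : Measurable f) (hf0 : ∀ x, 0 ≤ f x) {Cf : ℝ} (hfC : ∀ x, f x ≤ Cf)
    (hφ : Measurable φ) (hφ0 : ∀ x, 0 ≤ φ x) {Cφ : ℝ} (hφC : ∀ x, φ x ≤ Cφ) :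
    ∫ x, f x * kapp T φ x ∂P = ∫ x, kapp Tstar f x * φ x ∂P := by
  have hfb : ∀ x, |f x| ≤ |Cf| := fun x => by
    rw [abs_of_nonneg (hf0 x)]; exact (hfC x).trans (le_abs_self _)
  have hφb : ∀ x, |φ x| ≤ |Cφ| := fun x => by
    rw [abs_of_nonneg (hφ0 x)]; exact (hφC x).trans (le_abs_self _)
  have key1 : ∀ x, ENNReal.ofReal (kapp T φ x) = ∫⁻ y, ENNReal.ofReal (φ y) ∂(T x) := fun x =>
    ofReal_integral_eq_lintegral_ofReal (my_int_bdd _ hφ hφb) (ae_of_all _ hφ0)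
  have key2 : ∀ x, ENNReal.ofReal (kapp Tstar f x) = ∫⁻ y, ENNReal.ofReal (f y) ∂(Tstar x) :=
    fun x => ofReal_integral_eq_lintegral_ofReal (my_int_bdd _ hf hfb) (ae_of_all _ hf0)
  have hkT := my_kapp_meas T hφ
  have hkS := my_kapp_meas Tstar hf
  have hk0 : ∀ x, 0 ≤ kapp T φ x := fun x => (my_kapp_le T hφ hφ0 hφC x).1
  have hk0' : ∀ x, 0 ≤ kapp Tstar f x := fun x => (my_kapp_le Tstar hf hf0 hfC x).1
  rw [integral_eq_lintegral_of_nonneg_ae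
      (ae_of_all _ fun x => mul_nonneg (hf0 x) (hk0 x)) ((hf.mul hkT).aestronglyMeasurable),
    integral_eq_lintegral_of_nonneg_ae
      (ae_of_all _ fun x => mul_nonneg (hk0' x) (hφ0 x)) ((hkS.mul hφ).aestronglyMeasurable)]
  congr 1
  calc ∫⁻ x, ENNReal.ofReal (f x * kapp T φ x) ∂P
      = ∫⁻ x, ENNReal.ofReal (f x) * ∫⁻ y, ENNReal.ofReal (φ y) ∂(T x) ∂P := by
        refine lintegral_congr fun x => ?_
        rw [ENNReal.ofReal_mul (hf0 x), key1 x]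
    _ = ∫⁻ x, (∫⁻ y, ENNReal.ofReal (f y) ∂(Tstar x)) * ENNReal.ofReal (φ x) ∂P :=
        my_adj2 P T Tstar hadj hf.ennreal_ofReal hφ.ennreal_ofReal
    _ = ∫⁻ x, ENNReal.ofReal (kapp Tstar f x * φ x) ∂P := by
        refine lintegral_congr fun x => ?_
        rw [ENNReal.ofReal_mul (hk0' x), key2 x]

lemma my_adj_real
    (hadj : ∀ A B : Set Ω, MeasurableSet A → MeasurableSet B →
      ∫⁻ x in A, T x B ∂P = ∫⁻ x in B, Tstar x A ∂P)
    (hpres' : P.bind (fun x => Tstar x) = P)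
    {f φ : Ω → ℝ} (hf : Measurable f) (hf0 : ∀ x, 0 ≤ f x) {Cf : ℝ} (hfC : ∀ x, f x ≤ Cf)
    (hφ : Measurable φ) {Cφ : ℝ} (hφC : ∀ x, |φ x| ≤ Cφ) :
    ∫ x, f x * kapp T φ x ∂P = ∫ x, kapp Tstar f x * φ x ∂P := by
  have hfb : ∀ x, |f x| ≤ |Cf| := fun x => by
    rw [abs_of_nonneg (hf0 x)]; exact (hfC x).trans (le_abs_self _)
  -- mean preservation : ∫ kapp Tstar f = ∫ f
  have hmean : ∫ x, kapp Tstar f x ∂P = ∫ x, f x ∂P := by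
    have h1 : ∫⁻ x, ENNReal.ofReal (f x) ∂(P.bind (fun x => Tstar x))
        = ∫⁻ x, ∫⁻ y, ENNReal.ofReal (f y) ∂(Tstar x) ∂P :=
      MeasureTheory.Measure.lintegral_bind (Tstar.measurable.aemeasurable) hf.ennreal_ofReal.aemeasurable
    rw [hpres'] at h1
    have hk0' : ∀ x, 0 ≤ kapp Tstar f x := fun x => (my_kapp_le Tstar hf hf0 hfC x).1
    have key2 : ∀ x, ENNReal.ofReal (kapp Tstar f x) = ∫⁻ y, ENNReal.ofReal (f y) ∂(Tstar x) :=
      fun x => ofReal_integral_eq_lintegral_ofReal (my_int_bdd _ hf hfb) (ae_of_all _ hf0)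
    rw [integral_eq_lintegral_of_nonneg_ae (ae_of_all _ hk0')
        ((my_kapp_meas Tstar hf).aestronglyMeasurable),
      integral_eq_lintegral_of_nonneg_ae (ae_of_all _ hf0) hf.aestronglyMeasurable]
    congr 1
    rw [lintegral_congr fun x => key2 x]
    exact h1.symm
  -- shift φ to make it nonneg
  set ψ : Ω → ℝ := fun y => φ y + Cφ with hψdef
  have hφC' : ∀ x, φ x ≤ Cφ := fun x => (abs_le.mp (hφC x)).2
  have hφC'' : ∀ x, -Cφ ≤ φ x := fun x => (abs_le.mp (hφC x)).1
  have hψ : Measurable ψ := hφ.add_const _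
  have hψ0 : ∀ x, 0 ≤ ψ x := fun x => by simp only [hψdef]; linarith [hφC'' x]
  have hψC : ∀ x, ψ x ≤ 2 * Cφ := fun x => by simp only [hψdef]; linarith [hφC' x]
  have hkshift : ∀ x, kapp T ψ x = kapp T φ x + Cφ := fun x =>
    my_kapp_add_const T hφ hφC Cφ x
  have hint : Integrable f P := my_int_bdd _ hf hfb
  have hintk : Integrable (kapp Tstar f) P :=
    my_int_bdd _ (my_kapp_meas Tstar hf) (fun x => my_kapp_abs_le Tstar hfb x)
  have h1 : ∫ x, f x * kapp T ψ x ∂P = ∫ x, kapp Tstar f x * ψ x ∂P :=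
    my_adj_real_nonneg P T Tstar hadj hf hf0 hfC hψ hψ0 hψC
  have h2 : ∀ x, f x * kapp T ψ x = f x * kapp T φ x + Cφ * f x := fun x => by
    rw [hkshift x]; ring
  have h3 : ∀ x, kapp Tstar f x * ψ x = kapp Tstar f x * φ x + Cφ * kapp Tstar f x :=
    fun x => by simp only [hψdef]; ring
  have hi1 : Integrable (fun x => f x * kapp T φ x) P := by
    refine my_int_bdd _ (hf.mul (my_kapp_meas T hφ)) (C := |Cf| * Cφ) fun x => ?_
    rw [abs_mul]
    exact mul_le_mul (hfb x) (my_kapp_abs_le T hφC x) (abs_nonneg _) (abs_nonneg _)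
  have hi2 : Integrable (fun x => kapp Tstar f x * φ x) P := by
    refine my_int_bdd _ ((my_kapp_meas Tstar hf).mul hφ) (C := |Cf| * Cφ) fun x => ?_
    rw [abs_mul]
    exact mul_le_mul (my_kapp_abs_le Tstar hfb x) (hφC x) (abs_nonneg _) (abs_nonneg _)
  rw [funext h2, funext h3] at h1
  rw [integral_add hi1 (hint.const_mul Cφ), integral_add hi2 (hintk.const_mul Cφ),
    integral_const_mul, integral_const_mul, hmean] at h1
  linarith [h1]

lemma my_mean_kapp
    (hpres' : P.bind (fun x => Tstar x) = P)
    {f : Ω → ℝ} (hf : Measurable f) (hf0 : ∀ x, 0 ≤ f x) {Cf : ℝ} (hfC : ∀ x, f x ≤ Cf) :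
    ∫ x, kapp Tstar f x ∂P = ∫ x, f x ∂P := by
  have hfb : ∀ x, |f x| ≤ |Cf| := fun x => by
    rw [abs_of_nonneg (hf0 x)]; exact (hfC x).trans (le_abs_self _)
  have h1 : ∫⁻ x, ENNReal.ofReal (f x) ∂(P.bind (fun x => Tstar x))
      = ∫⁻ x, ∫⁻ y, ENNReal.ofReal (f y) ∂(Tstar x) ∂P :=
    MeasureTheory.Measure.lintegral_bind (Tstar.measurable.aemeasurable) hf.ennreal_ofReal.aemeasurable
  rw [hpres'] at h1
  have hk0' : ∀ x, 0 ≤ kapp Tstar f x := fun x => (my_kapp_le Tstar hf hf0 hfC x).1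
  have key2 : ∀ x, ENNReal.ofReal (kapp Tstar f x) = ∫⁻ y, ENNReal.ofReal (f y) ∂(Tstar x) :=
    fun x => ofReal_integral_eq_lintegral_ofReal (my_int_bdd _ hf hfb) (ae_of_all _ hf0)
  rw [integral_eq_lintegral_of_nonneg_ae (ae_of_all _ hk0')
      ((my_kapp_meas Tstar hf).aestronglyMeasurable),
    integral_eq_lintegral_of_nonneg_ae (ae_of_all _ hf0) hf.aestronglyMeasurable]
  congr 1
  rw [lintegral_congr fun x => key2 x]
  exact h1.symm

end RealAdj

section Gibbs
set_option linter.unusedSectionVars false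
variable {Ω : Type*} [MeasurableSpace Ω] (P : Measure Ω) [IsProbabilityMeasure P]

lemma my_abs_log_le {ε C t : ℝ} (hε : 0 < ε) (h1 : ε ≤ t) (h2 : t ≤ C) :
    |Real.log t| ≤ |Real.log ε| + |Real.log C| := by
  have l1 : Real.log ε ≤ Real.log t := Real.log_le_log hε h1
  have l2 : Real.log t ≤ Real.log C := Real.log_le_log (hε.trans_le h1) h2
  rw [abs_le]
  constructor
  · linarith [neg_abs_le (Real.log ε), abs_nonneg (Real.log C)]
  · linarith [le_abs_self (Real.log C), abs_nonneg (Real.log ε)]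

/-- pointwise Young : for `u > 0`, `u * v ≤ u * log u - u + exp v`. -/
lemma my_young {u v : ℝ} (hu : 0 < u) :
    u * v ≤ u * Real.log u - u + Real.exp v := by
  have h1 : (v - Real.log u) + 1 ≤ Real.exp (v - Real.log u) := Real.add_one_le_exp _
  have h2 : u * ((v - Real.log u) + 1) ≤ u * Real.exp (v - Real.log u) :=
    mul_le_mul_of_nonneg_left h1 hu.le
  have h3 : u * Real.exp (v - Real.log u) = Real.exp v := by
    rw [Real.exp_sub, Real.exp_log hu]
    field_simp
  nlinarith [h2, h3]

lemma my_gibbs {g ψ : Ω → ℝ} (hg : Measurable g) {ε C : ℝ} (hε : 0 < ε)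
    (hgl : ∀ x, ε ≤ g x) (hgu : ∀ x, g x ≤ C)
    (hψ : Measurable ψ) {D : ℝ} (hψb : ∀ x, |ψ x| ≤ D)
    (hexp : ∫ x, Real.exp (ψ x) ∂P = 1) :
    ∫ x, g x * ψ x ∂P ≤ ent P g := by
  have hD0 : 0 ≤ D := (abs_nonneg _).trans (hψb (Classical.choice (by
    by_contra h
    have : (Set.univ : Set Ω) = ∅ := Set.eq_empty_of_forall_notMem fun x _ => h ⟨x⟩
    have h1 : P Set.univ = 1 := measure_univ
    rw [this] at h1; simp at h1)))
  have hgabs : ∀ x, |g x| ≤ C := fun x => by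
    rw [abs_of_nonneg (hε.le.trans (hgl x))]; exact hgu x
  have hC0 : 0 < C := hε.trans_le ((hgl _).trans (hgu (Classical.choice (by
    by_contra h
    have : (Set.univ : Set Ω) = ∅ := Set.eq_empty_of_forall_notMem fun x _ => h ⟨x⟩
    have h1 : P Set.univ = 1 := measure_univ
    rw [this] at h1; simp at h1))))
  have hgint : Integrable g P := my_int_bdd _ hg hgabs
  set m := ∫ x, g x ∂P with hm
  have hmε : ε ≤ m := by
    have := integral_mono (μ := P) (integrable_const ε) hgint hgl
    simpa using this
  have hm0 : 0 < m := hε.trans_le hmε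
  have hpt : ∀ x, g x * ψ x ≤
      g x * Real.log (g x) - Real.log m * g x - g x + m * Real.exp (ψ x) := by
    intro x
    have hgx : 0 < g x := hε.trans_le (hgl x)
    have hu : 0 < g x / m := div_pos hgx hm0
    have hy := mul_le_mul_of_nonneg_left (my_young (v := ψ x) hu) hm0.le
    have hlog : Real.log (g x / m) = Real.log (g x) - Real.log m :=
      Real.log_div (ne_of_gt hgx) (ne_of_gt hm0)
    have e1 : m * (g x / m * ψ x) = g x * ψ x := by field_simp
    have e2 : m * (g x / m * Real.log (g x / m) - g x / m + Real.exp (ψ x))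
        = g x * Real.log (g x / m) - g x + m * Real.exp (ψ x) := by
      field_simp
    rw [e1, e2, hlog] at hy
    nlinarith [hy]
  have hAint : Integrable (fun x => g x * ψ x) P := by
    refine my_int_bdd _ (hg.mul hψ) (C := C * D) fun x => ?_
    rw [abs_mul]
    exact mul_le_mul (hgabs x) (hψb x) (abs_nonneg _) hC0.le
  have hB1int : Integrable (fun x => g x * Real.log (g x)) P := by
    refine my_int_bdd _ (hg.mul (Real.measurable_log.comp hg))
      (C := C * (|Real.log ε| + |Real.log C|)) fun x => ?_
    rw [abs_mul]
    exact mul_le_mul (hgabs x) (my_abs_log_le hε (hgl x) (hgu x)) (abs_nonneg _) hC0.le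
  have hexpint : Integrable (fun x => Real.exp (ψ x)) P := by
    refine my_int_bdd _ (Real.measurable_exp.comp hψ) (C := Real.exp D) fun x => ?_
    rw [abs_of_nonneg (Real.exp_nonneg _)]
    exact Real.exp_le_exp.mpr ((le_abs_self _).trans (hψb x))
  have hR2 : Integrable (fun x => g x * Real.log (g x) - Real.log m * g x) P :=
    hB1int.sub (hgint.const_mul (Real.log m))
  have hR1 : Integrable (fun x => g x * Real.log (g x) - Real.log m * g x - g x) P :=
    hR2.sub hgint
  have hRint : Integrable (fun x =>
      g x * Real.log (g x) - Real.log m * g x - g x + m * Real.exp (ψ x)) P :=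
    hR1.add (hexpint.const_mul m)
  have hint := integral_mono hAint hRint hpt
  rw [integral_add hR1 (hexpint.const_mul m),
    integral_sub hR2 hgint,
    integral_sub hB1int (hgint.const_mul (Real.log m)),
    integral_const_mul, integral_const_mul, hexp] at hint
  rw [ent]
  rw [← hm]
  linarith [hint]

end Gibbs

section Main
set_option linter.unusedSectionVars false
variable {Ω : Type*} [MeasurableSpace Ω]

lemma my_nonempty (P : Measure Ω) [IsProbabilityMeasure P] : Nonempty Ω := by
  by_contra h
  have h2 : (Set.univ : Set Ω) = ∅ := Set.eq_empty_of_forall_notMem fun x _ => h ⟨x⟩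
  have h1 : P Set.univ = 1 := measure_univ
  rw [h2] at h1; simp at h1

lemma my_main (P : Measure Ω) [IsProbabilityMeasure P]
    (M : ℕ) (T Tstar : Fin M → Kernel Ω Ω)
    [∀ i, IsMarkovKernel (T i)] [∀ i, IsMarkovKernel (Tstar i)]
    (hpres' : ∀ i, P.bind (fun x => Tstar i x) = P)
    (hadj : ∀ i, ∀ A B : Set Ω, MeasurableSet A → MeasurableSet B →
      ∫⁻ x in A, T i x B ∂P = ∫⁻ x in B, Tstar i x A ∂P)
    (κ : ℝ) (hκ : κ ∈ Set.Ioo (0:ℝ) 1)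
    (θ : Fin M → ℝ) (hθ0 : ∀ i, 0 ≤ θ i)
    (c : Fin M → ℝ) (hc : ∀ i, c i = θ i / (1 - κ))
    (hsub : ∀ f : Ω → ℝ, Measurable f → (∀ x, 0 ≤ f x) →
      Integrable f P → Integrable (fun x => |f x * Real.log (f x)|) P →
      ∑ i, θ i * ent P (kapp (Tstar i) f) ≤ (1 - κ) * ent P f)
    (ψ : Fin M → Ω → ℝ) (hψmeas : ∀ i, Measurable (ψ i))
    (D : Fin M → ℝ) (hψb : ∀ i x, |ψ i x| ≤ D i)
    (hnorm : ∀ i, ∫ x, Real.exp (ψ i x) ∂P = 1) :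
    ∫ x, ∏ i, Real.exp (c i * kapp (T i) (ψ i) x) ∂P ≤ 1 := by
  obtain ⟨x₀⟩ := my_nonempty P
  have h1κ : 0 < 1 - κ := by linarith [hκ.2]
  have hc0 : ∀ i, 0 ≤ c i := fun i => by rw [hc i]; exact div_nonneg (hθ0 i) h1κ.le
  have hD0 : ∀ i, 0 ≤ D i := fun i => (abs_nonneg _).trans (hψb i x₀)
  set a : Fin M → Ω → ℝ := fun i => kapp (T i) (ψ i) with ha
  have ham : ∀ i, Measurable (a i) := fun i => my_kapp_meas _ (hψmeas i)
  have hab : ∀ i x, |a i x| ≤ D i := fun i x => my_kapp_abs_le _ (hψb i) x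
  set S : Ω → ℝ := fun x => ∑ i, c i * a i x with hS
  set K : ℝ := ∑ i, c i * D i with hK
  have hK0 : 0 ≤ K := Finset.sum_nonneg fun i _ => mul_nonneg (hc0 i) (hD0 i)
  have hSm : Measurable S := Finset.measurable_sum _ fun i _ => (ham i).const_mul (c i)
  have hSb : ∀ x, |S x| ≤ K := by
    intro x
    calc |S x| ≤ ∑ i, |c i * a i x| := Finset.abs_sum_le_sum_abs _ _
      _ ≤ K := Finset.sum_le_sum fun i _ => by
          rw [abs_mul, abs_of_nonneg (hc0 i)]
          exact mul_le_mul_of_nonneg_left (hab i x) (hc0 i)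
  set f : Ω → ℝ := fun x => Real.exp (S x) with hf
  have hfm : Measurable f := Real.measurable_exp.comp hSm
  have hf0 : ∀ x, 0 ≤ f x := fun x => (Real.exp_pos _).le
  have hfl : ∀ x, Real.exp (-K) ≤ f x := fun x =>
    Real.exp_le_exp.mpr (by linarith [(abs_le.mp (hSb x)).1])
  have hfu : ∀ x, f x ≤ Real.exp K := fun x =>
    Real.exp_le_exp.mpr (by linarith [(abs_le.mp (hSb x)).2])
  have hfabs : ∀ x, |f x| ≤ Real.exp K := fun x => by
    rw [abs_of_nonneg (hf0 x)]; exact hfu x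
  have hfint : Integrable f P := my_int_bdd _ hfm hfabs
  have hfprod : ∀ x, ∏ i, Real.exp (c i * a i x) = f x := fun x =>
    (Real.exp_sum _ _).symm
  have hlogf : ∀ x, Real.log (f x) = S x := fun x => Real.log_exp _
  -- entropy input integrability
  have hflogb : ∀ x, |f x * Real.log (f x)| ≤ Real.exp K * K := fun x => by
    rw [hlogf x, abs_mul, abs_of_nonneg (hf0 x)]
    exact mul_le_mul (hfu x) (hSb x) (abs_nonneg _) (Real.exp_nonneg _)
  have hflogm : Measurable fun x => f x * Real.log (f x) :=
    hfm.mul (Real.measurable_log.comp hfm)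
  have hflogint : Integrable (fun x => |f x * Real.log (f x)|) P := by
    refine my_int_bdd _ hflogm.abs (C := Real.exp K * K) fun x => ?_
    rw [abs_abs]; exact hflogb x
  -- step 1 : ∫ f log f = ∑ i, c i * ∫ f * a i
  have hterm_int : ∀ i, Integrable (fun x => c i * (f x * a i x)) P := fun i => by
    refine my_int_bdd _ (((hfm.mul (ham i))).const_mul (c i))
      (C := c i * (Real.exp K * D i)) fun x => ?_
    rw [abs_mul, abs_of_nonneg (hc0 i)]
    refine mul_le_mul_of_nonneg_left ?_ (hc0 i)
    rw [abs_mul]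
    exact mul_le_mul (hfabs x) (hab i x) (abs_nonneg _) (Real.exp_nonneg _)
  have step1 : ∫ x, f x * Real.log (f x) ∂P = ∑ i, c i * ∫ x, f x * a i x ∂P := by
    have e1 : ∀ x, f x * Real.log (f x) = ∑ i, c i * (f x * a i x) := fun x => by
      rw [hlogf x, hS]
      simp only [Finset.mul_sum]
      exact Finset.sum_congr rfl fun i _ => by ring
    rw [funext e1, integral_finset_sum _ fun i _ => hterm_int i]
    exact Finset.sum_congr rfl fun i _ => integral_const_mul _ _
  -- step 2 : adjoint
  have step2 : ∀ i, ∫ x, f x * a i x ∂P = ∫ x, kapp (Tstar i) f x * ψ i x ∂P := fun i =>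
    my_adj_real P (T i) (Tstar i) (hadj i) (hpres' i) hfm hf0 hfu (hψmeas i) (hψb i)
  -- step 3 : Gibbs
  have step3 : ∀ i, ∫ x, kapp (Tstar i) f x * ψ i x ∂P ≤ ent P (kapp (Tstar i) f) := fun i =>
    my_gibbs P (my_kapp_meas _ hfm) (Real.exp_pos (-K))
      (fun x => (my_kapp_le _ hfm hfl hfu x).1) (fun x => (my_kapp_le _ hfm hfl hfu x).2)
      (hψmeas i) (hψb i) (hnorm i)
  -- step 4
  have step4 : ∑ i, θ i * ent P (kapp (Tstar i) f) ≤ (1 - κ) * ent P f :=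
    hsub f hfm hf0 hfint hflogint
  set m : ℝ := ∫ x, f x ∂P with hm
  have hm0 : 0 < m := by
    have := integral_mono (μ := P) (integrable_const (Real.exp (-K))) hfint hfl
    simp only [integral_const, probReal_univ, one_smul] at this
    exact lt_of_lt_of_le (Real.exp_pos _) this
  have key : ∫ x, f x * Real.log (f x) ∂P ≤ ent P f := by
    calc ∫ x, f x * Real.log (f x) ∂P = ∑ i, c i * ∫ x, f x * a i x ∂P := step1
      _ ≤ ∑ i, c i * ent P (kapp (Tstar i) f) := by
          refine Finset.sum_le_sum fun i _ => ?_
          rw [step2 i]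
          exact mul_le_mul_of_nonneg_left (step3 i) (hc0 i)
      _ = (1 - κ)⁻¹ * ∑ i, θ i * ent P (kapp (Tstar i) f) := by
          rw [Finset.mul_sum]
          refine Finset.sum_congr rfl fun i _ => ?_
          rw [hc i]; field_simp
      _ ≤ (1 - κ)⁻¹ * ((1 - κ) * ent P f) :=
          mul_le_mul_of_nonneg_left step4 (inv_nonneg.mpr h1κ.le)
      _ = ent P f := by field_simp
  have hentf : ent P f = ∫ x, f x * Real.log (f x) ∂P - m * Real.log m := by rw [ent]
  have hmlog : m * Real.log m ≤ 0 := by linarith [key, hentf]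
  have hm1 : m ≤ 1 := by
    by_contra hcon
    push_neg at hcon
    have := Real.log_pos hcon
    nlinarith
  calc ∫ x, ∏ i, Real.exp (c i * kapp (T i) (ψ i) x) ∂P
      = ∫ x, f x ∂P := by
        refine integral_congr_ae (ae_of_all _ fun x => ?_)
        exact hfprod x
    _ ≤ 1 := hm1

end Main

/-- Duality, direction (a) ⇒ (b): if the entropy subadditivity
`∑ᵢ θᵢ Ent(Tᵢ⋆ f) ≤ (1-κ) Ent(f)` holds for all nonnegative `f ∈ L log L`, then the
generalized Brascamp-Lieb inequality `E[∏ᵢ e^{cᵢ Tᵢ φᵢ}] ≤ ∏ᵢ E[e^{φᵢ}]^{cᵢ}` holds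
for all bounded measurable `φ₁, …, φ_M`, where `cᵢ = θᵢ/(1-κ)`. -/
theorem stmt_5 {Ω : Type*} [MeasurableSpace Ω] (P : Measure Ω) [IsProbabilityMeasure P]
    (M : ℕ) (T Tstar : Fin M → Kernel Ω Ω)
    [∀ i, IsMarkovKernel (T i)] [∀ i, IsMarkovKernel (Tstar i)]
    (hpres : ∀ i, P.bind (fun x => T i x) = P)
    (hpres' : ∀ i, P.bind (fun x => Tstar i x) = P)
    (hadj : ∀ i, ∀ A B : Set Ω, MeasurableSet A → MeasurableSet B →
      ∫⁻ x in A, T i x B ∂P = ∫⁻ x in B, Tstar i x A ∂P)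
    (κ : ℝ) (hκ : κ ∈ Set.Ioo (0:ℝ) 1)
    (θ : Fin M → ℝ) (hθ0 : ∀ i, 0 ≤ θ i) (hθ1 : ∑ i, θ i = 1)
    (c : Fin M → ℝ) (hc : ∀ i, c i = θ i / (1 - κ))
    (hsub : ∀ f : Ω → ℝ, Measurable f → (∀ x, 0 ≤ f x) →
      Integrable f P → Integrable (fun x => |f x * Real.log (f x)|) P →
      ∑ i, θ i * ent P (kapp (Tstar i) f) ≤ (1 - κ) * ent P f)
    (φ : Fin M → Ω → ℝ) (hφmeas : ∀ i, Measurable (φ i))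
    (hφbdd : ∀ i, ∃ C : ℝ, ∀ x, |φ i x| ≤ C) :
    ∫ x, ∏ i, Real.exp (c i * kapp (T i) (φ i) x) ∂P
      ≤ ∏ i, (∫ x, Real.exp (φ i x) ∂P) ^ (c i) := by
  choose C hC using hφbdd
  set E : Fin M → ℝ := fun i => ∫ x, Real.exp (φ i x) ∂P with hE
  have hexpint : ∀ i, Integrable (fun x => Real.exp (φ i x)) P := fun i => by
    refine my_int_bdd _ (Real.measurable_exp.comp (hφmeas i)) (C := Real.exp (C i)) fun x => ?_
    rw [abs_of_nonneg (Real.exp_nonneg _)]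
    exact Real.exp_le_exp.mpr ((le_abs_self _).trans (hC i x))
  have hE0 : ∀ i, 0 < E i := by
    intro i
    have h1 : ∀ x, Real.exp (-(C i)) ≤ Real.exp (φ i x) := fun x =>
      Real.exp_le_exp.mpr (abs_le.mp (hC i x)).1
    have := integral_mono (μ := P) (integrable_const (Real.exp (-(C i)))) (hexpint i) h1
    simp only [integral_const, probReal_univ, one_smul] at this
    exact lt_of_lt_of_le (Real.exp_pos _) this
  set L : Fin M → ℝ := fun i => Real.log (E i) with hL
  set ψ : Fin M → Ω → ℝ := fun i x => φ i x - L i with hψ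
  have hψmeas : ∀ i, Measurable (ψ i) := fun i => (hφmeas i).sub_const _
  have hψb : ∀ i x, |ψ i x| ≤ C i + |L i| := fun i x => by
    calc |ψ i x| = |φ i x - L i| := rfl
      _ ≤ |φ i x| + |L i| := abs_sub _ _
      _ ≤ C i + |L i| := by linarith [hC i x]
  have hnorm : ∀ i, ∫ x, Real.exp (ψ i x) ∂P = 1 := by
    intro i
    have h1 : ∀ x, Real.exp (ψ i x) = Real.exp (φ i x) * (E i)⁻¹ := fun x => by
      have : ψ i x = φ i x - L i := rfl
      rw [this, Real.exp_sub]
      have : Real.exp (L i) = E i := Real.exp_log (hE0 i)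
      rw [this, div_eq_mul_inv]
    calc ∫ x, Real.exp (ψ i x) ∂P
        = ∫ x, Real.exp (φ i x) * (E i)⁻¹ ∂P := integral_congr_ae (ae_of_all _ h1)
      _ = E i * (E i)⁻¹ := integral_mul_const _ _
      _ = 1 := mul_inv_cancel₀ (ne_of_gt (hE0 i))
  have hmain := my_main P M T Tstar hpres' hadj κ hκ θ hθ0 c hc hsub ψ hψmeas
    (fun i => C i + |L i|) hψb hnorm
  have hkapp : ∀ i x, kapp (T i) (φ i) x = kapp (T i) (ψ i) x + L i := by
    intro i x
    calc kapp (T i) (φ i) x = kapp (T i) (fun y => ψ i y + L i) x := by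
          congr 1
          funext y
          simp only [hψ]
          ring
      _ = kapp (T i) (ψ i) x + L i := my_kapp_add_const (T i) (hψmeas i) (hψb i) (L i) x
  have hprod : ∀ x, ∏ i, Real.exp (c i * kapp (T i) (φ i) x)
      = (∏ i, Real.exp (c i * kapp (T i) (ψ i) x)) * ∏ i, Real.exp (c i * L i) := by
    intro x
    rw [← Finset.prod_mul_distrib]
    refine Finset.prod_congr rfl fun i _ => ?_
    rw [hkapp i x, mul_add, Real.exp_add]
  calc ∫ x, ∏ i, Real.exp (c i * kapp (T i) (φ i) x) ∂P
      = ∫ x, (∏ i, Real.exp (c i * kapp (T i) (ψ i) x)) * (∏ i, Real.exp (c i * L i)) ∂P :=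
        integral_congr_ae (ae_of_all _ hprod)
    _ = (∫ x, ∏ i, Real.exp (c i * kapp (T i) (ψ i) x) ∂P) * ∏ i, Real.exp (c i * L i) :=
        integral_mul_const _ _
    _ ≤ 1 * ∏ i, Real.exp (c i * L i) :=
        mul_le_mul_of_nonneg_right hmain (Finset.prod_nonneg fun i _ => Real.exp_nonneg _)
    _ = ∏ i, E i ^ (c i) := by
        rw [one_mul]
        refine Finset.prod_congr rfl fun i _ => ?_
        rw [Real.rpow_def_of_pos (hE0 i), mul_comm]
end

section
/- Shearer's inequality via the chain rule: Let (Ω, F, P) = ⊗_{i=1}^n (Ω_i, F_i, P_i) be a product probability space with coordinate maps Z_1,…,Z_n. For A ⊆ [n] let E_A[f] := E[f | Z_j, j ∈ Aᶜ] and Ent_A(f) := E_A[f log f] − E_A[f] log E_A[f]. Then for any nonnegative weights (θ_A)_{A⊆[n]} summing to 1 and any f ∈ L log L, θ⋆ · Ent(f) ≤ ∑_{A⊆[n]} θ_A E[Ent_A(f)], where θ⋆ := min_{1≤i≤n} ∑_{A ∋ i} θ_A. -/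
/-!
Write `E_B` for integrating out the coordinates in `B`, which on a product space is the
conditional expectation given the other coordinates, and `g A = E[Ent_A f]
= E[f log f] - E[E_A f log E_A f]`. Since `E_(B ∪ C) = E_B E_C` for disjoint `B` and `C`, the
chain rule `g (B ∪ C) = g C + E[Ent_B (E_C f)]` holds, so `g` is monotone; it is submodular
because averaging out further independent coordinates can only lower the conditional entropy in
the others, `E[Ent_B (E_C h)] ≤ E[Ent_B h]`, which follows from `log z ≤ z - 1`. For a monotone
submodular `g`, telescoping `g univ - g ∅` along the chain `{j < i} ⊆ {j ≤ i}` and comparing each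
increment with the corresponding one inside `A` bounds the increments over `i ∈ A` by
`g A - g ∅`; double counting against the weights `θ` then gives the inequality.
-/

open MeasureTheory ProbabilityTheory
open scoped BigOperators

/-- The sub-σ-algebra of a product space generated by the coordinates outside `A`. -/
def coordSigma {n : ℕ} (Ω : Fin n → Type*) [∀ i, MeasurableSpace (Ω i)]
    (A : Finset (Fin n)) : MeasurableSpace (∀ i, Ω i) :=
  ⨆ i ∈ ((Finset.univ : Finset (Fin n)) \ A),
    MeasurableSpace.comap (fun x => x i) inferInstance

/-- The conditional entropy `Ent_A(f) = E_A[f log f] - E_A[f] log E_A[f]`, where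
`E_A = E[· | Z_j, j ∈ Aᶜ]`. -/
noncomputable def condEnt {n : ℕ} {Ω : Fin n → Type*} [∀ i, MeasurableSpace (Ω i)]
    (μ : Measure (∀ i, Ω i)) (A : Finset (Fin n)) (f : (∀ i, Ω i) → ℝ)
    (x : ∀ i, Ω i) : ℝ :=
  (MeasureTheory.condExp (coordSigma Ω A) μ (fun y => f y * Real.log (f y))) x
    - (MeasureTheory.condExp (coordSigma Ω A) μ f) x
        * Real.log ((MeasureTheory.condExp (coordSigma Ω A) μ f) x)


noncomputable section

open Filter Finset Function Real

namespace Shearer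

section SetFunction

variable {ι : Type*} [LinearOrder ι]

theorem sum_insert_filter_lt_sub (g : Finset ι → ℝ) (A : Finset ι) :
    ∑ i ∈ A, (g (insert i (A.filter (· < i))) - g (A.filter (· < i))) = g A - g ∅ := by
  induction A using Finset.induction_on_max with
  | empty => simp
  | insert a s hlt ih =>
    have has : a ∉ s := fun h => lt_irrefl a (hlt a h)
    have hfilter : ∀ i ∈ s, (insert a s).filter (· < i) = s.filter (· < i) := fun i hi => by
      rw [filter_insert, if_neg (not_lt.2 (hlt i hi).le)]
    rw [sum_insert has, sum_congr rfl fun i hi => by rw [hfilter i hi], ih, filter_insert,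
      if_neg (lt_irrefl a), filter_true_of_mem hlt]
    ring

/-- Shearer's lemma for monotone submodular set functions. -/
theorem iInf_mul_sub_le_sum_mul_sub [Fintype ι] (g : Finset ι → ℝ) (hmono : Monotone g)
    (hsub : ∀ ⦃S T : Finset ι⦄ ⦃i : ι⦄, S ⊆ T → i ∉ T →
      g (insert i T) - g T ≤ g (insert i S) - g S)
    (θ : Finset ι → ℝ) (hθ : ∀ A, 0 ≤ θ A) :
    (⨅ i, ∑ A ∈ univ.filter (fun A => i ∈ A), θ A) * (g univ - g ∅)
      ≤ ∑ A, θ A * (g A - g ∅) := by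
  set d : ι → ℝ := fun i => g (insert i (univ.filter (· < i))) - g (univ.filter (· < i))
  set w : ι → ℝ := fun i => ∑ A ∈ univ.filter (fun A => i ∈ A), θ A
  have hd : ∀ i, 0 ≤ d i := fun i => sub_nonneg.2 (hmono (subset_insert _ _))
  have hdA : ∀ A, ∑ i ∈ A, d i ≤ g A - g ∅ := fun A => by
    rw [← sum_insert_filter_lt_sub g A]
    exact sum_le_sum fun i _ => hsub (filter_subset_filter _ (subset_univ A)) (by simp)
  calc (⨅ i, w i) * (g univ - g ∅) = ∑ i, (⨅ j, w j) * d i := by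
        rw [← sum_insert_filter_lt_sub g univ, mul_sum]
    _ ≤ ∑ i, w i * d i := sum_le_sum fun i _ =>
        mul_le_mul_of_nonneg_right (ciInf_le (Finite.bddBelow_range w) i) (hd i)
    _ = ∑ A, θ A * ∑ i ∈ A, d i := by
        simp only [w, sum_mul, mul_sum]
        exact sum_comm' fun i A => by simp
    _ ≤ ∑ A, θ A * (g A - g ∅) :=
        sum_le_sum fun A _ => mul_le_mul_of_nonneg_left (hdA A) (hθ A)

end SetFunction

theorem mul_log_sub_mul_log_le {t a c q : ℝ} (ht : 0 ≤ t) (ha : 0 ≤ a) (hc : 0 ≤ c)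
    (hq : 0 ≤ q) (hat : a = 0 → t = 0) (hca : c = 0 → a = 0) (hqt : q = 0 → t = 0) :
    t * log a - t * log c ≤ t * log t - t * log q - t + a * (q / c) := by
  rcases ht.eq_or_lt with rfl | ht
  · simp only [zero_mul, sub_zero, zero_add]
    positivity
  have ha : 0 < a := ha.lt_of_ne fun h => ht.ne' (hat h.symm)
  have hc : 0 < c := hc.lt_of_ne fun h => ha.ne' (hca h.symm)
  have hq : 0 < q := hq.lt_of_ne fun h => ht.ne' (hqt h.symm)
  -- `log z ≤ z - 1` at `z = a q / (t c)`
  have key := mul_le_mul_of_nonneg_left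
    (log_le_sub_one_of_pos (show 0 < a * q / (t * c) by positivity)) ht.le
  rw [log_div (by positivity) (by positivity), log_mul ha.ne' hq.ne',
    log_mul ht.ne' hc.ne'] at key
  have hz : t * (a * q / (t * c) - 1) = a * (q / c) - t := by field_simp
  linear_combination key + hz

section Marginal

variable {ι : Type*} [DecidableEq ι] {Ω : ι → Type*} [∀ i, MeasurableSpace (Ω i)]

/-- The paper's `E_B k` (see `condExp_coordSigma_ae_eq_marginal`). -/
def marginal (P : ∀ i, Measure (Ω i)) (B : Finset ι) (k : (∀ i, Ω i) → ℝ)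
    (x : ∀ i, Ω i) : ℝ :=
  ∫ y, k (updateFinset x B y) ∂Measure.pi fun j : B => P j

variable {P : ∀ i, Measure (Ω i)}

theorem marginal_nonneg (B : Finset ι) {k : (∀ i, Ω i) → ℝ} (hk : ∀ z, 0 ≤ k z)
    (x : ∀ i, Ω i) : 0 ≤ marginal P B k x :=
  integral_nonneg fun _ => hk _

theorem marginal_updateFinset (B : Finset ι) (k : (∀ i, Ω i) → ℝ) (x : ∀ i, Ω i)
    (y : ∀ j : B, Ω j) : marginal P B k (updateFinset x B y) = marginal P B k x := by
  simp only [marginal, updateFinset_updateFinset_of_subset subset_rfl]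

theorem marginal_mul_right {B : Finset ι} {ψ : (∀ i, Ω i) → ℝ}
    (hψ : ∀ x y, ψ (updateFinset x B y) = ψ x) (k : (∀ i, Ω i) → ℝ) (x : ∀ i, Ω i) :
    marginal P B (fun z => k z * ψ z) x = marginal P B k x * ψ x := by
  simp only [marginal, hψ]
  exact integral_mul_const _ _

theorem marginal_updateFinset_of_disjoint {B C : Finset ι} (hBC : Disjoint B C)
    {k : (∀ i, Ω i) → ℝ} (hk : ∀ x y, k (updateFinset x C y) = k x)
    (x : ∀ i, Ω i) (y : ∀ j : C, Ω j) :
    marginal P B k (updateFinset x C y) = marginal P B k x := by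
  have hcomm : ∀ z : ∀ j : B, Ω j, updateFinset (updateFinset x C y) B z =
      updateFinset (updateFinset x B z) C y := fun z => by
    ext j
    by_cases hjB : j ∈ B
    · simp [updateFinset, hjB, Finset.disjoint_left.1 hBC hjB]
    · by_cases hjC : j ∈ C <;> simp [updateFinset, hjB, hjC]
  simp only [marginal, hcomm, hk]

variable [∀ i, IsProbabilityMeasure (P i)]

theorem marginal_empty (k : (∀ i, Ω i) → ℝ) : marginal P ∅ k = k := by
  ext x
  simp [marginal]

theorem measurable_marginal (B : Finset ι) {k : (∀ i, Ω i) → ℝ} (hk : Measurable k) :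
    Measurable (marginal P B k) :=
  (hk.comp measurable_updateFinset').stronglyMeasurable.integral_prod_right'.measurable

variable [Fintype ι]

variable (P) in
theorem measurePreserving_updateFinset (B : Finset ι) :
    MeasurePreserving (fun p : (∀ i, Ω i) × (∀ j : B, Ω j) => updateFinset p.1 B p.2)
      ((Measure.pi P).prod (Measure.pi fun j : B => P j)) (Measure.pi P) := by
  refine ⟨measurable_updateFinset', (Measure.pi_eq fun s hs => ?_).symm⟩
  have hpre : (fun p : (∀ i, Ω i) × (∀ j : B, Ω j) => updateFinset p.1 B p.2) ⁻¹'
      Set.univ.pi s = Set.univ.pi (fun i => if i ∈ B then Set.univ else s i) ×ˢ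
        Set.univ.pi (fun j : B => s j) := by
    ext ⟨x, y⟩
    simp only [Set.mem_preimage, Set.mem_pi, Set.mem_univ, true_implies, Set.mem_prod,
      updateFinset]
    constructor
    · intro h
      refine ⟨fun i => ?_, fun j => by simpa [j.2] using h j⟩
      split_ifs with hi
      · trivial
      · simpa [hi] using h i
    · rintro ⟨hx, hy⟩ i
      split_ifs with hi
      · exact hy ⟨i, hi⟩
      · simpa [hi] using hx i
  rw [Measure.map_apply measurable_updateFinset' (MeasurableSet.univ_pi hs), hpre,
    Measure.prod_prod, Measure.pi_pi, Measure.pi_pi, Finset.prod_coe_sort B (fun i => P i (s i))]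
  simp only [apply_ite (fun t => P _ t), measure_univ]
  rw [Finset.prod_ite, Finset.prod_const_one, one_mul,
    show univ.filter (· ∉ B) = Bᶜ by ext; simp, Finset.prod_compl_mul_prod]

theorem integrable_comp_updateFinset {B : Finset ι} {k : (∀ i, Ω i) → ℝ}
    (hk : Integrable k (Measure.pi P)) :
    Integrable (fun p : (∀ i, Ω i) × (∀ j : B, Ω j) => k (updateFinset p.1 B p.2))
      ((Measure.pi P).prod (Measure.pi fun j : B => P j)) :=
  ((measurePreserving_updateFinset P B).integrable_comp hk.aestronglyMeasurable).2 hk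

theorem ae_ae_updateFinset (B : Finset ι) {p : (∀ i, Ω i) → Prop}
    (hp : ∀ᵐ z ∂Measure.pi P, p z) :
    ∀ᵐ x ∂Measure.pi P, ∀ᵐ y ∂Measure.pi (fun j : B => P j),
      p (updateFinset x B y) :=
  Measure.ae_ae_of_ae_prod
    ((measurePreserving_updateFinset P B).quasiMeasurePreserving.ae hp)

theorem ae_integrable_updateFinset (B : Finset ι) {k : (∀ i, Ω i) → ℝ}
    (hk : Integrable k (Measure.pi P)) :
    ∀ᵐ x ∂Measure.pi P,
      Integrable (fun y => k (updateFinset x B y)) (Measure.pi fun j : B => P j) :=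
  (integrable_comp_updateFinset hk).prod_right_ae

theorem integrable_marginal (B : Finset ι) {k : (∀ i, Ω i) → ℝ}
    (hk : Integrable k (Measure.pi P)) : Integrable (marginal P B k) (Measure.pi P) :=
  (integrable_comp_updateFinset hk).integral_prod_left

theorem integral_marginal (B : Finset ι) {k : (∀ i, Ω i) → ℝ}
    (hk : Integrable k (Measure.pi P)) :
    ∫ x, marginal P B k x ∂Measure.pi P = ∫ x, k x ∂Measure.pi P := by
  have hmp := measurePreserving_updateFinset P B
  calc ∫ x, marginal P B k x ∂Measure.pi P
      = ∫ p, k (updateFinset p.1 B p.2)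
          ∂(Measure.pi P).prod (Measure.pi fun j : B => P j) :=
        (integral_prod _ (integrable_comp_updateFinset hk)).symm
    _ = ∫ x, k x ∂Measure.map _ ((Measure.pi P).prod (Measure.pi fun j : B => P j)) :=
        (integral_map hmp.measurable.aemeasurable
          (by rw [hmp.map_eq]; exact hk.aestronglyMeasurable)).symm
    _ = ∫ x, k x ∂Measure.pi P := by rw [hmp.map_eq]

theorem marginal_congr_ae (B : Finset ι) {k k' : (∀ i, Ω i) → ℝ}
    (h : k =ᵐ[Measure.pi P] k') : marginal P B k =ᵐ[Measure.pi P] marginal P B k' := by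
  filter_upwards [ae_ae_updateFinset B h] with x hx
  exact integral_congr_ae hx

theorem marginal_union {B C : Finset ι} (hBC : Disjoint B C) {k : (∀ i, Ω i) → ℝ}
    (hk : Integrable k (Measure.pi P)) (hkm : Measurable k) :
    marginal P (B ∪ C) k =ᵐ[Measure.pi P] marginal P B (marginal P C k) := by
  filter_upwards [ae_integrable_updateFinset (B ∪ C) hk] with x hx
  have hmp := measurePreserving_piFinsetUnion hBC P
  have hint := (hmp.integrable_comp (hkm.comp measurable_updateFinset).aestronglyMeasurable).2 hx
  simp only [marginal]
  rw [← hmp.integral_comp' (fun w => k (updateFinset x (B ∪ C) w)),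
    integral_prod (fun q => k (updateFinset x (B ∪ C) (MeasurableEquiv.piFinsetUnion Ω hBC q)))
      hint]
  simp_rw [updateFinset_updateFinset hBC]
  rfl

theorem marginal_univ {k : (∀ i, Ω i) → ℝ} (hk : Integrable k (Measure.pi P))
    (x : ∀ i, Ω i) : marginal P univ k x = ∫ z, k z ∂Measure.pi P := by
  have hconst : ∀ x', marginal P univ k x' = marginal P univ k x := fun x' => by
    have : updateFinset x' (univ : Finset ι) = updateFinset x univ := by
      ext y i
      simp [updateFinset]
    simp only [marginal, this]
  rw [← integral_marginal univ hk, funext hconst, integral_const, probReal_univ, one_smul]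

theorem integral_marginal_mul {B : Finset ι} {ψ k : (∀ i, Ω i) → ℝ}
    (hψ : ∀ x y, ψ (updateFinset x B y) = ψ x)
    (h : Integrable (fun x => k x * ψ x) (Measure.pi P)) :
    ∫ x, marginal P B k x * ψ x ∂Measure.pi P = ∫ x, k x * ψ x ∂Measure.pi P := by
  rw [← integral_marginal B h]
  simp only [marginal_mul_right hψ]

theorem integrable_mul_of_integrable_marginal_mul {B : Finset ι} {ψ k : (∀ i, Ω i) → ℝ}
    (hψ : ∀ x y, ψ (updateFinset x B y) = ψ x)
    (hψm : AEStronglyMeasurable ψ (Measure.pi P)) (hk0 : ∀ z, 0 ≤ k z)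
    (hk : Integrable k (Measure.pi P))
    (h : Integrable (fun x => marginal P B k x * ψ x) (Measure.pi P)) :
    Integrable (fun x => k x * ψ x) (Measure.pi P) := by
  have hmp := measurePreserving_updateFinset P B
  have hm : AEStronglyMeasurable (fun x => k x * ψ x) (Measure.pi P) :=
    hk.aestronglyMeasurable.mul hψm
  refine (hmp.integrable_comp hm).1
    ((integrable_prod_iff (hm.comp_measurePreserving hmp)).2 ⟨?_, ?_⟩)
  · filter_upwards [ae_integrable_updateFinset B hk] with x hx
    simpa only [Function.comp_apply, hψ] using hx.mul_const (ψ x)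
  · refine h.norm.congr (Eventually.of_forall fun x => ?_)
    simp only [Function.comp_apply, hψ, norm_mul, Real.norm_of_nonneg (hk0 _),
      Real.norm_of_nonneg (marginal_nonneg B hk0 x), integral_mul_const]
    rfl

theorem mul_log_marginal_le (B : Finset ι) {k : (∀ i, Ω i) → ℝ}
    (hk0 : ∀ z, 0 ≤ k z) (hk : Integrable k (Measure.pi P))
    (hkl : Integrable (fun z => k z * log (k z)) (Measure.pi P)) :
    ∀ᵐ x ∂Measure.pi P, marginal P B k x * log (marginal P B k x)
      ≤ marginal P B (fun z => k z * log (k z)) x := by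
  filter_upwards [ae_integrable_updateFinset B hk, ae_integrable_updateFinset B hkl] with x h1 h2
  exact convexOn_mul_log.map_integral_le continuous_mul_log.continuousOn isClosed_Ici
    (Eventually.of_forall fun _ => hk0 _) h1 h2

theorem integrable_marginal_mul_log (B : Finset ι) {k : (∀ i, Ω i) → ℝ}
    (hk0 : ∀ z, 0 ≤ k z) (hk : Integrable k (Measure.pi P))
    (hkl : Integrable (fun z => k z * log (k z)) (Measure.pi P)) :
    Integrable (fun x => marginal P B k x * log (marginal P B k x)) (Measure.pi P) :=
  integrable_of_le_of_le
    (continuous_mul_log.comp_aestronglyMeasurable (integrable_marginal B hk).aestronglyMeasurable)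
    (Eventually.of_forall fun x => self_sub_one_le_mul_log (marginal_nonneg B hk0 x))
    (mul_log_marginal_le B hk0 hk hkl) ((integrable_marginal B hk).sub (integrable_const 1))
    (integrable_marginal B hkl)

theorem integrable_mul_log_marginal (B : Finset ι) {k : (∀ i, Ω i) → ℝ}
    (hk0 : ∀ z, 0 ≤ k z) (hk : Integrable k (Measure.pi P))
    (hkl : Integrable (fun z => k z * log (k z)) (Measure.pi P)) :
    Integrable (fun x => k x * log (marginal P B k x)) (Measure.pi P) :=
  integrable_mul_of_integrable_marginal_mul (fun x y => by rw [marginal_updateFinset])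
    (measurable_log.comp_aemeasurable (integrable_marginal B hk).aemeasurable).aestronglyMeasurable
    hk0 hk (integrable_marginal_mul_log B hk0 hk hkl)

theorem integral_mul_log_marginal (B : Finset ι) {k : (∀ i, Ω i) → ℝ}
    (hk0 : ∀ z, 0 ≤ k z) (hk : Integrable k (Measure.pi P))
    (hkl : Integrable (fun z => k z * log (k z)) (Measure.pi P)) :
    ∫ x, k x * log (marginal P B k x) ∂Measure.pi P
      = ∫ x, marginal P B k x * log (marginal P B k x) ∂Measure.pi P :=
  (integral_marginal_mul (fun x y => by rw [marginal_updateFinset])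
    (integrable_mul_log_marginal B hk0 hk hkl)).symm

theorem setIntegral_marginal (B : Finset ι) {s : Set (∀ i, Ω i)} (hs : MeasurableSet s)
    (hsB : ∀ x y, updateFinset x B y ∈ s ↔ x ∈ s) {k : (∀ i, Ω i) → ℝ}
    (hk : Integrable k (Measure.pi P)) :
    ∫ x in s, marginal P B k x ∂Measure.pi P = ∫ x in s, k x ∂Measure.pi P := by
  rw [← integral_indicator hs, ← integral_indicator hs,
    ← integral_marginal B (hk.indicator hs)]
  congr 1
  ext x
  by_cases hx : x ∈ s <;> simp [marginal, Set.indicator, hsB, hx]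

theorem ae_eq_zero_of_marginal_eq_zero (B : Finset ι) {k : (∀ i, Ω i) → ℝ}
    (hk0 : ∀ z, 0 ≤ k z) (hkm : Measurable k) (hk : Integrable k (Measure.pi P)) :
    ∀ᵐ x ∂Measure.pi P, marginal P B k x = 0 → k x = 0 := by
  set S := marginal P B k ⁻¹' {0}
  have hS : MeasurableSet S := measurable_marginal B hkm (measurableSet_singleton 0)
  have hzero : ∫ x in S, k x ∂Measure.pi P = 0 := by
    rw [← setIntegral_marginal B hS
      (fun x y => by simp only [S, Set.mem_preimage, marginal_updateFinset]) hk]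
    exact setIntegral_eq_zero_of_forall_eq_zero fun x hx => hx
  exact (ae_restrict_iff' hS).1
    ((setIntegral_eq_zero_iff_of_nonneg_ae (Eventually.of_forall hk0) hk.integrableOn).1 hzero)

/-- The paper's `E[Ent_B k]` (see `integral_condEnt_eq_expectedEnt`). -/
def expectedEnt (P : ∀ i, Measure (Ω i)) (B : Finset ι) (k : (∀ i, Ω i) → ℝ) : ℝ :=
  ∫ x, k x * log (k x) ∂Measure.pi P
    - ∫ x, marginal P B k x * log (marginal P B k x) ∂Measure.pi P

theorem expectedEnt_nonneg (B : Finset ι) {k : (∀ i, Ω i) → ℝ}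
    (hk0 : ∀ z, 0 ≤ k z) (hk : Integrable k (Measure.pi P))
    (hkl : Integrable (fun z => k z * log (k z)) (Measure.pi P)) :
    0 ≤ expectedEnt P B k := by
  rw [expectedEnt, sub_nonneg, ← integral_marginal B hkl]
  exact integral_mono_ae (integrable_marginal_mul_log B hk0 hk hkl) (integrable_marginal B hkl)
    (mul_log_marginal_le B hk0 hk hkl)

theorem expectedEnt_congr_ae (B : Finset ι) {k k' : (∀ i, Ω i) → ℝ}
    (h : k =ᵐ[Measure.pi P] k') : expectedEnt P B k = expectedEnt P B k' := by
  rw [expectedEnt, expectedEnt]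
  congr 1 <;> refine integral_congr_ae (EventuallyEq.fun_comp ?_ fun t => t * log t)
  exacts [h, marginal_congr_ae B h]

theorem expectedEnt_union {B C : Finset ι} (hBC : Disjoint B C) {k : (∀ i, Ω i) → ℝ}
    (hk : Integrable k (Measure.pi P)) (hkm : Measurable k) :
    expectedEnt P (B ∪ C) k = expectedEnt P C k + expectedEnt P B (marginal P C k) := by
  have hm := (marginal_union hBC hk hkm).fun_comp fun t => t * log t
  simp only [Function.comp_def] at hm
  rw [expectedEnt, expectedEnt, expectedEnt, integral_congr_ae hm]
  ring

theorem integrable_mul_log_marginal_marginal {B C : Finset ι} (hBC : Disjoint B C)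
    {g : (∀ i, Ω i) → ℝ} (hg0 : ∀ z, 0 ≤ g z) (hg : Integrable g (Measure.pi P))
    (hgl : Integrable (fun z => g z * log (g z)) (Measure.pi P)) :
    Integrable (fun x => g x * log (marginal P B (marginal P C g) x)) (Measure.pi P) :=
  integrable_mul_of_integrable_marginal_mul
    (fun x y => by rw [marginal_updateFinset_of_disjoint hBC (marginal_updateFinset C g)])
    (measurable_log.comp_aemeasurable
      (integrable_marginal B (integrable_marginal C hg)).aemeasurable).aestronglyMeasurable
    hg0 hg (integrable_mul_log_marginal B (marginal_nonneg C hg0) (integrable_marginal C hg)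
      (integrable_marginal_mul_log C hg0 hg hgl))

theorem integral_mul_log_marginal_marginal {B C : Finset ι} (hBC : Disjoint B C)
    {g : (∀ i, Ω i) → ℝ} (hg0 : ∀ z, 0 ≤ g z) (hg : Integrable g (Measure.pi P))
    (hgl : Integrable (fun z => g z * log (g z)) (Measure.pi P)) :
    ∫ x, g x * log (marginal P B (marginal P C g) x) ∂Measure.pi P
      = ∫ x, marginal P B (marginal P C g) x * log (marginal P B (marginal P C g) x)
          ∂Measure.pi P := by
  rw [← integral_marginal_mul (B := C)
      (fun x y => by rw [marginal_updateFinset_of_disjoint hBC (marginal_updateFinset C g)])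
      (integrable_mul_log_marginal_marginal hBC hg0 hg hgl),
    integral_mul_log_marginal B (marginal_nonneg C hg0) (integrable_marginal C hg)
      (integrable_marginal_mul_log C hg0 hg hgl)]

theorem integrable_and_integral_mul_marginal_div_marginal_le (B : Finset ι)
    {g h : (∀ i, Ω i) → ℝ}
    (hg0 : ∀ z, 0 ≤ g z) (hg : Integrable g (Measure.pi P)) (hh0 : ∀ z, 0 ≤ h z)
    (hh : Integrable h (Measure.pi P)) :
    Integrable (fun x => h x * (marginal P B g x / marginal P B h x)) (Measure.pi P) ∧
      ∫ x, h x * (marginal P B g x / marginal P B h x) ∂Measure.pi P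
        ≤ ∫ x, g x ∂Measure.pi P := by
  set q := marginal P B g
  set c := marginal P B h
  have hq0 : ∀ x, 0 ≤ q x := marginal_nonneg B hg0
  have hc0 : ∀ x, 0 ≤ c x := marginal_nonneg B hh0
  have hinv : ∀ x y, q (updateFinset x B y) / c (updateFinset x B y) = q x / c x :=
    fun x y => by simp only [q, c, marginal_updateFinset]
  have hmeas : AEStronglyMeasurable (fun x => q x / c x) (Measure.pi P) :=
    ((integrable_marginal B hg).aemeasurable.div
      (integrable_marginal B hh).aemeasurable).aestronglyMeasurable
  have hle : ∀ x, c x * (q x / c x) ≤ q x := fun x => by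
    rcases eq_or_ne (c x) 0 with hc | hc
    · simpa [hc] using hq0 x
    · rw [mul_div_cancel₀ _ hc]
  have hcqc : Integrable (fun x => c x * (q x / c x)) (Measure.pi P) := by
    refine (integrable_marginal B hg).mono
      ((integrable_marginal B hh).aestronglyMeasurable.mul hmeas) (Eventually.of_forall fun x => ?_)
    rw [Real.norm_of_nonneg (mul_nonneg (hc0 x) (div_nonneg (hq0 x) (hc0 x))),
      Real.norm_of_nonneg (hq0 x)]
    exact hle x
  have hhqc := integrable_mul_of_integrable_marginal_mul hinv hmeas hh0 hh hcqc
  refine ⟨hhqc, ?_⟩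
  rw [← integral_marginal_mul hinv hhqc, ← integral_marginal B hg]
  exact integral_mono hcqc (integrable_marginal B hg) hle

theorem expectedEnt_marginal_le {B C : Finset ι} (hBC : Disjoint B C) {g : (∀ i, Ω i) → ℝ}
    (hg0 : ∀ z, 0 ≤ g z) (hgm : Measurable g) (hg : Integrable g (Measure.pi P))
    (hgl : Integrable (fun z => g z * log (g z)) (Measure.pi P)) :
    expectedEnt P B (marginal P C g) ≤ expectedEnt P B g := by
  set h := marginal P C g
  set q := marginal P B g
  set c := marginal P B h
  have hh0 : ∀ z, 0 ≤ h z := marginal_nonneg C hg0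
  have hh : Integrable h (Measure.pi P) := integrable_marginal C hg
  obtain ⟨hhqc, hhqc_le⟩ := integrable_and_integral_mul_marginal_div_marginal_le B hg0 hg hh0 hh
  have hglh : Integrable (fun x => g x * log (h x)) (Measure.pi P) :=
    integrable_mul_log_marginal C hg0 hg hgl
  have hglq : Integrable (fun x => g x * log (q x)) (Measure.pi P) :=
    integrable_mul_log_marginal B hg0 hg hgl
  have hglc : Integrable (fun x => g x * log (c x)) (Measure.pi P) :=
    integrable_mul_log_marginal_marginal hBC hg0 hg hgl
  have hpt : ∀ᵐ x ∂Measure.pi P, g x * log (h x) - g x * log (c x)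
      ≤ g x * log (g x) - g x * log (q x) - g x + h x * (q x / c x) := by
    filter_upwards [ae_eq_zero_of_marginal_eq_zero C hg0 hgm hg,
      ae_eq_zero_of_marginal_eq_zero B hh0 (measurable_marginal C hgm) hh,
      ae_eq_zero_of_marginal_eq_zero B hg0 hgm hg] with x hgh hhc hgq
    exact mul_log_sub_mul_log_le (hg0 x) (hh0 x) (marginal_nonneg B hh0 x)
      (marginal_nonneg B hg0 x) hgh hhc hgq
  have hI1 : Integrable (fun x => g x * log (g x) - g x * log (q x)) (Measure.pi P) :=
    hgl.sub hglq
  have hI2 : Integrable (fun x => g x * log (g x) - g x * log (q x) - g x) (Measure.pi P) :=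
    hI1.sub hg
  have hmono : ∫ x, (g x * log (h x) - g x * log (c x)) ∂Measure.pi P
      ≤ ∫ x, (g x * log (g x) - g x * log (q x) - g x + h x * (q x / c x)) ∂Measure.pi P :=
    integral_mono_ae (hglh.sub hglc) (hI2.add hhqc) hpt
  rw [integral_sub hglh hglc, integral_add hI2 hhqc, integral_sub hI1 hg,
    integral_sub hgl hglq] at hmono
  rw [expectedEnt, expectedEnt, ← integral_mul_log_marginal C hg0 hg hgl,
    ← integral_mul_log_marginal_marginal hBC hg0 hg hgl,
    ← integral_mul_log_marginal B hg0 hg hgl]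
  linarith

theorem expectedEnt_empty (k : (∀ i, Ω i) → ℝ) : expectedEnt P ∅ k = 0 := by
  rw [expectedEnt, marginal_empty, sub_self]

theorem expectedEnt_univ {k : (∀ i, Ω i) → ℝ} (hk : Integrable k (Measure.pi P)) :
    expectedEnt P univ k = ent (Measure.pi P) k := by
  simp only [expectedEnt, ent, marginal_univ hk, integral_const, probReal_univ, one_smul]

theorem monotone_expectedEnt {k : (∀ i, Ω i) → ℝ} (hk0 : ∀ z, 0 ≤ k z)
    (hkm : Measurable k) (hk : Integrable k (Measure.pi P))
    (hkl : Integrable (fun z => k z * log (k z)) (Measure.pi P)) :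
    Monotone fun A => expectedEnt P A k := by
  intro A A' hAA'
  have hsplit := expectedEnt_union (P := P) sdiff_disjoint hk hkm (B := A' \ A) (C := A)
  rw [sdiff_union_of_subset hAA'] at hsplit
  simp only [hsplit, le_add_iff_nonneg_right]
  exact expectedEnt_nonneg _ (marginal_nonneg A hk0) (integrable_marginal A hk)
    (integrable_marginal_mul_log A hk0 hk hkl)

theorem expectedEnt_insert_sub_le {k : (∀ i, Ω i) → ℝ} (hk0 : ∀ z, 0 ≤ k z)
    (hkm : Measurable k) (hk : Integrable k (Measure.pi P))
    (hkl : Integrable (fun z => k z * log (k z)) (Measure.pi P))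
    {S T : Finset ι} {i : ι} (hST : S ⊆ T) (hiT : i ∉ T) :
    expectedEnt P (insert i T) k - expectedEnt P T k
      ≤ expectedEnt P (insert i S) k - expectedEnt P S k := by
  have hgain : ∀ U, i ∉ U →
      expectedEnt P (insert i U) k - expectedEnt P U k = expectedEnt P {i} (marginal P U k) :=
    fun U hiU => by
      rw [insert_eq, expectedEnt_union (disjoint_singleton_left.2 hiU) hk hkm]
      ring
  have hT : marginal P T k =ᵐ[Measure.pi P] marginal P (T \ S) (marginal P S k) := by
    have h := marginal_union (P := P) sdiff_disjoint hk hkm (B := T \ S) (C := S)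
    rwa [sdiff_union_of_subset hST] at h
  rw [hgain T hiT, hgain S fun h => hiT (hST h), expectedEnt_congr_ae {i} hT]
  exact expectedEnt_marginal_le (disjoint_singleton_left.2 fun h => hiT (mem_sdiff.1 h).1)
    (marginal_nonneg S hk0) (measurable_marginal S hkm) (integrable_marginal S hk)
    (integrable_marginal_mul_log S hk0 hk hkl)

end Marginal

section CoordSigma

variable {n : ℕ} {Ω : Fin n → Type*} [∀ i, MeasurableSpace (Ω i)]

theorem coordSigma_le (A : Finset (Fin n)) : coordSigma Ω A ≤ MeasurableSpace.pi :=
  iSup₂_le fun i _ => (measurable_pi_apply i).comap_le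

theorem coordSigma_eq_comap_updateFinset (A : Finset (Fin n)) (y₀ : ∀ j : A, Ω j) :
    coordSigma Ω A
      = MeasurableSpace.comap (fun x => updateFinset x A y₀) MeasurableSpace.pi := by
  apply le_antisymm
  · refine iSup₂_le fun i hi => ?_
    have hiA : i ∉ A := (mem_sdiff.1 hi).2
    have hcomp : (fun x : ∀ i, Ω i => x i)
        = (fun x => x i) ∘ fun x => updateFinset x A y₀ := by
      ext x
      simp [updateFinset, hiA]
    rw [hcomp, ← MeasurableSpace.comap_comp]
    exact MeasurableSpace.comap_mono (measurable_pi_apply i).comap_le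
  · have hU : Measurable[coordSigma Ω A] fun x => updateFinset x A y₀ := by
      refine (@measurable_pi_iff _ _ Ω (coordSigma Ω A) _ _).2 fun i => ?_
      by_cases hi : i ∈ A
      · simp only [updateFinset, hi, dif_pos]
        exact measurable_const
      · simp only [updateFinset, hi, dif_neg, not_false_iff]
        exact Measurable.of_comap_le (le_iSup₂ (f := fun i (_ : i ∈ univ \ A) =>
          MeasurableSpace.comap (fun x : ∀ i, Ω i => x i) inferInstance) i (by simp [hi]))
    exact hU.comap_le

variable {P : ∀ i, Measure (Ω i)} [∀ i, IsProbabilityMeasure (P i)]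

theorem condExp_coordSigma_ae_eq_marginal (A : Finset (Fin n)) {k : (∀ i, Ω i) → ℝ}
    (hkm : Measurable k) (hk : Integrable k (Measure.pi P)) :
    condExp (coordSigma Ω A) (Measure.pi P) k =ᵐ[Measure.pi P] marginal P A k := by
  have hle := coordSigma_le (Ω := Ω) A
  have : ∀ i, Nonempty (Ω i) := fun i => nonempty_of_isProbabilityMeasure (P i)
  obtain ⟨y₀⟩ : Nonempty (∀ j : A, Ω j) := inferInstance
  have hA := coordSigma_eq_comap_updateFinset A y₀
  refine (ae_eq_condExp_of_forall_setIntegral_eq hle hk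
    (fun s _ _ => (integrable_marginal A hk).integrableOn) (fun s hs _ => ?_) ?_).symm
  · have hsA : ∀ x y, updateFinset x A y ∈ s ↔ x ∈ s := by
      rw [hA] at hs
      obtain ⟨t, -, rfl⟩ := hs
      intro x y
      simp only [Set.mem_preimage, updateFinset_updateFinset_of_subset subset_rfl]
    exact setIntegral_marginal A (hle s hs) hsA hk
  · have hfactor : marginal P A k = marginal P A k ∘ fun x => updateFinset x A y₀ :=
      funext fun x => (marginal_updateFinset A k x y₀).symm
    have hU : Measurable[coordSigma Ω A] fun x => updateFinset x A y₀ :=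
      Measurable.of_comap_le hA.ge
    rw [hfactor]
    exact ((measurable_marginal A hkm).comp hU).aestronglyMeasurable

theorem integral_condEnt_eq_expectedEnt (A : Finset (Fin n)) {f : (∀ i, Ω i) → ℝ}
    (hf0 : ∀ x, 0 ≤ f x) (hfm : Measurable f) (hf : Integrable f (Measure.pi P))
    (hfl : Integrable (fun x => f x * log (f x)) (Measure.pi P)) :
    ∫ x, condEnt (Measure.pi P) A f x ∂Measure.pi P = expectedEnt P A f := by
  have hle := coordSigma_le (Ω := Ω) A
  have : IsFiniteMeasure ((Measure.pi P).trim hle) := isFiniteMeasure_trim hle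
  have hE := condExp_coordSigma_ae_eq_marginal A hfm hf
  calc ∫ x, condEnt (Measure.pi P) A f x ∂Measure.pi P
      = ∫ x, ((condExp (coordSigma Ω A) (Measure.pi P) fun y => f y * log (f y)) x
          - marginal P A f x * log (marginal P A f x)) ∂Measure.pi P := by
        refine integral_congr_ae ?_
        filter_upwards [hE] with x hx
        simp only [condEnt, hx]
    _ = expectedEnt P A f := by
        rw [integral_sub integrable_condExp (integrable_marginal_mul_log A hf0 hf hfl),
          integral_condExp hle, expectedEnt]

end CoordSigma

end Shearer

end

theorem stmt_6_general {n : ℕ} (Ω : Fin n → Type*) [∀ i, MeasurableSpace (Ω i)]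
    (P : ∀ i, Measure (Ω i)) [∀ i, IsProbabilityMeasure (P i)]
    (θ : Finset (Fin n) → ℝ) (hθ0 : ∀ A, 0 ≤ θ A)
    (f : (∀ i, Ω i) → ℝ) (hf : Measurable f) (hf0 : ∀ x, 0 ≤ f x)
    (hfint : Integrable f (Measure.pi P))
    (hflog : Integrable (fun x => |f x * Real.log (f x)|) (Measure.pi P)) :
    (⨅ i : Fin n, ∑ A ∈ Finset.univ.filter (fun A => i ∈ A), θ A) * ent (Measure.pi P) f
      ≤ ∑ A : Finset (Fin n), θ A * ∫ x, condEnt (Measure.pi P) A f x ∂(Measure.pi P) := by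
  have hfl : Integrable (fun x => f x * Real.log (f x)) (Measure.pi P) :=
    (integrable_norm_iff (hf.mul (Real.measurable_log.comp hf)).aestronglyMeasurable).1 hflog
  have h := Shearer.iInf_mul_sub_le_sum_mul_sub (fun A => Shearer.expectedEnt P A f)
    (Shearer.monotone_expectedEnt hf0 hf hfint hfl)
    (fun _ _ _ hST hiT => Shearer.expectedEnt_insert_sub_le hf0 hf hfint hfl hST hiT) θ hθ0
  simpa only [Shearer.expectedEnt_empty, sub_zero, Shearer.expectedEnt_univ hfint,
    Shearer.integral_condEnt_eq_expectedEnt _ hf0 hf hfint hfl] using h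

/-- Shearer's inequality on a product probability space: for nonnegative weights
`(θ_A)` summing to `1` and any nonnegative `f ∈ L log L`,
`θ⋆ Ent(f) ≤ ∑_A θ_A E[Ent_A(f)]` with `θ⋆ = min_i ∑_{A ∋ i} θ_A`. -/
theorem stmt_6 {n : ℕ} (hn : 0 < n) (Ω : Fin n → Type*) [∀ i, MeasurableSpace (Ω i)]
    (P : ∀ i, Measure (Ω i)) [∀ i, IsProbabilityMeasure (P i)]
    (θ : Finset (Fin n) → ℝ) (hθ0 : ∀ A, 0 ≤ θ A) (hθ1 : ∑ A, θ A = 1)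
    (f : (∀ i, Ω i) → ℝ) (hf : Measurable f) (hf0 : ∀ x, 0 ≤ f x)
    (hfint : Integrable f (Measure.pi P))
    (hflog : Integrable (fun x => |f x * Real.log (f x)|) (Measure.pi P)) :
    (⨅ i : Fin n, ∑ A ∈ Finset.univ.filter (fun A => i ∈ A), θ A) * ent (Measure.pi P) f
      ≤ ∑ A : Finset (Fin n), θ A * ∫ x, condEnt (Measure.pi P) A f x ∂(Measure.pi P) :=
  stmt_6_general Ω P θ hθ0 f hf hf0 hfint hflog
end

section
/- In the product-space setting with Hamming distance, for any probability vector (θ_A)_{A⊆[n]}, one has ∑_{A⊆[n]} θ_A W₁(T_A(x,·), T_A(y,·)) ≤ (1 − θ⋆) dist(x,y) for all x,y, where θ⋆ := min_{1≤i≤n} ∑_{A∋i} θ_A, dist is the Hamming distance, and W₁ is the L¹-Wasserstein distance for this metric. -/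
open MeasureTheory ProbabilityTheory
open scoped BigOperators Classical

/-- Hamming distance on a product space. -/
noncomputable def hammDist {n : ℕ} {Ω : Fin n → Type*} (x y : ∀ i, Ω i) : ℕ :=
  (Finset.univ.filter (fun i => x i ≠ y i)).card

/-- The resampling kernel `T_A(x,·)`: the law of the vector obtained from `x` by replacing
`x_i` with an independent sample `Z_i ∼ P_i` for each `i ∈ A`. -/
noncomputable def resampleKernel {n : ℕ} {Ω : Fin n → Type*} [∀ i, MeasurableSpace (Ω i)]
    (P : ∀ i, Measure (Ω i)) (A : Finset (Fin n)) (x : ∀ i, Ω i) : Measure (∀ i, Ω i) :=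
  (Measure.pi P).map (fun z i => if i ∈ A then z i else x i)

/-- In the product-space setting with the Hamming distance, for any probability vector
`(θ_A)`, one has `∑_A θ_A W₁(T_A(x,·),T_A(y,·)) ≤ (1-θ⋆) dist(x,y)` with
`θ⋆ = min_i ∑_{A ∋ i} θ_A`: there exist couplings `π_A` of `T_A(x,·)` and `T_A(y,·)` with
`∑_A θ_A ∫ dist dπ_A ≤ (1-θ⋆) dist(x,y)`. -/
theorem stmt_8 {n : ℕ} (hn : 0 < n) (Ω : Fin n → Type*) [∀ i, MeasurableSpace (Ω i)]
    (P : ∀ i, Measure (Ω i)) [∀ i, IsProbabilityMeasure (P i)]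
    (θ : Finset (Fin n) → ℝ) (hθ0 : ∀ A, 0 ≤ θ A) (hθ1 : ∑ A, θ A = 1)
    (x y : ∀ i, Ω i) :
    ∃ π : Finset (Fin n) → Measure ((∀ i, Ω i) × (∀ i, Ω i)),
      (∀ A, IsProbabilityMeasure (π A)) ∧
      (∀ A, (π A).map Prod.fst = resampleKernel P A x) ∧
      (∀ A, (π A).map Prod.snd = resampleKernel P A y) ∧
      ∑ A : Finset (Fin n), θ A * ∫ p, (hammDist p.1 p.2 : ℝ) ∂(π A)
        ≤ (1 - ⨅ i : Fin n, ∑ A ∈ Finset.univ.filter (fun A => i ∈ A), θ A)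
            * (hammDist x y : ℝ) := by
  classical
  set μ := Measure.pi P with hμ
  set D : Finset (Fin n) := Finset.univ.filter (fun i => x i ≠ y i) with hD
  have hφmeas : ∀ (w : ∀ i, Ω i) (A : Finset (Fin n)),
      Measurable (fun z : ∀ i, Ω i => fun i => if i ∈ A then z i else w i) := by
    intro w A
    apply measurable_pi_lambda
    intro i
    by_cases h : i ∈ A
    · simpa [h] using measurable_pi_apply i
    · simpa [h] using measurable_const
  set Φ : Finset (Fin n) → (∀ i, Ω i) → ((∀ i, Ω i) × (∀ i, Ω i)) :=
    fun A z => ((fun i => if i ∈ A then z i else x i),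
                (fun i => if i ∈ A then z i else y i)) with hΦ
  have hΦmeas : ∀ A, Measurable (Φ A) := fun A => (hφmeas x A).prodMk (hφmeas y A)
  have hconst : ∀ (A : Finset (Fin n)) (z : ∀ i, Ω i),
      (hammDist (Φ A z).1 (Φ A z).2 : ℝ) = ((D \ A).card : ℝ) := by
    intro A z
    congr 1
    unfold hammDist
    congr 1
    ext i
    by_cases h : i ∈ A <;> simp [hΦ, h, hD]
  set s : Fin n → ℝ := fun i => ∑ A ∈ Finset.univ.filter (fun A => i ∈ A), θ A with hs
  have hsle : ∀ i, (⨅ i, s i) ≤ s i := fun i =>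
    ciInf_le (Set.Finite.bddBelow (Set.finite_range s)) i
  refine ⟨fun A => μ.map (Φ A), ?_, ?_, ?_, ?_⟩
  · intro A; exact Measure.isProbabilityMeasure_map (hΦmeas A).aemeasurable
  · intro A
    rw [Measure.map_map measurable_fst (hΦmeas A)]
    rfl
  · intro A
    rw [Measure.map_map measurable_snd (hΦmeas A)]
    rfl
  · have hIA : ∀ A : Finset (Fin n),
        ∫ p, (hammDist p.1 p.2 : ℝ) ∂(μ.map (Φ A)) ≤ ((D \ A).card : ℝ) := by
      intro A
      by_cases h : Integrable (fun p : (∀ i, Ω i) × (∀ i, Ω i) =>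
          (hammDist p.1 p.2 : ℝ)) (μ.map (Φ A))
      · rw [integral_map (hΦmeas A).aemeasurable h.aestronglyMeasurable]
        have : (fun z => (hammDist (Φ A z).1 (Φ A z).2 : ℝ))
            = fun _ => ((D \ A).card : ℝ) := funext (hconst A)
        rw [this, integral_const]
        simp
      · rw [integral_undef h]
        positivity
    calc ∑ A : Finset (Fin n), θ A * ∫ p, (hammDist p.1 p.2 : ℝ) ∂(μ.map (Φ A))
        ≤ ∑ A : Finset (Fin n), θ A * ((D \ A).card : ℝ) := by
          apply Finset.sum_le_sum
          intro A _
          exact mul_le_mul_of_nonneg_left (hIA A) (hθ0 A)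
      _ = ∑ i ∈ D, (1 - s i) := by
          have hcard : ∀ A : Finset (Fin n),
              ((D \ A).card : ℝ) = ∑ i ∈ D, if i ∈ A then (0:ℝ) else 1 := by
            intro A
            rw [Finset.sum_ite, Finset.sum_const, Finset.sum_const]
            simp [Finset.sdiff_eq_filter]
          simp_rw [hcard, Finset.mul_sum]
          rw [Finset.sum_comm]
          apply Finset.sum_congr rfl
          intro i _
          have hsplit := Finset.sum_filter_add_sum_filter_not Finset.univ
            (fun A : Finset (Fin n) => i ∈ A) θ
          rw [hθ1] at hsplit
          have : ∑ A : Finset (Fin n), θ A * (if i ∈ A then (0:ℝ) else 1)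
              = ∑ A ∈ Finset.univ.filter (fun A : Finset (Fin n) => ¬ i ∈ A), θ A := by
            rw [Finset.sum_filter]
            apply Finset.sum_congr rfl
            intro A _
            by_cases h : i ∈ A <;> simp [h]
          rw [this, ← hsplit]
          simp [hs]
      _ ≤ ∑ i ∈ D, (1 - ⨅ i, s i) := by
          apply Finset.sum_le_sum
          intro i _
          linarith [hsle i]
      _ = (1 - ⨅ i, s i) * (hammDist x y : ℝ) := by
          rw [Finset.sum_const, nsmul_eq_mul, mul_comm]
          rfl
end

section
/- Let P be an irreducible symmetric substochastic n×n matrix (P_{ij} ≥ 0, ∑_j P_{ij} ≤ 1) with Id − P invertible, and Δ = Id − P, Γ = Δ^{−1}. Then for any A ⊆ [n], the matrix Id − M_Aᵀ has nonnegative entries, where M_A is defined blockwise from Γ as (M_A)_{A×A} = Id, (M_A)_{A×Aᶜ} = −Γ_{A×Aᶜ}(Γ_{Aᶜ×Aᶜ})^{−1}, zero elsewhere. In particular, (Γ_{Aᶜ×Aᶜ})^{−1} Γ_{Aᶜ×A} = −Δ_{Aᶜ×A}(Δ_{A×A})^{−1}, and (Δ_{A×A})^{−1} = ∑_{k≥0}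 (P_{A×A})^k has nonnegative entries. -/
open MeasureTheory Matrix
open scoped BigOperators Classical

section AuxLemmas

lemma my_neumann {ι : Type*} [Fintype ι] [DecidableEq ι] (Q : Matrix ι ι ℝ)
    (hQ : Q.IsHermitian) (heig : ∀ i, |hQ.eigenvalues i| < 1) :
    Summable (fun k : ℕ => Q ^ k) ∧ (1 - Q) * (∑' k : ℕ, Q ^ k) = 1 ∧
      (∑' k : ℕ, Q ^ k) * (1 - Q) = 1 := by
  set U : Matrix ι ι ℝ := (hQ.eigenvectorUnitary : Matrix ι ι ℝ) with hUdef
  set d : ι → ℝ := hQ.eigenvalues with hddef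
  have hUU : U * star U = 1 := Matrix.mem_unitaryGroup_iff.mp hQ.eigenvectorUnitary.2
  have hUU' : star U * U = 1 := Matrix.mem_unitaryGroup_iff'.mp hQ.eigenvectorUnitary.2
  have hspec : Q = U * diagonal d * star U := by
    have := hQ.spectral_theorem
    simpa using this
  have hmul : ∀ a b : ι → ℝ, (U * diagonal a * star U) * (U * diagonal b * star U)
      = U * diagonal (fun i => a i * b i) * star U := by
    intro a b
    calc (U * diagonal a * star U) * (U * diagonal b * star U)
        = U * (diagonal a * ((star U * U) * (diagonal b * star U))) := by
          simp only [mul_assoc]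
      _ = U * (diagonal a * diagonal b * star U) := by rw [hUU', one_mul, mul_assoc]
      _ = U * diagonal (fun i => a i * b i) * star U := by
          rw [diagonal_mul_diagonal, mul_assoc]
  have hpow : ∀ k : ℕ, Q ^ k = U * diagonal (fun i => d i ^ k) * star U := by
    intro k
    induction k with
    | zero =>
      simp only [pow_zero]
      rw [show (diagonal fun i : ι => (1:ℝ)) = 1 from diagonal_one, mul_one, hUU]
    | succ k ih =>
      rw [pow_succ, ih, hspec, hmul]
      simp only [← pow_succ]
  have hentry : ∀ (k : ℕ) (i j : ι), (Q ^ k) i j = ∑ l, d l ^ k * (U i l * U j l) := by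
    intro k i j
    rw [hpow k, Matrix.mul_apply]
    simp only [Matrix.mul_diagonal, Matrix.star_apply, star_trivial]
    exact Finset.sum_congr rfl fun l _ => by ring
  have hTentry : ∀ i j : ι, (U * diagonal (fun i => (1 - d i)⁻¹) * star U) i j
      = ∑ l, (1 - d l)⁻¹ * (U i l * U j l) := by
    intro i j
    rw [Matrix.mul_apply]
    simp only [Matrix.mul_diagonal, Matrix.star_apply, star_trivial]
    exact Finset.sum_congr rfl fun l _ => by ring
  have hhs : HasSum (fun k : ℕ => Q ^ k) (U * diagonal (fun i => (1 - d i)⁻¹) * star U) := by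
    refine Pi.hasSum.mpr ?_; intro i; refine Pi.hasSum.mpr ?_; intro j
    rw [hTentry]
    simp only [hentry]
    refine hasSum_sum fun l _ => ?_
    exact (hasSum_geometric_of_norm_lt_one (by simpa [Real.norm_eq_abs] using heig l)).mul_right (U i l * U j l)
  have hT : (∑' k : ℕ, Q ^ k) = U * diagonal (fun i => (1 - d i)⁻¹) * star U := hhs.tsum_eq
  have h1Q : (1 : Matrix ι ι ℝ) - Q = U * diagonal (fun i => 1 - d i) * star U := by
    have : diagonal (fun i : ι => 1 - d i) = 1 - diagonal d := by
      rw [← diagonal_one, diagonal_sub]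
    rw [this, mul_sub, sub_mul, mul_one, hUU, ← hspec]
  have hne : ∀ i, (1 : ℝ) - d i ≠ 0 := fun i => by
    have := abs_lt.mp (heig i); intro h; linarith [this.2]
  have hdiag1 : (diagonal fun i => (1 - d i) * (1 - d i)⁻¹) = (1 : Matrix ι ι ℝ) := by
    rw [show (fun i => (1 - d i) * (1 - d i)⁻¹) = fun _ : ι => (1:ℝ) from
      funext fun i => mul_inv_cancel₀ (hne i), diagonal_one]
  have hdiag2 : (diagonal fun i => (1 - d i)⁻¹ * (1 - d i)) = (1 : Matrix ι ι ℝ) := by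
    rw [show (fun i => (1 - d i)⁻¹ * (1 - d i)) = fun _ : ι => (1:ℝ) from
      funext fun i => inv_mul_cancel₀ (hne i), diagonal_one]
  refine ⟨hhs.summable, ?_, ?_⟩
  · rw [hT, h1Q, hmul, hdiag1, mul_one, hUU]
  · rw [hT, h1Q, hmul, hdiag2, mul_one, hUU]

lemma my_noFixed {n : ℕ} (P : Matrix (Fin n) (Fin n) ℝ)
    (hsymm : Pᵀ = P) (hnonneg : ∀ i j, 0 ≤ P i j)
    (hsub : ∀ i, ∑ j, P i j ≤ 1) (hinv : IsUnit (1 - P).det)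
    (A : Finset (Fin n)) (z : {k : Fin n // k ∈ A} → ℝ) (hz : ∀ i, 0 ≤ z i)
    (hfix : (P.submatrix (Subtype.val : {k : Fin n // k ∈ A} → Fin n) Subtype.val) *ᵥ z = z) :
    z = 0 := by
  set Q := P.submatrix (Subtype.val : {k : Fin n // k ∈ A} → Fin n) Subtype.val with hQdef
  have hPsym : ∀ i j, P i j = P j i := fun i j => congrFun (congrFun hsymm j) i
  -- column sums of Q are ≤ 1
  have hcol : ∀ j : {k : Fin n // k ∈ A}, ∑ i, Q i j ≤ 1 := by
    intro j
    have h1 : ∑ i : {k : Fin n // k ∈ A}, Q i j = ∑ i ∈ A, P i j.1 :=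
      (Finset.sum_subtype A (fun x => Iff.rfl) (fun i => P i j.1)).symm
    have h2 : ∑ i ∈ A, P i j.1 ≤ ∑ i, P i j.1 :=
      Finset.sum_le_sum_of_subset_of_nonneg (Finset.subset_univ A)
        (fun i _ _ => hnonneg i j.1)
    have h3 : ∑ i, P i j.1 = ∑ i, P j.1 i :=
      Finset.sum_congr rfl fun i _ => hPsym i j.1
    calc ∑ i : {k : Fin n // k ∈ A}, Q i j = ∑ i ∈ A, P i j.1 := h1
      _ ≤ ∑ i, P i j.1 := h2
      _ = ∑ i, P j.1 i := h3
      _ ≤ 1 := hsub j.1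
  have hzero : ∀ k, (1 - ∑ i, Q i k) * z k = 0 := by
    have hsumeq : ∑ k, z k = ∑ k, (∑ i, Q i k) * z k := by
      conv_lhs => rw [← hfix]
      simp only [Matrix.mulVec, dotProduct]
      rw [Finset.sum_comm]
      exact Finset.sum_congr rfl fun k _ => by rw [Finset.sum_mul]
    have hsum0 : ∑ k, (1 - ∑ i, Q i k) * z k = 0 := by
      simp only [sub_mul, one_mul, Finset.sum_sub_distrib]
      rw [← hsumeq]
      ring
    have hnn : ∀ k ∈ Finset.univ, 0 ≤ (1 - ∑ i, Q i k) * z k := fun k _ =>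
      mul_nonneg (by linarith [hcol k]) (hz k)
    intro k
    exact (Finset.sum_eq_zero_iff_of_nonneg hnn).mp hsum0 k (Finset.mem_univ k)
  have hout : ∀ (j : {k : Fin n // k ∈ A}) (i : Fin n), i ∉ A → z j ≠ 0 → P i j.1 = 0 := by
    intro j i hiA hzj
    have hc1 : ∑ l, Q l j = 1 := by
      rcases mul_eq_zero.mp (hzero j) with h | h
      · linarith [h]
      · exact absurd h hzj
    have h1 : ∑ l : {k : Fin n // k ∈ A}, Q l j = ∑ l ∈ A, P l j.1 :=
      (Finset.sum_subtype A (fun x => Iff.rfl) (fun l => P l j.1)).symm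
    have h2 : ∑ l ∈ A, P l j.1 + ∑ l ∈ Aᶜ, P l j.1 = ∑ l, P l j.1 :=
      Finset.sum_add_sum_compl A _
    have h3 : ∑ l, P l j.1 ≤ 1 := by
      calc ∑ l, P l j.1 = ∑ l, P j.1 l := Finset.sum_congr rfl fun l _ => hPsym l j.1
        _ ≤ 1 := hsub j.1
    have h4 : ∑ l ∈ Aᶜ, P l j.1 ≤ 0 := by
      rw [h1] at hc1; linarith [hc1, h2, h3]
    have h5 : ∀ l ∈ Aᶜ, 0 ≤ P l j.1 := fun l _ => hnonneg l j.1
    have h6 : ∑ l ∈ Aᶜ, P l j.1 = 0 := le_antisymm h4 (Finset.sum_nonneg h5)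
    exact (Finset.sum_eq_zero_iff_of_nonneg h5).mp h6 i (Finset.mem_compl.mpr hiA)
  set u : Fin n → ℝ := fun x => if hx : x ∈ A then z ⟨x, hx⟩ else 0 with hudef
  have hPu : P *ᵥ u = u := by
    funext x
    have hsplit : (P *ᵥ u) x = ∑ y ∈ A, P x y * u y + ∑ y ∈ Aᶜ, P x y * u y := by
      rw [Matrix.mulVec, dotProduct, ← Finset.sum_add_sum_compl A]
    have hB0 : ∑ y ∈ Aᶜ, P x y * u y = 0 := by
      refine Finset.sum_eq_zero fun y hy => ?_
      have : y ∉ A := Finset.mem_compl.mp hy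
      simp [hudef, this]
    have hA' : ∑ y ∈ A, P x y * u y = ∑ y : {k : Fin n // k ∈ A}, P x y.1 * z y := by
      rw [Finset.sum_subtype A (fun x => Iff.rfl) (fun y => P x y * u y)]
      exact Finset.sum_congr rfl fun y _ => by simp [hudef, y.2]
    by_cases hx : x ∈ A
    · have : (P *ᵥ u) x = (Q *ᵥ z) ⟨x, hx⟩ := by
        rw [hsplit, hB0, add_zero, hA']
        rfl
      rw [this, hfix]
      simp [hudef, hx]
    · have : (P *ᵥ u) x = 0 := by
        rw [hsplit, hB0, add_zero, hA']
        refine Finset.sum_eq_zero fun y _ => ?_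
        by_cases hzy : z y = 0
        · rw [hzy, mul_zero]
        · rw [hout y x hx hzy, zero_mul]
      rw [this]
      simp [hudef, hx]
  have hu0 : u = 0 := by
    have hDu : (1 - P) *ᵥ u = 0 := by
      rw [Matrix.sub_mulVec, Matrix.one_mulVec, hPu, sub_self]
    have := congrArg (fun w => (1 - P)⁻¹ *ᵥ w) hDu
    simpa [Matrix.mulVec_mulVec, Matrix.nonsing_inv_mul _ hinv] using this
  funext k
  have : u k.1 = 0 := by rw [hu0]; rfl
  simpa [hudef, k.2] using this

lemma my_noFixed2 {n : ℕ} (P : Matrix (Fin n) (Fin n) ℝ)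
    (hsymm : Pᵀ = P) (hnonneg : ∀ i j, 0 ≤ P i j)
    (hsub : ∀ i, ∑ j, P i j ≤ 1) (hinv : IsUnit (1 - P).det)
    (A : Finset (Fin n)) (v : {k : Fin n // k ∈ A} → ℝ)
    (hfix : (P.submatrix (Subtype.val : {k : Fin n // k ∈ A} → Fin n) Subtype.val) *ᵥ
      ((P.submatrix (Subtype.val : {k : Fin n // k ∈ A} → Fin n) Subtype.val) *ᵥ v) = v) :
    v = 0 := by
  set Q := P.submatrix (Subtype.val : {k : Fin n // k ∈ A} → Fin n) Subtype.val with hQdef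
  have hQnn : ∀ i j, 0 ≤ Q i j := fun i j => hnonneg i.1 j.1
  have hQ2nn : ∀ i j, 0 ≤ (Q * Q) i j := fun i j =>
    Finset.sum_nonneg fun l _ => mul_nonneg (hQnn i l) (hQnn l j)
  set x : {k : Fin n // k ∈ A} → ℝ := fun i => |v i| with hxdef
  have hxnn : ∀ i, 0 ≤ x i := fun i => abs_nonneg _
  have hfix' : (Q * Q) *ᵥ v = v := by rw [← Matrix.mulVec_mulVec]; exact hfix
  have hge : ∀ i, x i ≤ ((Q * Q) *ᵥ x) i := by
    intro i
    have h1 : x i = |((Q * Q) *ᵥ v) i| := by rw [hfix']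
    have h2 : |((Q * Q) *ᵥ v) i| ≤ ∑ k, (Q * Q) i k * x k := by
      rw [Matrix.mulVec, dotProduct]
      calc |∑ k, (Q * Q) i k * v k| ≤ ∑ k, |(Q * Q) i k * v k| :=
            Finset.abs_sum_le_sum_abs _ _
        _ = ∑ k, (Q * Q) i k * x k := Finset.sum_congr rfl fun k _ => by
            rw [abs_mul, abs_of_nonneg (hQ2nn i k)]
    rw [h1]
    exact h2.trans_eq rfl
  have hPsym : ∀ i j, P i j = P j i := fun i j => congrFun (congrFun hsymm j) i
  have hcolQ : ∀ j, ∑ i, Q i j ≤ 1 := by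
    intro j
    have h1 : ∑ i : {k : Fin n // k ∈ A}, Q i j = ∑ i ∈ A, P i j.1 :=
      (Finset.sum_subtype A (fun x => Iff.rfl) (fun i => P i j.1)).symm
    calc ∑ i : {k : Fin n // k ∈ A}, Q i j = ∑ i ∈ A, P i j.1 := h1
      _ ≤ ∑ i, P i j.1 := Finset.sum_le_sum_of_subset_of_nonneg (Finset.subset_univ A)
          (fun i _ _ => hnonneg i j.1)
      _ = ∑ i, P j.1 i := Finset.sum_congr rfl fun i _ => hPsym i j.1
      _ ≤ 1 := hsub j.1
  have hcolQ2 : ∀ j, ∑ i, (Q * Q) i j ≤ 1 := by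
    intro j
    have : ∑ i, (Q * Q) i j = ∑ l, (∑ i, Q i l) * Q l j := by
      simp only [Matrix.mul_apply]
      rw [Finset.sum_comm]
      exact Finset.sum_congr rfl fun l _ => by rw [Finset.sum_mul]
    rw [this]
    calc ∑ l, (∑ i, Q i l) * Q l j ≤ ∑ l, Q l j := by
          refine Finset.sum_le_sum fun l _ => ?_
          calc (∑ i, Q i l) * Q l j ≤ 1 * Q l j :=
                mul_le_mul_of_nonneg_right (hcolQ l) (hQnn l j)
            _ = Q l j := one_mul _
      _ ≤ 1 := hcolQ j
  have heq : (Q * Q) *ᵥ x = x := by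
    have hsum : ∑ i, (((Q * Q) *ᵥ x) i - x i) ≤ 0 := by
      have h1 : ∑ i, ((Q * Q) *ᵥ x) i = ∑ k, (∑ i, (Q * Q) i k) * x k := by
        simp only [Matrix.mulVec, dotProduct]
        rw [Finset.sum_comm]
        exact Finset.sum_congr rfl fun k _ => by rw [Finset.sum_mul]
      have h2 : ∑ k, (∑ i, (Q * Q) i k) * x k ≤ ∑ k, x k := by
        refine Finset.sum_le_sum fun k _ => ?_
        calc (∑ i, (Q * Q) i k) * x k ≤ 1 * x k :=
              mul_le_mul_of_nonneg_right (hcolQ2 k) (hxnn k)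
          _ = x k := one_mul _
      rw [Finset.sum_sub_distrib, h1]
      linarith
    have hnn : ∀ i ∈ Finset.univ, 0 ≤ ((Q * Q) *ᵥ x) i - x i := fun i _ => by
      linarith [hge i]
    have h0 : ∑ i, (((Q * Q) *ᵥ x) i - x i) = 0 :=
      le_antisymm hsum (Finset.sum_nonneg hnn)
    funext i
    have := (Finset.sum_eq_zero_iff_of_nonneg hnn).mp h0 i (Finset.mem_univ i)
    linarith
  set z : {k : Fin n // k ∈ A} → ℝ := x + Q *ᵥ x with hzdef
  have hQxnn : ∀ i, 0 ≤ (Q *ᵥ x) i := fun i =>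
    Finset.sum_nonneg fun l _ => mul_nonneg (hQnn i l) (hxnn l)
  have hznn : ∀ i, 0 ≤ z i := fun i => add_nonneg (hxnn i) (hQxnn i)
  have hzfix : Q *ᵥ z = z := by
    rw [hzdef, Matrix.mulVec_add, Matrix.mulVec_mulVec, heq, add_comm]
  have hz0 : z = 0 := my_noFixed P hsymm hnonneg hsub hinv A z hznn hzfix
  funext i
  have hzi : z i = 0 := by rw [hz0]; rfl
  have hx0 : x i = 0 := by
    have h1 := hxnn i
    have h2 := hQxnn i
    have h3 : x i + (Q *ᵥ x) i = 0 := hzi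
    linarith
  simpa [hxdef, abs_eq_zero] using hx0

lemma my_eig {ι : Type*} [Fintype ι] [DecidableEq ι] (Q : Matrix ι ι ℝ)
    (hQ : Q.IsHermitian) (hnn : ∀ i j, 0 ≤ Q i j) (hrow : ∀ i, ∑ j, Q i j ≤ 1)
    (h2 : ∀ v, Q *ᵥ (Q *ᵥ v) = v → v = 0) :
    ∀ i, |hQ.eigenvalues i| < 1 := by
  intro i
  set μ := hQ.eigenvalues i with hμ
  set v : ι → ℝ := ⇑(hQ.eigenvectorBasis i) with hv
  have hev : Q *ᵥ v = μ • v := hQ.mulVec_eigenvectorBasis i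
  have hvne : v ≠ 0 := by
    intro h
    apply hQ.eigenvectorBasis.orthonormal.ne_zero i
    ext x
    exact congrFun h x
  have habs : |μ| ≤ 1 := by
    obtain ⟨i0, -, hmax⟩ := Finset.exists_max_image Finset.univ (fun j => |v j|)
      ⟨i, Finset.mem_univ i⟩
    have hmax' : ∀ j, |v j| ≤ |v i0| := fun j => hmax j (Finset.mem_univ j)
    have hpos : 0 < |v i0| := by
      rcases (abs_nonneg (v i0)).lt_or_eq with h | h
      · exact h
      · exfalso; apply hvne; funext j
        have h1 := hmax' j
        have h2 : |v j| ≤ 0 := by rw [← h] at h1; exact h1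
        exact abs_eq_zero.mp (le_antisymm h2 (abs_nonneg _))
    have key : |μ| * |v i0| ≤ 1 * |v i0| := by
      calc |μ| * |v i0| = |μ * v i0| := (abs_mul _ _).symm
        _ = |(Q *ᵥ v) i0| := by rw [hev]; rfl
        _ ≤ ∑ j, |Q i0 j * v j| := by
            rw [Matrix.mulVec, dotProduct]; exact Finset.abs_sum_le_sum_abs _ _
        _ = ∑ j, Q i0 j * |v j| := Finset.sum_congr rfl fun j _ => by
            rw [abs_mul, abs_of_nonneg (hnn i0 j)]
        _ ≤ ∑ j, Q i0 j * |v i0| := Finset.sum_le_sum fun j _ =>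
            mul_le_mul_of_nonneg_left (hmax' j) (hnn i0 j)
        _ = (∑ j, Q i0 j) * |v i0| := by rw [Finset.sum_mul]
        _ ≤ 1 * |v i0| := mul_le_mul_of_nonneg_right (hrow i0) (abs_nonneg _)
    exact le_of_mul_le_mul_right (by linarith) hpos
  have hsq : μ * μ ≠ 1 := by
    intro h
    apply hvne
    apply h2 v
    rw [hev, Matrix.mulVec_smul, hev, smul_smul, h, one_smul]
  rcases lt_or_eq_of_le habs with h | h
  · exact h
  · exfalso
    rcases (abs_eq (by norm_num : (0:ℝ) ≤ 1)).mp h with h1 | h1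
    · exact hsq (by rw [h1]; norm_num)
    · exact hsq (by rw [h1]; norm_num)

lemma my_split {n : ℕ} (A : Finset (Fin n)) {α β : Type*}
    (X Y : Matrix (Fin n) (Fin n) ℝ) (u : α → Fin n) (v : β → Fin n) :
    (X * Y).submatrix u v
      = X.submatrix u (Subtype.val : {k : Fin n // k ∈ A} → Fin n)
          * Y.submatrix (Subtype.val : {k : Fin n // k ∈ A} → Fin n) v
        + X.submatrix u (Subtype.val : {k : Fin n // k ∉ A} → Fin n)
          * Y.submatrix (Subtype.val : {k : Fin n // k ∉ A} → Fin n) v := by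
  ext i j
  simp only [Matrix.submatrix_apply, Matrix.mul_apply, Matrix.add_apply]
  rw [← Finset.sum_add_sum_compl A (fun k => X (u i) k * Y k (v j))]
  congr 1
  · exact Finset.sum_subtype A (fun x => Iff.rfl) _
  · exact Finset.sum_subtype Aᶜ (fun x => Finset.mem_compl) _

end AuxLemmas

/-- The block matrix `M_A`: `(M_A)_{A×A} = Id`, `(M_A)_{A×Aᶜ} = -Γ_{A×Aᶜ}(Γ_{Aᶜ×Aᶜ})⁻¹`,
and `0` on the rows indexed by `Aᶜ`. -/
noncomputable def MA {n : ℕ} (Γ : Matrix (Fin n) (Fin n) ℝ) (A : Finset (Fin n)) :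
    Matrix (Fin n) (Fin n) ℝ :=
  fun i j =>
    if i ∈ A then
      if hj : j ∈ A then (if i = j then 1 else 0)
      else - ∑ k : {k : Fin n // k ∉ A}, Γ i k.1 *
        (Γ.submatrix (Subtype.val : {k : Fin n // k ∉ A} → Fin n) Subtype.val)⁻¹ k
          (⟨j, hj⟩ : {k : Fin n // k ∉ A})
    else 0

/-- For an irreducible symmetric substochastic `P` with `Id - P` invertible, `Δ = Id - P`,
`Γ = Δ⁻¹`: the matrix `Id - M_Aᵀ` has nonnegative entries; moreover
`(Γ_{Aᶜ×Aᶜ})⁻¹ Γ_{Aᶜ×A} = -Δ_{Aᶜ×A} (Δ_{A×A})⁻¹` and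
`(Δ_{A×A})⁻¹ = ∑_{k≥0} (P_{A×A})^k` has nonnegative entries. -/
theorem stmt_11 {n : ℕ} (P : Matrix (Fin n) (Fin n) ℝ)
    (hsymm : Pᵀ = P) (hnonneg : ∀ i j, 0 ≤ P i j)
    (hsub : ∀ i, ∑ j, P i j ≤ 1)
    (hirr : ∀ i j, ∃ k : ℕ, 0 < (P ^ k) i j)
    (hinv : IsUnit (1 - P).det)
    (A : Finset (Fin n)) :
    (∀ i j, 0 ≤ (1 - (MA (1 - P)⁻¹ A)ᵀ) i j) ∧
    (((1 - P)⁻¹.submatrix (Subtype.val : {k : Fin n // k ∉ A} → Fin n) Subtype.val)⁻¹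
        * ((1 - P)⁻¹.submatrix (Subtype.val : {k : Fin n // k ∉ A} → Fin n)
            (Subtype.val : {k : Fin n // k ∈ A} → Fin n))
      = -((1 - P).submatrix (Subtype.val : {k : Fin n // k ∉ A} → Fin n)
            (Subtype.val : {k : Fin n // k ∈ A} → Fin n))
          * ((1 - P).submatrix (Subtype.val : {k : Fin n // k ∈ A} → Fin n) Subtype.val)⁻¹) ∧
    (((1 - P).submatrix (Subtype.val : {k : Fin n // k ∈ A} → Fin n) Subtype.val)⁻¹
      = ∑' k : ℕ,
          (P.submatrix (Subtype.val : {k : Fin n // k ∈ A} → Fin n) (Subtype.val : {k : Fin n // k ∈ A} → Fin n)) ^ k) ∧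
    (∀ i j : {k : Fin n // k ∈ A},
      0 ≤ ((1 - P).submatrix (Subtype.val : {k : Fin n // k ∈ A} → Fin n) Subtype.val)⁻¹ i j) := by
  have hPsym : ∀ i j, P i j = P j i := fun i j => congrFun (congrFun hsymm j) i
  set vA := (Subtype.val : {k : Fin n // k ∈ A} → Fin n) with hvA
  set vB := (Subtype.val : {k : Fin n // k ∉ A} → Fin n) with hvB
  set Q := P.submatrix vA vA with hQdef
  -- Q is hermitian
  have hQherm : Q.IsHermitian := by
    show Qᴴ = Q
    ext i j
    simp only [Matrix.conjTranspose_apply, star_trivial, hQdef, Matrix.submatrix_apply]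
    exact hPsym j.1 i.1
  have hQnn : ∀ i j, 0 ≤ Q i j := fun i j => hnonneg i.1 j.1
  have hQrow : ∀ i, ∑ j, Q i j ≤ 1 := by
    intro i
    have h1 : ∑ j : {k : Fin n // k ∈ A}, Q i j = ∑ j ∈ A, P i.1 j :=
      (Finset.sum_subtype A (fun x => Iff.rfl) (fun j => P i.1 j)).symm
    calc ∑ j : {k : Fin n // k ∈ A}, Q i j = ∑ j ∈ A, P i.1 j := h1
      _ ≤ ∑ j, P i.1 j := Finset.sum_le_sum_of_subset_of_nonneg (Finset.subset_univ A)
          (fun j _ _ => hnonneg i.1 j)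
      _ ≤ 1 := hsub i.1
  have h2fix : ∀ v, Q *ᵥ (Q *ᵥ v) = v → v = 0 := fun v hv =>
    my_noFixed2 P hsymm hnonneg hsub hinv A v hv
  have heig := my_eig Q hQherm hQnn hQrow h2fix
  obtain ⟨hsummable, hleft, hright⟩ := my_neumann Q hQherm heig
  -- Δ_{AA} = 1 - Q
  have hDAA : (1 - P).submatrix vA vA = 1 - Q := by
    ext i j
    simp only [Matrix.submatrix_apply, Matrix.sub_apply, Matrix.one_apply, hQdef,
      Subtype.ext_iff, hvA]
  have hinvAA : ((1 - P).submatrix vA vA)⁻¹ = ∑' k : ℕ, Q ^ k := by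
    rw [hDAA]
    exact Matrix.inv_eq_right_inv hleft
  -- nonnegativity of entries of powers
  have hQpow : ∀ (k : ℕ) (i j : {k : Fin n // k ∈ A}), 0 ≤ (Q ^ k) i j := by
    intro k
    induction k with
    | zero =>
      intro i j
      simp only [pow_zero, Matrix.one_apply]
      split <;> norm_num
    | succ k ih =>
      intro i j
      rw [pow_succ, Matrix.mul_apply]
      exact Finset.sum_nonneg fun l _ => mul_nonneg (ih i l) (hQnn l j)
  have part4 : ∀ i j : {k : Fin n // k ∈ A}, 0 ≤ ((1 - P).submatrix vA vA)⁻¹ i j := by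
    intro i j
    rw [hinvAA]
    have hs1 : Summable (fun k : ℕ => (Q ^ k) i) := Pi.summable.mp hsummable i
    have hs2 : Summable (fun k : ℕ => (Q ^ k) i j) := Pi.summable.mp hs1 j
    have : (∑' k : ℕ, Q ^ k) i j = ∑' k : ℕ, (Q ^ k) i j := by
      rw [show (∑' k : ℕ, Q ^ k) i = ∑' k : ℕ, (Q ^ k) i from tsum_apply hsummable, tsum_apply hs1]
    rw [this]
    exact tsum_nonneg fun k => hQpow k i j
  -- block structure
  set Δ : Matrix (Fin n) (Fin n) ℝ := 1 - P with hΔ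
  set Γ : Matrix (Fin n) (Fin n) ℝ := (1 - P)⁻¹ with hΓ
  have hdg : Δ * Γ = 1 := Matrix.mul_nonsing_inv _ hinv
  have hgd : Γ * Δ = 1 := Matrix.nonsing_inv_mul _ hinv
  set ΔAA := Δ.submatrix vA vA with hΔAA
  set ΔAB := Δ.submatrix vA vB with hΔAB
  set ΔBA := Δ.submatrix vB vA with hΔBA
  set ΔBB := Δ.submatrix vB vB with hΔBB
  set ΓAB := Γ.submatrix vA vB with hΓAB'
  set ΓBA := Γ.submatrix vB vA with hΓBA'
  set ΓBB := Γ.submatrix vB vB with hΓBB'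
  have hone_AB : (1 : Matrix (Fin n) (Fin n) ℝ).submatrix vA vB = 0 := by
    ext a b
    have : a.1 ≠ b.1 := fun h => b.2 (h ▸ a.2)
    simp [Matrix.one_apply, this, hvA, hvB]
  have hone_BA : (1 : Matrix (Fin n) (Fin n) ℝ).submatrix vB vA = 0 := by
    ext a b
    have : a.1 ≠ b.1 := fun h => a.2 (h ▸ b.2)
    simp [Matrix.one_apply, this, hvA, hvB]
  have hone_BB : (1 : Matrix (Fin n) (Fin n) ℝ).submatrix vB vB = 1 :=
    Matrix.submatrix_one _ Subtype.val_injective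
  have eq_AB : ΔAA * ΓAB + ΔAB * ΓBB = 0 := by
    have := congrArg (fun M => M.submatrix vA vB) hdg
    rw [my_split A Δ Γ vA vB] at this
    rw [← hΔAA, ← hΓAB', ← hΔAB, ← hΓBB'] at this
    rw [this, hone_AB]
  have eq_BB : ΔBA * ΓAB + ΔBB * ΓBB = 1 := by
    have := congrArg (fun M => M.submatrix vB vB) hdg
    rw [my_split A Δ Γ vB vB] at this
    rw [← hΔBA, ← hΓAB', ← hΔBB, ← hΓBB'] at this
    rw [this, hone_BB]
  have eq2_BA : ΓBA * ΔAA + ΓBB * ΔBA = 0 := by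
    have := congrArg (fun M => M.submatrix vB vA) hgd
    rw [my_split A Γ Δ vB vA] at this
    rw [← hΓBA', ← hΔAA, ← hΓBB', ← hΔBA] at this
    rw [this, hone_BA]
  have hAAr : ΔAA * ΔAA⁻¹ = 1 := by rw [hinvAA, hDAA]; exact hleft
  have hAAl : ΔAA⁻¹ * ΔAA = 1 := by rw [hinvAA, hDAA]; exact hright
  have hΓABeq : ΓAB = -(ΔAA⁻¹ * (ΔAB * ΓBB)) := by
    have h : ΔAA * ΓAB = -(ΔAB * ΓBB) := eq_neg_of_add_eq_zero_left eq_AB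
    calc ΓAB = (ΔAA⁻¹ * ΔAA) * ΓAB := by rw [hAAl, Matrix.one_mul]
      _ = ΔAA⁻¹ * (ΔAA * ΓAB) := by rw [Matrix.mul_assoc]
      _ = ΔAA⁻¹ * -(ΔAB * ΓBB) := by rw [h]
      _ = -(ΔAA⁻¹ * (ΔAB * ΓBB)) := by rw [Matrix.mul_neg]
  have hS : (ΔBB - ΔBA * (ΔAA⁻¹ * ΔAB)) * ΓBB = 1 := by
    have e := eq_BB
    rw [hΓABeq, Matrix.mul_neg] at e
    have hassoc : (ΔBA * (ΔAA⁻¹ * ΔAB)) * ΓBB = ΔBA * (ΔAA⁻¹ * (ΔAB * ΓBB)) := by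
      rw [Matrix.mul_assoc, Matrix.mul_assoc]
    rw [Matrix.sub_mul, hassoc, sub_eq_add_neg, add_comm]
    exact e
  have hΓBBinv : ΓBB⁻¹ = ΔBB - ΔBA * (ΔAA⁻¹ * ΔAB) := Matrix.inv_eq_left_inv hS
  have hΓBBr : ΓBB * ΓBB⁻¹ = 1 := by
    rw [hΓBBinv]
    exact mul_eq_one_comm.mp hS
  have hΓBAeq : ΓBA = -(ΓBB * (ΔBA * ΔAA⁻¹)) := by
    have h : ΓBA * ΔAA = -(ΓBB * ΔBA) := eq_neg_of_add_eq_zero_left eq2_BA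
    calc ΓBA = ΓBA * (ΔAA * ΔAA⁻¹) := by rw [hAAr, Matrix.mul_one]
      _ = (ΓBA * ΔAA) * ΔAA⁻¹ := by rw [Matrix.mul_assoc]
      _ = -(ΓBB * ΔBA) * ΔAA⁻¹ := by rw [h]
      _ = -(ΓBB * (ΔBA * ΔAA⁻¹)) := by rw [Matrix.neg_mul, Matrix.mul_assoc]
  have part2 : ΓBB⁻¹ * ΓBA = -ΔBA * ΔAA⁻¹ := by
    rw [hΓBAeq]
    calc ΓBB⁻¹ * -(ΓBB * (ΔBA * ΔAA⁻¹))
        = -((ΓBB⁻¹ * ΓBB) * (ΔBA * ΔAA⁻¹)) := by rw [Matrix.mul_neg, Matrix.mul_assoc]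
      _ = -(ΔBA * ΔAA⁻¹) := by
          rw [hΓBBinv]
          rw [hS, Matrix.one_mul]
      _ = -ΔBA * ΔAA⁻¹ := by rw [Matrix.neg_mul]
  have key : ΓAB * ΓBB⁻¹ = -(ΔAA⁻¹ * ΔAB) := by
    rw [hΓABeq]
    calc -(ΔAA⁻¹ * (ΔAB * ΓBB)) * ΓBB⁻¹
        = -(ΔAA⁻¹ * (ΔAB * (ΓBB * ΓBB⁻¹))) := by
          rw [Matrix.neg_mul, Matrix.mul_assoc, Matrix.mul_assoc]
      _ = -(ΔAA⁻¹ * ΔAB) := by rw [hΓBBr, Matrix.mul_one]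
  have hDAB : ΔAB = -(P.submatrix vA vB) := by
    ext a b
    have hne : a.1 ≠ b.1 := fun h => b.2 (h ▸ a.2)
    simp [hΔAB, hΔ, Matrix.sub_apply, Matrix.one_apply, hne, hvA, hvB]
  have key2 : ΓAB * ΓBB⁻¹ = ΔAA⁻¹ * P.submatrix vA vB := by
    rw [key, hDAB, Matrix.mul_neg, neg_neg]
  -- part 1
  have part1 : ∀ i j, 0 ≤ (1 - (MA Γ A)ᵀ) i j := by
    intro i j
    simp only [Matrix.sub_apply, Matrix.transpose_apply, Matrix.one_apply]
    by_cases hjA : j ∈ A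
    · by_cases hiA : i ∈ A
      · simp only [MA, if_pos hjA, dif_pos hiA]
        by_cases hij : i = j
        · simp [hij]
        · have hji : ¬ j = i := fun h => hij h.symm
          simp [hij, hji]
      · have hne : ¬(i = j) := fun h => hiA (h ▸ hjA)
        simp only [MA, if_pos hjA, dif_neg hiA, if_neg hne]
        rw [zero_sub, neg_neg]
        have hkey : (0:ℝ) ≤ (ΓAB * ΓBB⁻¹) ⟨j, hjA⟩ ⟨i, hiA⟩ := by
          rw [key2, Matrix.mul_apply]
          exact Finset.sum_nonneg fun l _ =>
            mul_nonneg (part4 _ _) (hnonneg l.1 i)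
        rw [Matrix.mul_apply] at hkey
        exact hkey
    · simp only [MA, if_neg hjA]
      by_cases hij : i = j
      · simp [hij]
      · simp [hij]
  exact ⟨part1, part2, hinvAA, part4⟩
end

section
/- Gaussian free field curvature bound: Let P be irreducible symmetric substochastic with Δ = Id − P invertible, δ the smallest eigenvalue of Δ, ψ a Perron–Frobenius eigenvector of Δ with eigenvalue δ and strictly positive entries, and define dist(x,y) := ∑_{i=1}^n ψ_i |(Δx)_i − (Δy)_i| on ℝⁿ. Then for the Gaussian conditional resampling kernels T_A, for all x, y ∈ ℝⁿ and A ⊆ [n]: W_∞(T_A(x,·), T_A(y,·)) ≤ dist(x,y) − δ ∑_{i∈A} ψ_i |(Δx)_i − (Δy)_i|. -/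
open MeasureTheory Matrix
open scoped BigOperators Classical

/-- The centered Gaussian measure on `ℝⁿ` with covariance matrix `Γ`. -/
noncomputable def gaussianMeas {n : ℕ} (Γ : Matrix (Fin n) (Fin n) ℝ) :
    Measure (Fin n → ℝ) :=
  (volume : Measure (Fin n → ℝ)).withDensity
    (fun x => ENNReal.ofReal
      ((Real.sqrt ((2 * Real.pi) ^ n * Γ.det))⁻¹ * Real.exp (-(x ⬝ᵥ (Γ⁻¹ *ᵥ x)) / 2)))

/-- The Gaussian conditional resampling kernel `T_A(x,·)`: the law of
`M_A Z + (Id - M_A) x` with `Z ∼ N(0,Γ)`. -/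
noncomputable def gaussKernel {n : ℕ} (Γ : Matrix (Fin n) (Fin n) ℝ)
    (A : Finset (Fin n)) (x : Fin n → ℝ) : Measure (Fin n → ℝ) :=
  (gaussianMeas Γ).map (fun z => (MA Γ A) *ᵥ z + (1 - MA Γ A) *ᵥ x)

/-- The distorted metric `dist(x,y) = ∑ᵢ ψᵢ |(Δx)ᵢ - (Δy)ᵢ|`. -/
noncomputable def distGFF {n : ℕ} (Δ : Matrix (Fin n) (Fin n) ℝ) (ψ : Fin n → ℝ)
    (x y : Fin n → ℝ) : ℝ :=
  ∑ i, ψ i * |(Δ *ᵥ x) i - (Δ *ᵥ y) i|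



lemma gauss_prod_eq {n : ℕ} (y : Fin n → ℝ) :
    Real.exp (-(y ⬝ᵥ y) / 2) = ∏ i, Real.exp (-(1/2) * (y i)^2) := by
  rw [← Real.exp_sum]
  congr 1
  simp only [dotProduct]
  rw [neg_div, Finset.sum_div, ← Finset.sum_neg_distrib]
  congr 1; ext i; ring

lemma gauss_integrable {n : ℕ} :
    Integrable (fun y : Fin n → ℝ => Real.exp (-(y ⬝ᵥ y) / 2)) := by
  have h1d : Integrable (fun x : ℝ => Real.exp (-(1/2) * x^2)) :=
    integrable_exp_neg_mul_sq (by norm_num)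
  have := MeasureTheory.Integrable.fintype_prod (𝕜 := ℝ)
    (f := fun (_ : Fin n) (x : ℝ) => Real.exp (-(1/2) * x^2)) (fun _ => h1d)
  apply this.congr
  exact Filter.Eventually.of_forall fun y => (gauss_prod_eq y).symm

lemma gauss_integral {n : ℕ} :
    ∫ y : Fin n → ℝ, Real.exp (-(y ⬝ᵥ y) / 2) = (Real.sqrt (2 * Real.pi)) ^ n := by
  have := MeasureTheory.integral_fintype_prod_eq_pow (𝕜 := ℝ) (ι := Fin n) (μ := volume)
    (f := fun x : ℝ => Real.exp (-(1/2) * x^2))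
  simp_rw [← gauss_prod_eq] at this
  rw [MeasureTheory.volume_pi, this, integral_gaussian]
  norm_num
  ring

lemma gauss_mass {n : ℕ} (S : Matrix (Fin n) (Fin n) ℝ) (hdetS_pos : 0 < S.det)
    (c : ℝ) (hc : 0 < c) :
    ∫⁻ x : Fin n → ℝ, ENNReal.ofReal (c⁻¹ * Real.exp (-((S *ᵥ x) ⬝ᵥ (S *ᵥ x)) / 2)) =
    ENNReal.ofReal c⁻¹ * (ENNReal.ofReal (S.det)⁻¹ * ENNReal.ofReal ((Real.sqrt (2 * Real.pi)) ^ n)) := by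
  have hkcont : Continuous fun y : Fin n → ℝ => Real.exp (-(y ⬝ᵥ y) / 2) := by
    apply Real.continuous_exp.comp
    apply Continuous.div_const
    apply Continuous.neg
    exact continuous_finset_sum _ fun i _ => (continuous_apply i).mul (continuous_apply i)
  have hT : Measurable fun x : Fin n → ℝ => Matrix.toLin' S x :=
    (LinearMap.continuous_on_pi _).measurable
  calc ∫⁻ x : Fin n → ℝ, ENNReal.ofReal (c⁻¹ * Real.exp (-((S *ᵥ x) ⬝ᵥ (S *ᵥ x)) / 2))
      = ∫⁻ x : Fin n → ℝ, ENNReal.ofReal c⁻¹ *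
          ENNReal.ofReal (Real.exp (-((S *ᵥ x) ⬝ᵥ (S *ᵥ x)) / 2)) := by
        congr 1; ext x; rw [ENNReal.ofReal_mul (by positivity)]
    _ = ENNReal.ofReal c⁻¹ *
        ∫⁻ x : Fin n → ℝ, ENNReal.ofReal (Real.exp (-((S *ᵥ x) ⬝ᵥ (S *ᵥ x)) / 2)) :=
        lintegral_const_mul' _ _ ENNReal.ofReal_ne_top
    _ = ENNReal.ofReal c⁻¹ * ∫⁻ y, ENNReal.ofReal (Real.exp (-(y ⬝ᵥ y) / 2))
          ∂(Measure.map (Matrix.toLin' S) volume) := by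
        have hmeas : Measurable fun y : Fin n → ℝ =>
            ENNReal.ofReal (Real.exp (-(y ⬝ᵥ y) / 2)) := hkcont.measurable.ennreal_ofReal
        rw [lintegral_map hmeas hT]
        simp only [Matrix.toLin'_apply]
    _ = ENNReal.ofReal c⁻¹ * (ENNReal.ofReal (S.det)⁻¹ *
          ∫⁻ y : Fin n → ℝ, ENNReal.ofReal (Real.exp (-(y ⬝ᵥ y) / 2))) := by
        rw [Real.map_matrix_volume_pi_eq_smul_volume_pi (ne_of_gt hdetS_pos),
          lintegral_smul_measure, smul_eq_mul, abs_inv, abs_of_pos hdetS_pos]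
    _ = ENNReal.ofReal c⁻¹ * (ENNReal.ofReal (S.det)⁻¹ *
          ENNReal.ofReal ((Real.sqrt (2 * Real.pi)) ^ n)) := by
        rw [← gauss_integral, ← ofReal_integral_eq_lintegral_ofReal gauss_integrable
          (Filter.Eventually.of_forall fun y => (Real.exp_pos _).le)]

lemma sqrt_pow_nat (x : ℝ) (hx : 0 ≤ x) (n : ℕ) : Real.sqrt (x ^ n) = (Real.sqrt x) ^ n := by
  induction n with
  | zero => simp
  | succ m ih => rw [pow_succ, pow_succ, Real.sqrt_mul (by positivity), ih]

open scoped MatrixOrder in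
lemma gaussianMeas_isProb {n : ℕ} {Γ : Matrix (Fin n) (Fin n) ℝ} (hΓ : Γ.PosDef) :
    IsProbabilityMeasure (gaussianMeas Γ) := by
  have hΔ : (Γ⁻¹).PosDef := hΓ.inv
  set S : Matrix (Fin n) (Fin n) ℝ := CFC.sqrt (Γ⁻¹) with hSdef
  have hS2 : S * S = Γ⁻¹ := CFC.sqrt_mul_sqrt_self _ hΔ.posSemidef.nonneg
  have hSsd : S.PosSemidef := (CFC.sqrt_nonneg _).posSemidef
  have hSsymm : Sᵀ = S := by
    have := hSsd.isHermitian
    simpa [Matrix.IsHermitian, Matrix.conjTranspose_eq_transpose_of_trivial] using this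
  have hdetΓ : 0 < Γ.det := hΓ.det_pos
  have hdetΔ : (Γ⁻¹).det = (Γ.det)⁻¹ := by
    rw [Matrix.det_nonsing_inv, Ring.inverse_eq_inv]
  have hdetS_sq : S.det * S.det = (Γ.det)⁻¹ := by
    rw [← Matrix.det_mul, hS2, hdetΔ]
  have hdetS_nonneg : 0 ≤ S.det := by
    rw [hSsd.isHermitian.det_eq_prod_eigenvalues]
    exact Finset.prod_nonneg fun i _ => by
      simpa using hSsd.eigenvalues_nonneg i
  have hdetS : S.det = Real.sqrt (Γ.det)⁻¹ := by
    rw [← hdetS_sq, Real.sqrt_mul_self hdetS_nonneg]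
  have hdetS_pos : 0 < S.det := by
    rw [hdetS]; exact Real.sqrt_pos.2 (by positivity)
  have hquad : ∀ x : Fin n → ℝ, x ⬝ᵥ (Γ⁻¹ *ᵥ x) = (S *ᵥ x) ⬝ᵥ (S *ᵥ x) := by
    intro x
    rw [← hS2, ← Matrix.mulVec_mulVec, Matrix.dotProduct_mulVec x S, ← Matrix.mulVec_transpose,
      hSsymm]
  set c : ℝ := Real.sqrt ((2 * Real.pi) ^ n * Γ.det) with hcdef
  have hc : 0 < c := Real.sqrt_pos.2 (by positivity)
  constructor
  rw [gaussianMeas, withDensity_apply _ MeasurableSet.univ, Measure.restrict_univ]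
  have : ∀ x : Fin n → ℝ,
      ENNReal.ofReal (c⁻¹ * Real.exp (-(x ⬝ᵥ (Γ⁻¹ *ᵥ x)) / 2)) =
      ENNReal.ofReal (c⁻¹ * Real.exp (-((S *ᵥ x) ⬝ᵥ (S *ᵥ x)) / 2)) := by
    intro x; rw [hquad]
  simp_rw [← hcdef, this]
  rw [gauss_mass S hdetS_pos c hc]
  rw [← ENNReal.ofReal_mul (by positivity), ← ENNReal.ofReal_mul (by positivity)]
  rw [← ENNReal.ofReal_one]
  congr 1
  rw [hdetS, hcdef, Real.sqrt_inv, Real.sqrt_mul (by positivity), ← sqrt_pow_nat _ (by positivity)]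
  have h1 : (0:ℝ) < Real.sqrt ((2*Real.pi)^n) := Real.sqrt_pos.2 (by positivity)
  have h2 : (0:ℝ) < Real.sqrt Γ.det := Real.sqrt_pos.2 hdetΓ
  field_simp


-- sums over the subtype vs compl finset
lemma sum_subtype_compl {n : ℕ} (A : Finset (Fin n)) (f : Fin n → ℝ) :
    ∑ j : {k : Fin n // k ∉ A}, f j.1 = ∑ j ∈ Aᶜ, f j :=
  (Finset.sum_subtype Aᶜ (fun x => Finset.mem_compl) f).symm

-- off-A rows: u agrees with w
lemma mulVec_one_sub_MA_notMem {n : ℕ} (Γ : Matrix (Fin n) (Fin n) ℝ) (A : Finset (Fin n))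
    (w : Fin n → ℝ) {j : Fin n} (hj : j ∉ A) :
    ((1 - MA Γ A) *ᵥ w) j = w j := by
  simp only [Matrix.mulVec, dotProduct, Matrix.sub_apply, Matrix.one_apply, MA, hj,
    if_false, sub_zero]
  simp [Finset.sum_ite_eq]

-- posdef of the compl submatrix
lemma posDef_submatrix_compl {n : ℕ} {Γ : Matrix (Fin n) (Fin n) ℝ} (hΓ : Γ.PosDef)
    (A : Finset (Fin n)) :
    (Γ.submatrix (Subtype.val : {k : Fin n // k ∉ A} → Fin n) Subtype.val).PosDef := by
  refine Matrix.PosDef.of_dotProduct_mulVec_pos ?_ ?_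
  · have h := hΓ.isHermitian
    ext k m
    simp only [Matrix.conjTranspose_apply, Matrix.submatrix_apply, star_trivial]
    have := congrFun (congrFun h.symm k.1) m.1
    simpa [Matrix.conjTranspose_apply] using this.symm
  · intro v hv
    set v' : Fin n → ℝ := fun j => if h : j ∉ A then v ⟨j, h⟩ else 0 with hv'def
    have hv' : v' ≠ 0 := by
      intro h0
      apply hv
      ext k
      have := congrFun h0 k.1
      simpa [hv'def, k.2] using this
    have hpos := hΓ.dotProduct_mulVec_pos hv'
    have hform : star v ⬝ᵥ ((Γ.submatrix (Subtype.val : {k : Fin n // k ∉ A} → Fin n)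
        Subtype.val) *ᵥ v) = star v' ⬝ᵥ (Γ *ᵥ v') := by
      simp only [dotProduct, Matrix.mulVec, Pi.star_apply, star_trivial,
        Matrix.submatrix_apply]
      rw [← Finset.sum_add_sum_compl A]
      have hA0 : ∑ j ∈ A, v' j * (∑ l, Γ j l * v' l) = 0 := by
        apply Finset.sum_eq_zero
        intro j hj
        simp [hv'def, hj]
      rw [hA0, zero_add, ← sum_subtype_compl A (fun j => v' j * ∑ l, Γ j l * v' l)]
      apply Finset.sum_congr rfl
      intro k _
      have h1 : v' k.1 = v k := by simp [hv'def, k.2]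
      rw [h1]
      congr 1
      rw [← Finset.sum_add_sum_compl A]
      have hA1 : ∑ l ∈ A, Γ k.1 l * v' l = 0 := by
        apply Finset.sum_eq_zero; intro l hl; simp [hv'def, hl]
      rw [hA1, zero_add, ← sum_subtype_compl A (fun l => Γ k.1 l * v' l)]
      apply Finset.sum_congr rfl
      intro m _
      simp [hv'def, m.2]
    rw [hform]
    exact hpos

lemma mulVec_one_sub_MA_mem {n : ℕ} {Δ : Matrix (Fin n) (Fin n) ℝ} (hinv : IsUnit Δ.det)
    (A : Finset (Fin n))
    (hC : IsUnit ((Δ⁻¹.submatrix (Subtype.val : {k : Fin n // k ∉ A} → Fin n) Subtype.val)).det)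
    (w : Fin n → ℝ) {i : Fin n} (hi : i ∈ A) :
    (Δ *ᵥ ((1 - MA Δ⁻¹ A) *ᵥ w)) i = 0 := by
  set Γ := Δ⁻¹ with hΓdef
  set C := Γ.submatrix (Subtype.val : {k : Fin n // k ∉ A} → Fin n) Subtype.val with hCdef
  set u := (1 - MA Γ A) *ᵥ w with hudef
  set w' : {k : Fin n // k ∉ A} → ℝ := fun k => w k.1 with hw'def
  set q : {k : Fin n // k ∉ A} → ℝ := C⁻¹ *ᵥ w' with hqdef
  have hq : ∀ m, q m = ∑ k : {k : Fin n // k ∉ A}, C⁻¹ m k * w k.1 := fun m => rfl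
  -- u on A
  have hu : ∀ j ∈ A, u j = ∑ m : {k : Fin n // k ∉ A}, Γ j m.1 * q m := by
    intro j hj
    show ∑ t, (1 - MA Γ A) j t * w t = _
    rw [← Finset.sum_add_sum_compl A]
    have h1 : ∑ t ∈ A, (1 - MA Γ A) j t * w t = 0 := by
      apply Finset.sum_eq_zero
      intro t ht
      simp [Matrix.sub_apply, Matrix.one_apply, MA, hj, ht]
    rw [h1, zero_add, ← sum_subtype_compl A (fun t => (1 - MA Γ A) j t * w t)]
    have h2 : ∀ k : {k : Fin n // k ∉ A}, (1 - MA Γ A) j k.1 * w k.1 =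
        ∑ m : {k : Fin n // k ∉ A}, Γ j m.1 * (C⁻¹ m k * w k.1) := by
      intro k
      have hne : j ≠ k.1 := fun h => k.2 (h ▸ hj)
      simp only [Matrix.sub_apply, Matrix.one_apply, MA, hj, if_true, dif_neg k.2, hne, if_false]
      rw [zero_sub, neg_neg, Finset.sum_mul]
      apply Finset.sum_congr rfl
      intro m _
      rw [mul_assoc]
    rw [Finset.sum_congr rfl (fun k _ => h2 k), Finset.sum_comm]
    apply Finset.sum_congr rfl
    intro m _
    rw [hq, Finset.mul_sum]
  -- the ΔΓ = 1 identity restricted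
  have hΔΓ : Δ * Γ = 1 := Matrix.mul_nonsing_inv Δ hinv
  have hkey : ∀ m : {k : Fin n // k ∉ A},
      ∑ t ∈ A, Δ i t * Γ t m.1 = - ∑ t : {k : Fin n // k ∉ A}, Δ i t.1 * Γ t.1 m.1 := by
    intro m
    have htot : ∑ t, Δ i t * Γ t m.1 = 0 := by
      have : (Δ * Γ) i m.1 = (1 : Matrix (Fin n) (Fin n) ℝ) i m.1 := by rw [hΔΓ]
      rw [Matrix.mul_apply] at this
      rw [this, Matrix.one_apply_ne (fun h => m.2 (by rw [← h]; exact hi))]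
    have hsplit := Finset.sum_add_sum_compl A (fun t => Δ i t * Γ t m.1)
    rw [htot] at hsplit
    rw [sum_subtype_compl A (fun t => Δ i t * Γ t m.1)]
    linarith
  -- C * q = w'
  have hCq : ∀ t : {k : Fin n // k ∉ A}, ∑ m : {k : Fin n // k ∉ A}, C t m * q m = w t.1 := by
    intro t
    have : (C *ᵥ q) t = w' t := by
      rw [hqdef, Matrix.mulVec_mulVec, Matrix.mul_nonsing_inv _ hC, Matrix.one_mulVec]
    simpa [Matrix.mulVec, dotProduct] using this
  -- main computation
  show ∑ t, Δ i t * u t = 0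
  rw [← Finset.sum_add_sum_compl A]
  have hoff : ∑ t ∈ Aᶜ, Δ i t * u t = ∑ t : {k : Fin n // k ∉ A}, Δ i t.1 * w t.1 := by
    rw [← sum_subtype_compl A (fun t => Δ i t * u t)]
    apply Finset.sum_congr rfl
    intro t _
    rw [hudef, mulVec_one_sub_MA_notMem Γ A w t.2]
  have hon : ∑ t ∈ A, Δ i t * u t = - ∑ t : {k : Fin n // k ∉ A}, Δ i t.1 * w t.1 := by
    calc ∑ t ∈ A, Δ i t * u t
        = ∑ t ∈ A, ∑ m : {k : Fin n // k ∉ A}, Δ i t * (Γ t m.1 * q m) := by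
          apply Finset.sum_congr rfl
          intro t ht
          rw [hu t ht, Finset.mul_sum]
      _ = ∑ m : {k : Fin n // k ∉ A}, (∑ t ∈ A, Δ i t * Γ t m.1) * q m := by
          rw [Finset.sum_comm]
          apply Finset.sum_congr rfl
          intro m _
          rw [Finset.sum_mul]
          apply Finset.sum_congr rfl
          intro t _
          ring
      _ = ∑ m : {k : Fin n // k ∉ A},
            (- ∑ t : {k : Fin n // k ∉ A}, Δ i t.1 * Γ t.1 m.1) * q m := by
          apply Finset.sum_congr rfl
          intro m _
          rw [hkey m]
      _ = ∑ m : {k : Fin n // k ∉ A}, ∑ t : {k : Fin n // k ∉ A},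
            -(Δ i t.1 * (C t m * q m)) := by
          apply Finset.sum_congr rfl
          intro m _
          rw [neg_mul, Finset.sum_mul, ← Finset.sum_neg_distrib]
          apply Finset.sum_congr rfl
          intro t _
          simp only [hCdef, Matrix.submatrix_apply]
          ring
      _ = ∑ t : {k : Fin n // k ∉ A}, ∑ m : {k : Fin n // k ∉ A},
            -(Δ i t.1 * (C t m * q m)) := Finset.sum_comm
      _ = - ∑ t : {k : Fin n // k ∉ A}, Δ i t.1 * ∑ m : {k : Fin n // k ∉ A}, C t m * q m := by
          rw [← Finset.sum_neg_distrib]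
          apply Finset.sum_congr rfl
          intro t _
          rw [Finset.mul_sum, ← Finset.sum_neg_distrib]
      _ = - ∑ t : {k : Fin n // k ∉ A}, Δ i t.1 * w t.1 := by
          congr 1
          apply Finset.sum_congr rfl
          intro t _
          rw [hCq t]
  rw [hon, hoff]
  ring

lemma key_ineq {n : ℕ} (P : Matrix (Fin n) (Fin n) ℝ)
    (hnonneg : ∀ i j, 0 ≤ P i j)
    (δ : ℝ) (ψ : Fin n → ℝ) (hψpos : ∀ i, 0 < ψ i)
    (hPψ : ∀ k, ∑ i, ψ i * P i k = (1 - δ) * ψ k)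
    (hδ0 : 0 ≤ δ) (hδ1 : δ ≤ 1)
    (A : Finset (Fin n)) (u w : Fin n → ℝ)
    (hharm : ∀ i ∈ A, ((1 - P) *ᵥ u) i = 0)
    (hoff : ∀ j ∉ A, u j = w j) :
    ∑ i, ψ i * |((1 - P) *ᵥ u) i| ≤
      ∑ i, ψ i * |((1 - P) *ᵥ w) i| - δ * ∑ i ∈ A, ψ i * |((1 - P) *ᵥ w) i| := by
  have hΔv : ∀ (z : Fin n → ℝ) (i : Fin n), ((1 - P) *ᵥ z) i = z i - (P *ᵥ z) i := by
    intro z i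
    rw [Matrix.sub_mulVec, Matrix.one_mulVec]
    rfl
  set a : Fin n → ℝ := fun i => |((1 - P) *ᵥ w) i| with hadef
  set v : Fin n → ℝ := fun j => |w j - u j| with hvdef
  have hv0 : ∀ j, 0 ≤ v j := fun j => abs_nonneg _
  have hA' : ∀ i, (P *ᵥ w) i - (P *ᵥ u) i = ∑ j ∈ A, P i j * (w j - u j) := by
    intro i
    simp only [Matrix.mulVec, dotProduct]
    rw [← Finset.sum_sub_distrib, ← Finset.sum_add_sum_compl A]
    have hz : ∑ j ∈ Aᶜ, (P i j * w j - P i j * u j) = 0 := by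
      apply Finset.sum_eq_zero
      intro j hj
      rw [hoff j (Finset.mem_compl.mp hj)]; ring
    rw [hz, add_zero]
    apply Finset.sum_congr rfl
    intro j _; ring
  -- step A
  have habsA : ∀ i ∉ A, |((1 - P) *ᵥ u) i| ≤ a i + ∑ j ∈ A, P i j * v j := by
    intro i hi
    have hstep : ((1 - P) *ᵥ u) i = ((1 - P) *ᵥ w) i + ∑ j ∈ A, P i j * (w j - u j) := by
      rw [hΔv u i, hΔv w i, ← hA' i, hoff i hi]; ring
    rw [hstep]
    refine (abs_add_le _ _).trans ?_
    apply add_le_add_right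
    refine (Finset.abs_sum_le_sum_abs _ _).trans ?_
    apply Finset.sum_le_sum
    intro j _
    rw [abs_mul, abs_of_nonneg (hnonneg i j)]
  -- step B
  have habsB : ∀ j ∈ A, v j ≤ a j + ∑ k ∈ A, P j k * v k := by
    intro j hj
    have h1 : u j = (P *ᵥ u) j := by
      have := hharm j hj; rw [hΔv] at this; linarith
    have hstep : w j - u j = ((1 - P) *ᵥ w) j + ∑ k ∈ A, P j k * (w k - u k) := by
      rw [hΔv w j, ← hA' j, h1]; ring
    calc v j = |w j - u j| := rfl
      _ ≤ a j + ∑ k ∈ A, P j k * v k := by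
          rw [hstep]
          refine (abs_add_le _ _).trans ?_
          apply add_le_add_right
          refine (Finset.abs_sum_le_sum_abs _ _).trans ?_
          apply Finset.sum_le_sum
          intro k _
          rw [abs_mul, abs_of_nonneg (hnonneg j k)]
  -- weighted sums
  set SA := ∑ j ∈ A, ψ j * v j with hSAdef
  set TA := ∑ j ∈ A, ψ j * a j with hTAdef
  set D := ∑ k ∈ A, (∑ j ∈ A, ψ j * P j k) * v k with hDdef
  have hD0 : 0 ≤ D := by
    apply Finset.sum_nonneg
    intro k _
    exact mul_nonneg (Finset.sum_nonneg fun j _ =>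
      mul_nonneg (hψpos j).le (hnonneg j k)) (hv0 k)
  have hTA0 : 0 ≤ TA := Finset.sum_nonneg fun j _ => mul_nonneg (hψpos j).le (abs_nonneg _)
  have hSB : SA ≤ TA + D := by
    have h1 : SA ≤ ∑ j ∈ A, ψ j * (a j + ∑ k ∈ A, P j k * v k) :=
      Finset.sum_le_sum fun j hj =>
        mul_le_mul_of_nonneg_left (habsB j hj) (hψpos j).le
    have h2 : ∑ j ∈ A, ψ j * (a j + ∑ k ∈ A, P j k * v k) = TA + D := by
      rw [hTAdef, hDdef]
      simp_rw [mul_add]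
      rw [Finset.sum_add_distrib]
      congr 1
      simp_rw [Finset.mul_sum]
      rw [Finset.sum_comm]
      apply Finset.sum_congr rfl
      intro k _
      rw [Finset.sum_mul]
      apply Finset.sum_congr rfl
      intro j _
      ring
    linarith
  set E := ∑ k ∈ A, (∑ j ∈ Aᶜ, ψ j * P j k) * v k with hEdef
  have hcd : ∀ k, (∑ j ∈ Aᶜ, ψ j * P j k) + (∑ j ∈ A, ψ j * P j k) = (1 - δ) * ψ k := by
    intro k
    have h := hPψ k
    rw [← Finset.sum_add_sum_compl A (fun j => ψ j * P j k)] at h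
    linarith
  have hED : E + D = (1 - δ) * SA := by
    rw [hEdef, hDdef, hSAdef, Finset.mul_sum, ← Finset.sum_add_distrib]
    apply Finset.sum_congr rfl
    intro k _
    rw [← add_mul, hcd k]
    ring
  have hEle : E ≤ (1 - δ) * TA := by
    have h3 : (1 - δ) * SA ≤ (1 - δ) * (TA + D) :=
      mul_le_mul_of_nonneg_left hSB (by linarith)
    have h4 : 0 ≤ δ * D := mul_nonneg hδ0 hD0
    nlinarith
  -- final assembly
  have hL : ∑ i, ψ i * |((1 - P) *ᵥ u) i| = ∑ i ∈ Aᶜ, ψ i * |((1 - P) *ᵥ u) i| := by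
    rw [← Finset.sum_add_sum_compl A (fun i => ψ i * |((1 - P) *ᵥ u) i|)]
    have h0 : ∑ i ∈ A, ψ i * |((1 - P) *ᵥ u) i| = 0 := by
      apply Finset.sum_eq_zero
      intro i hi
      rw [hharm i hi, abs_zero, mul_zero]
    rw [h0, zero_add]
  have hmain : ∑ i ∈ Aᶜ, ψ i * |((1 - P) *ᵥ u) i| ≤ ∑ i ∈ Aᶜ, ψ i * a i + E := by
    have h5 : ∑ i ∈ Aᶜ, ψ i * |((1 - P) *ᵥ u) i| ≤
        ∑ i ∈ Aᶜ, ψ i * (a i + ∑ j ∈ A, P i j * v j) :=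
      Finset.sum_le_sum fun i hi =>
        mul_le_mul_of_nonneg_left (habsA i (Finset.mem_compl.mp hi)) (hψpos i).le
    have h6 : ∑ i ∈ Aᶜ, ψ i * (a i + ∑ j ∈ A, P i j * v j) = ∑ i ∈ Aᶜ, ψ i * a i + E := by
      rw [hEdef]
      simp_rw [mul_add]
      rw [Finset.sum_add_distrib]
      congr 1
      simp_rw [Finset.mul_sum]
      rw [Finset.sum_comm]
      apply Finset.sum_congr rfl
      intro k _
      rw [Finset.sum_mul]
      apply Finset.sum_congr rfl
      intro j _
      ring
    linarith
  have hcompl : ∑ i ∈ Aᶜ, ψ i * |((1 - P) *ᵥ w) i| = ∑ i ∈ Aᶜ, ψ i * a i := rfl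
  have hAeq : ∑ i ∈ A, ψ i * |((1 - P) *ᵥ w) i| = TA := rfl
  have huniv := Finset.sum_add_sum_compl A (fun i => ψ i * |((1 - P) *ᵥ w) i|)
  rw [hAeq, hcompl] at huniv
  rw [hL]
  linarith


/-- Gaussian free field curvature bound: for the Gaussian conditional resampling kernels
`T_A` and the distorted metric built from a positive Perron-Frobenius eigenvector `ψ` of
`Δ = Id - P` with eigenvalue `δ`, one has
`W_∞(T_A(x,·), T_A(y,·)) ≤ dist(x,y) - δ ∑_{i∈A} ψᵢ |(Δx)ᵢ - (Δy)ᵢ|`, witnessed by a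
coupling. -/
theorem stmt_13 {n : ℕ} (P : Matrix (Fin n) (Fin n) ℝ)
    (hsymm : Pᵀ = P) (hnonneg : ∀ i j, 0 ≤ P i j)
    (hsub : ∀ i, ∑ j, P i j ≤ 1)
    (hirr : ∀ i j, ∃ k : ℕ, 0 < (P ^ k) i j)
    (hinv : IsUnit (1 - P).det)
    (δ : ℝ) (ψ : Fin n → ℝ) (hψpos : ∀ i, 0 < ψ i) (hψ : (1 - P) *ᵥ ψ = δ • ψ)
    (hδmin : ∀ (δ' : ℝ) (z' : Fin n → ℝ), z' ≠ 0 → (1 - P) *ᵥ z' = δ' • z' → δ ≤ δ')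
    (A : Finset (Fin n)) (x y : Fin n → ℝ) :
    ∃ π : Measure ((Fin n → ℝ) × (Fin n → ℝ)), IsProbabilityMeasure π ∧
      π.map Prod.fst = gaussKernel (1 - P)⁻¹ A x ∧
      π.map Prod.snd = gaussKernel (1 - P)⁻¹ A y ∧
      ∀ᵐ p ∂π, distGFF (1 - P) ψ p.1 p.2
        ≤ distGFF (1 - P) ψ x y
            - δ * ∑ i ∈ A, ψ i * |((1 - P) *ᵥ x) i - ((1 - P) *ᵥ y) i| := by
  have hPsym : ∀ i j, P j i = P i j := fun i j => congrFun (congrFun hsymm i) j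
  -- Hermitian
  have hH : (1 - P).IsHermitian := by
    show (1 - P)ᴴ = 1 - P
    ext i j
    by_cases h : i = j
    · subst h; simp [Matrix.conjTranspose_apply, Matrix.sub_apply]
    · simp [Matrix.conjTranspose_apply, Matrix.sub_apply, Matrix.one_apply, h, Ne.symm h,
        hPsym i j]
  -- eigen equation rearranged
  have hsub1 : ∀ (zv : Fin n → ℝ) (i : Fin n), ((1 - P) *ᵥ zv) i = zv i - (P *ᵥ zv) i := by
    intro zv i
    rw [Matrix.sub_mulVec, Matrix.one_mulVec]
    rfl
  have hPv : P *ᵥ ψ = (1 - δ) • ψ := by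
    funext i
    have h2 := congrFun hψ i
    rw [hsub1 ψ i] at h2
    simp only [Pi.smul_apply, smul_eq_mul] at h2 ⊢
    linarith
  -- δ ≠ 0
  have hδne : 0 < n → δ ≠ 0 := by
    intro hn hδ
    have hψ0 : ψ = 0 := by
      have h1 : (1 - P) *ᵥ ψ = 0 := by rw [hψ, hδ]; simp
      have h2 : ψ = ((1 - P)⁻¹ * (1 - P)) *ᵥ ψ := by
        rw [Matrix.nonsing_inv_mul _ hinv, Matrix.one_mulVec]
      rw [← Matrix.mulVec_mulVec, h1, Matrix.mulVec_zero] at h2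
      exact h2
    exact (hψpos ⟨0, hn⟩).ne' (by rw [hψ0]; rfl)
  -- δ ≥ 0, δ ≤ 1 for n > 0
  have hδ01 : 0 < n → 0 ≤ δ ∧ δ ≤ 1 := by
    intro hn
    have hψsum : 0 < ∑ i, ψ i :=
      Finset.sum_pos (fun i _ => hψpos i) ⟨⟨0, hn⟩, Finset.mem_univ _⟩
    have hδ1 : δ ≤ 1 := by
      have h1 : 0 ≤ (P *ᵥ ψ) ⟨0, hn⟩ := by
        show 0 ≤ ∑ j, P ⟨0, hn⟩ j * ψ j
        exact Finset.sum_nonneg fun j _ => mul_nonneg (hnonneg _ j) (hψpos j).le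
      rw [hPv] at h1
      simp only [Pi.smul_apply, smul_eq_mul] at h1
      nlinarith [hψpos (⟨0, hn⟩ : Fin n)]
    have hδ0 : 0 ≤ δ := by
      have h2 : ∑ i, (P *ᵥ ψ) i ≤ ∑ i, ψ i := by
        have : ∀ i, (P *ᵥ ψ) i = ∑ j, P i j * ψ j := fun i => rfl
        calc ∑ i, (P *ᵥ ψ) i = ∑ j, (∑ i, P i j) * ψ j := by
              simp_rw [this]
              rw [Finset.sum_comm]
              apply Finset.sum_congr rfl
              intro j _
              rw [Finset.sum_mul]
          _ ≤ ∑ j, ψ j := by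
              apply Finset.sum_le_sum
              intro j _
              have h3 : ∑ i, P i j ≤ 1 := by
                have := hsub j
                calc ∑ i, P i j = ∑ i, P j i := by
                      apply Finset.sum_congr rfl; intro i _; rw [hPsym j i]
                  _ ≤ 1 := this
              nlinarith [hψpos j, h3, Finset.sum_nonneg (fun i (_ : i ∈ Finset.univ) =>
                hnonneg i j)]
      rw [hPv] at h2
      simp only [Pi.smul_apply, smul_eq_mul] at h2
      rw [← Finset.mul_sum] at h2
      nlinarith
    exact ⟨hδ0, hδ1⟩
  -- PosDef
  have hpd : (1 - P).PosDef := by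
    rcases Nat.eq_zero_or_pos n with hn | hn
    · exact Matrix.PosDef.of_dotProduct_mulVec_pos hH (fun v hv => absurd (funext fun i => absurd (i.2.trans_le hn.le) (Nat.not_lt_zero _).elim) hv)
    · have hδpos : 0 < δ := lt_of_le_of_ne (hδ01 hn).1 (Ne.symm (hδne hn))
      have heig : ∀ i, 0 < hH.eigenvalues i := by
        intro i
        refine lt_of_lt_of_le hδpos (hδmin _ _ ?_ (hH.mulVec_eigenvectorBasis i))
        intro h0
        exact hH.eigenvectorBasis.orthonormal.ne_zero i (by ext j; exact congrFun h0 j)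
      have hsd : (1 - P).PosSemidef :=
        hH.posSemidef_iff_eigenvalues_nonneg.mpr fun i => (heig i).le
      refine Matrix.PosDef.of_dotProduct_mulVec_pos hH fun v hv => ?_
      rcases (hsd.dotProduct_mulVec_nonneg v).lt_or_eq with h | h
      · exact h
      · exfalso
        have h1 : (1 - P) *ᵥ v = 0 := (hsd.dotProduct_mulVec_zero_iff v).mp h.symm
        have h2 : v = ((1 - P)⁻¹ * (1 - P)) *ᵥ v := by
          rw [Matrix.nonsing_inv_mul _ hinv, Matrix.one_mulVec]
        rw [← Matrix.mulVec_mulVec, h1, Matrix.mulVec_zero] at h2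
        exact hv h2
  have hΓpd : ((1 - P)⁻¹).PosDef := hpd.inv
  have hprob : IsProbabilityMeasure (gaussianMeas (1 - P)⁻¹) := gaussianMeas_isProb hΓpd
  have hCd : IsUnit (((1 - P)⁻¹.submatrix
      (Subtype.val : {k : Fin n // k ∉ A} → Fin n) Subtype.val)).det :=
    (posDef_submatrix_compl hΓpd A).det_pos.ne'.isUnit
  set M := MA (1 - P)⁻¹ A with hMdef
  set g : (Fin n → ℝ) → (Fin n → ℝ) × (Fin n → ℝ) :=
    fun z => (M *ᵥ z + (1 - M) *ᵥ x, M *ᵥ z + (1 - M) *ᵥ y) with hgdef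
  have hmul : Measurable fun z : Fin n → ℝ => M *ᵥ z := by
    have : Continuous fun z : Fin n → ℝ => Matrix.toLin' M z :=
      LinearMap.continuous_on_pi _
    simpa [Matrix.toLin'_apply] using this.measurable
  have hg : Measurable g := (hmul.add measurable_const).prodMk (hmul.add measurable_const)
  refine ⟨(gaussianMeas (1 - P)⁻¹).map g, Measure.isProbabilityMeasure_map hg.aemeasurable, ?_, ?_, ?_⟩
  · rw [Measure.map_map measurable_fst hg]
    rfl
  · rw [Measure.map_map measurable_snd hg]
    rfl
  · -- the almost-everywhere bound
    have hkey : ∀ z : Fin n → ℝ, distGFF (1 - P) ψ (g z).1 (g z).2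
        ≤ distGFF (1 - P) ψ x y
            - δ * ∑ i ∈ A, ψ i * |((1 - P) *ᵥ x) i - ((1 - P) *ᵥ y) i| := by
      intro z
      have hdiffxy : ∀ i, ((1 - P) *ᵥ x) i - ((1 - P) *ᵥ y) i
          = ((1 - P) *ᵥ (x - y)) i := fun i => by rw [Matrix.mulVec_sub]; rfl
      have hdiff : ∀ i, ((1 - P) *ᵥ (g z).1) i - ((1 - P) *ᵥ (g z).2) i
          = ((1 - P) *ᵥ ((1 - M) *ᵥ (x - y))) i := by
        intro i
        have h1 : (g z).1 - (g z).2 = (1 - M) *ᵥ (x - y) := by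
          show (M *ᵥ z + (1 - M) *ᵥ x) - (M *ᵥ z + (1 - M) *ᵥ y) = _
          rw [Matrix.mulVec_sub]
          abel
        rw [← h1, Matrix.mulVec_sub]
        rfl
      rw [distGFF, distGFF]
      simp_rw [hdiff, hdiffxy]
      rcases Nat.eq_zero_or_pos n with hn | hn
      · subst hn
        simp [Finset.univ_eq_empty, Finset.eq_empty_of_isEmpty A]
      · obtain ⟨hδ0, hδ1⟩ := hδ01 hn
        apply key_ineq P hnonneg δ ψ hψpos
        · intro k
          have h1 : (P *ᵥ ψ) k = (1 - δ) * ψ k := by rw [hPv]; rfl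
          rw [← h1]
          show _ = ∑ j, P k j * ψ j
          apply Finset.sum_congr rfl
          intro i _
          rw [mul_comm, hPsym k i]
        · exact hδ0
        · exact hδ1
        · exact fun i hi => mulVec_one_sub_MA_mem hinv A hCd (x - y) hi
        · exact fun j hj => mulVec_one_sub_MA_notMem (1 - P)⁻¹ A (x - y) hj
    have hcont : Continuous fun p : (Fin n → ℝ) × (Fin n → ℝ) =>
        distGFF (1 - P) ψ p.1 p.2 := by
      have hcoord : ∀ (i : Fin n), Continuous fun p : (Fin n → ℝ) × (Fin n → ℝ) =>
          ((1 - P) *ᵥ p.1) i - ((1 - P) *ᵥ p.2) i := by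
        intro i
        have hm1 : Continuous fun p : (Fin n → ℝ) × (Fin n → ℝ) => ((1 - P) *ᵥ p.1) i := by
          show Continuous fun p : (Fin n → ℝ) × (Fin n → ℝ) => ∑ j, (1 - P) i j * p.1 j
          exact continuous_finset_sum _ fun j _ =>
            continuous_const.mul ((continuous_apply j).comp continuous_fst)
        have hm2 : Continuous fun p : (Fin n → ℝ) × (Fin n → ℝ) => ((1 - P) *ᵥ p.2) i := by
          show Continuous fun p : (Fin n → ℝ) × (Fin n → ℝ) => ∑ j, (1 - P) i j * p.2 j
          exact continuous_finset_sum _ fun j _ =>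
            continuous_const.mul ((continuous_apply j).comp continuous_snd)
        exact hm1.sub hm2
      exact continuous_finset_sum _ fun i _ =>
        continuous_const.mul ((hcoord i).abs)
    have hset : MeasurableSet {p : (Fin n → ℝ) × (Fin n → ℝ) |
        distGFF (1 - P) ψ p.1 p.2 ≤ distGFF (1 - P) ψ x y
          - δ * ∑ i ∈ A, ψ i * |((1 - P) *ᵥ x) i - ((1 - P) *ᵥ y) i|} :=
      measurableSet_le hcont.measurable measurable_const
    exact (ae_map_iff hg.aemeasurable hset).mpr (ae_of_all _ hkey)
end

section
/- Transposition distance curvature for block shuffles: Let Ω = S_n with uniform measure, and dist(σ,η) the minimal number of transpositions turning σ into η. For A ⊆ [n] let T_A(σ,·) be the law of σπ where π is a uniform permutation of the positions in A (i.e., uniform resampling of the cards in A). Then W_∞(T_A(σ,·), T_A(η,·)) ≤ dist(σ,η) for all σ, η; and if σ, η differ by a single transposition exchanging values at positions i ≠ j, then W₁(T_A(σ,·), T_A(η,·)) = 0 whenever {i,j} ⊆ A and ≤ 1 otherwise; consequently ∑_{A⊆[n]} θ_A W₁(T_A(σ,·), T_A(η,·)) ≤ (1 − θ⋆⋆) dist(σ,η)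 for all σ, η and any probability vector (θ_A), where θ⋆⋆ := min_{i<j} ∑_{A ⊇ {i,j}} θ_A. -/
open MeasureTheory ProbabilityTheory
open scoped BigOperators Classical

noncomputable instance {n : ℕ} : MeasurableSpace (Equiv.Perm (Fin n)) := ⊤

instance {n : ℕ} : MeasurableSingletonClass (Equiv.Perm (Fin n)) := ⟨fun _ => trivial⟩

/-- The transposition (Cayley) distance on `S_n`: the minimal number of transpositions
needed to turn `σ` into `η`. -/
noncomputable def permDist {n : ℕ} (σ η : Equiv.Perm (Fin n)) : ℕ :=
  sInf {k : ℕ | ∃ l : List (Equiv.Perm (Fin n)),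
    (∀ τ ∈ l, Equiv.Perm.IsSwap τ) ∧ l.length = k ∧ σ * l.prod = η}

/-- The block-shuffle kernel `T_A(σ,·)`: the law of `σπ` where `π` is a uniform
permutation of the positions in `A`. -/
noncomputable def shuffleKernel {n : ℕ} (A : Finset (Fin n)) (σ : Equiv.Perm (Fin n)) :
    Measure (Equiv.Perm (Fin n)) :=
  (uniformOn {π : Equiv.Perm (Fin n) | ∀ i ∉ A, π i = i}).map (fun π => σ * π)

namespace Stmt15Aux

variable {n : ℕ}

/-- Abbreviation for the permutation group. -/
abbrev P (n : ℕ) := Equiv.Perm (Fin n)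

lemma measP {β : Type*} [MeasurableSpace β] (f : P n → β) : Measurable f := fun _ _ => trivial

lemma measSet (s : Set (P n)) : MeasurableSet s := trivial

lemma measSetProd (s : Set (P n × P n)) : MeasurableSet s := (Set.to_countable s).measurableSet

/-- The subgroup (as a set) of permutations supported in `A`. -/
def Sset (A : Finset (Fin n)) : Set (P n) := {π : P n | ∀ i ∉ A, π i = i}

lemma one_mem_Sset (A : Finset (Fin n)) : (1 : P n) ∈ Sset A := fun _ _ => rfl

lemma mul_mem_Sset {A : Finset (Fin n)} {a b : P n} (ha : a ∈ Sset A) (hb : b ∈ Sset A) :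
    a * b ∈ Sset A := fun i hi => by
  rw [Equiv.Perm.mul_apply, hb i hi, ha i hi]

lemma inv_mem_Sset {A : Finset (Fin n)} {a : P n} (ha : a ∈ Sset A) : a⁻¹ ∈ Sset A := fun i hi => by
  apply a.injective
  rw [← Equiv.Perm.mul_apply, mul_inv_cancel, Equiv.Perm.one_apply, ha i hi]

lemma swap_mem_Sset {A : Finset (Fin n)} {i j : Fin n} (hi : i ∈ A) (hj : j ∈ A) :
    Equiv.swap i j ∈ Sset A := fun k hk =>
  Equiv.swap_apply_of_ne_of_ne (fun h => hk (h ▸ hi)) (fun h => hk (h ▸ hj))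

lemma shuffleKernel_eq (A : Finset (Fin n)) (σ : P n) :
    shuffleKernel A σ = (uniformOn (Sset A)).map (fun π => σ * π) := rfl

instance uniformOn_Sset_prob (A : Finset (Fin n)) : IsProbabilityMeasure (uniformOn (Sset A)) :=
  uniformOn_isProbabilityMeasure (Set.toFinite _) ⟨1, one_mem_Sset A⟩

lemma map_mul_uniformOn (A : Finset (Fin n)) {g : P n} (hg : g ∈ Sset A) :
    (uniformOn (Sset A)).map (fun x => g * x) = uniformOn (Sset A) := by
  have himg : (fun x => g * x) '' Sset A = Sset A := by
    ext y
    constructor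
    · rintro ⟨x, hx, rfl⟩; exact mul_mem_Sset hg hx
    · intro hy; exact ⟨g⁻¹ * y, mul_mem_Sset (inv_mem_Sset hg) hy, by simp⟩
  have hinj : Function.Injective (fun x : P n => g * x) := mul_right_injective g
  ext t ht
  rw [Measure.map_apply (measP _) ht]
  have hu : ∀ u : Set (P n), uniformOn (Sset A) u
      = (Measure.count (Sset A))⁻¹ * Measure.count (Sset A ∩ u) := fun u =>
    cond_apply (measSet _) Measure.count u
  rw [hu, hu]
  congr 1
  calc Measure.count (Sset A ∩ (fun x => g * x) ⁻¹' t)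
      = Measure.count ((fun x => g * x) '' (Sset A ∩ (fun x => g * x) ⁻¹' t)) :=
        (Measure.count_injective_image hinj _).symm
    _ = Measure.count ((fun x => g * x) '' Sset A ∩ t) := by rw [Set.image_inter_preimage]
    _ = Measure.count (Sset A ∩ t) := by rw [himg]

lemma shuffleKernel_mul (A : Finset (Fin n)) (σ : P n) {g : P n} (hg : g ∈ Sset A) :
    shuffleKernel A (σ * g) = shuffleKernel A σ := by
  rw [shuffleKernel_eq, shuffleKernel_eq,
    show (fun π : P n => σ * g * π) = (fun π : P n => σ * π) ∘ (fun π : P n => g * π) from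
      funext fun x => mul_assoc σ g x,
    ← Measure.map_map (measP _) (measP _), map_mul_uniformOn A hg]

lemma permDist_le {σ η : P n} {l : List (P n)} (hl : ∀ τ ∈ l, Equiv.Perm.IsSwap τ)
    (h : σ * l.prod = η) : permDist σ η ≤ l.length :=
  Nat.sInf_le ⟨l, hl, rfl, h⟩

lemma exists_list (σ η : P n) : ∃ l : List (P n),
    (∀ τ ∈ l, Equiv.Perm.IsSwap τ) ∧ l.length = permDist σ η ∧ σ * l.prod = η := by
  have hne : {k : ℕ | ∃ l : List (P n),
      (∀ τ ∈ l, Equiv.Perm.IsSwap τ) ∧ l.length = k ∧ σ * l.prod = η}.Nonempty := by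
    obtain ⟨l, hprod, hsw⟩ := (Equiv.Perm.truncSwapFactors (σ⁻¹ * η)).out
    exact ⟨l.length, l, hsw, rfl, by rw [hprod, mul_inv_cancel_left]⟩
  obtain ⟨l, hsw, hlen, hprod⟩ := Nat.sInf_mem hne
  exact ⟨l, hsw, hlen, hprod⟩

lemma isSwap_conj {x τ : P n} (hτ : τ.IsSwap) : (x * τ * x⁻¹).IsSwap := by
  obtain ⟨a, b, hab, rfl⟩ := hτ
  exact ⟨x a, x b, fun h => hab (x.injective h), (Equiv.swap_apply_apply x a b).symm⟩

lemma conj_list_prod (x : P n) (l : List (P n)) :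
    (l.map (fun τ => x * τ * x⁻¹)).prod = x * l.prod * x⁻¹ := by
  induction l with
  | nil => simp
  | cons τ l ih => simp [ih]

lemma permDist_mul_right (σ η x : P n) : permDist (σ * x) (η * x) ≤ permDist σ η := by
  obtain ⟨l, hsw, hlen, hprod⟩ := exists_list σ η
  have h : (σ * x) * (l.map (fun τ => x⁻¹ * τ * x⁻¹⁻¹)).prod = η * x := by
    rw [conj_list_prod, inv_inv]
    rw [show σ * x * (x⁻¹ * l.prod * x) = σ * l.prod * x by group, hprod]
  calc permDist (σ * x) (η * x) ≤ (l.map (fun τ => x⁻¹ * τ * x⁻¹⁻¹)).length :=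
        permDist_le (fun τ hτ => by
          obtain ⟨τ', hτ', rfl⟩ := List.mem_map.1 hτ
          exact isSwap_conj (hsw τ' hτ')) h
    _ = permDist σ η := by rw [List.length_map, hlen]

/-- Transfer a pointwise property through a pushforward measure. -/
lemma ae_map' {μ : Measure (P n)} {F : P n → P n × P n} {p : P n × P n → Prop}
    (h : ∀ x, p (F x)) : ∀ᵐ q ∂(μ.map F), p q := by
  rw [ae_map_iff (measP F).aemeasurable (measSetProd _)]
  exact ae_of_all _ h

lemma integral_le_of_ae {π : Measure (P n × P n)} [IsProbabilityMeasure π] {f : P n × P n → ℝ}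
    {c : ℝ} (h : ∀ᵐ p ∂π, f p ≤ c) : ∫ p, f p ∂π ≤ c := by
  calc ∫ p, f p ∂π ≤ ∫ _, c ∂π := integral_mono_ae (Integrable.of_finite) (integrable_const c) h
    _ = c := by simp

/-- The main synchronous coupling of `T_A(σ,·)` and `T_A(η,·)`, twisted by `ρ ∈ S_A`. -/
lemma coupling (A : Finset (Fin n)) (σ η ρ : P n) (hρ : ρ ∈ Sset A) :
    ∃ π : Measure (P n × P n), IsProbabilityMeasure π ∧
      π.map Prod.fst = shuffleKernel A σ ∧ π.map Prod.snd = shuffleKernel A η ∧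
      (∀ᵐ p ∂π, permDist p.1 p.2 ≤ permDist σ (η * ρ)) ∧
      ∫ p, (permDist p.1 p.2 : ℝ) ∂π ≤ (permDist σ (η * ρ) : ℝ) := by
  refine ⟨(uniformOn (Sset A)).map (fun x => (σ * x, η * ρ * x)), ?_, ?_, ?_, ?_, ?_⟩
  case _ => exact Measure.isProbabilityMeasure_map (measP _).aemeasurable
  case _ =>
    rw [Measure.map_map measurable_fst (measP _)]
    rfl
  case _ =>
    rw [Measure.map_map measurable_snd (measP _)]
    show Measure.map (fun x : P n => η * ρ * x) (uniformOn (Sset A)) = shuffleKernel A η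
    rw [show (fun x : P n => η * ρ * x) = (fun x : P n => η * x) ∘ (fun x : P n => ρ * x) from
        funext fun x => mul_assoc η ρ x,
      ← Measure.map_map (measP _) (measP _), map_mul_uniformOn A hρ, shuffleKernel_eq]
  case _ =>
    exact ae_map' (fun x => permDist_mul_right σ (η * ρ) x)
  case _ =>
    haveI : IsProbabilityMeasure ((uniformOn (Sset A)).map (fun x : P n => (σ * x, η * ρ * x))) :=
      Measure.isProbabilityMeasure_map (measP _).aemeasurable
    refine integral_le_of_ae ?_
    refine (ae_map' (fun x => permDist_mul_right σ (η * ρ) x) :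
      ∀ᵐ p ∂_, permDist p.1 p.2 ≤ permDist σ (η * ρ)).mono (fun p hp => ?_)
    exact_mod_cast hp

/-- Pushing the `S_A`-transpositions in a transposition word to the right. -/
lemma push (A : Finset (Fin n)) : ∀ L : List (Fin n × Fin n), (∀ q ∈ L, q.1 ≠ q.2) →
    ∃ (l' : List (P n)) (ρ : P n), (∀ τ ∈ l', Equiv.Perm.IsSwap τ) ∧ ρ ∈ Sset A ∧
      (L.map (fun q => Equiv.swap q.1 q.2)).prod = l'.prod * ρ ∧
      l'.length = (L.filter (fun q => ¬(q.1 ∈ A ∧ q.2 ∈ A))).length := by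
  intro L
  induction L with
  | nil => exact fun _ => ⟨[], 1, by simp, one_mem_Sset A, by simp, by simp⟩
  | cons q L ih =>
    intro hL
    obtain ⟨l', ρ, hsw, hρ, hprod, hlen⟩ := ih (fun q hq => hL q (List.mem_cons_of_mem _ hq))
    have hq1 : q.1 ≠ q.2 := hL q (List.mem_cons_self)
    by_cases hA : q.1 ∈ A ∧ q.2 ∈ A
    · refine ⟨l'.map (fun τ => Equiv.swap q.1 q.2 * τ * (Equiv.swap q.1 q.2)⁻¹),
        Equiv.swap q.1 q.2 * ρ, ?_, mul_mem_Sset (swap_mem_Sset hA.1 hA.2) hρ, ?_, ?_⟩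
      · intro τ hτ
        obtain ⟨τ', hτ', rfl⟩ := List.mem_map.1 hτ
        exact isSwap_conj (hsw τ' hτ')
      · rw [List.map_cons, List.prod_cons, hprod, conj_list_prod]
        group
      · rw [List.length_map, hlen, List.filter_cons]
        simp [hA]
    · refine ⟨Equiv.swap q.1 q.2 :: l', ρ, ?_, hρ, ?_, ?_⟩
      · intro τ hτ
        rcases List.mem_cons.1 hτ with h | h
        · exact h ▸ ⟨q.1, q.2, hq1, rfl⟩
        · exact hsw τ h
      · rw [List.map_cons, List.prod_cons, List.prod_cons, hprod, mul_assoc]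
      · rw [List.length_cons, hlen, List.filter_cons]
        simp [hA]

/-- Extracting the index pairs of a list of transpositions. -/
lemma list_to_pairs : ∀ l : List (P n), (∀ τ ∈ l, Equiv.Perm.IsSwap τ) →
    ∃ L : List (Fin n × Fin n), (∀ q ∈ L, q.1 ≠ q.2) ∧
      L.map (fun q => Equiv.swap q.1 q.2) = l := by
  intro l
  induction l with
  | nil => exact fun _ => ⟨[], by simp, rfl⟩
  | cons τ l ih =>
    intro hl
    obtain ⟨L, hL, hmap⟩ := ih (fun τ hτ => hl τ (List.mem_cons_of_mem _ hτ))
    obtain ⟨a, b, hab, rfl⟩ := hl τ (List.mem_cons_self)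
    exact ⟨(a, b) :: L, by
      intro q hq
      rcases List.mem_cons.1 hq with h | h
      · exact h ▸ hab
      · exact hL q h, by rw [List.map_cons, hmap]⟩

/-- The weighted counting estimate behind the curvature bound. -/
lemma count_bound (θ : Finset (Fin n) → ℝ) (hθ1 : ∑ A, θ A = 1) :
    ∀ L : List (Fin n × Fin n), (∀ q ∈ L, q.1 ≠ q.2) →
    ∑ A : Finset (Fin n), θ A * ((L.filter (fun q => ¬(q.1 ∈ A ∧ q.2 ∈ A))).length : ℝ)
      ≤ (1 - ⨅ q : {q : Fin n × Fin n // q.1 ≠ q.2},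
            ∑ A ∈ Finset.univ.filter (fun A => q.1.1 ∈ A ∧ q.1.2 ∈ A), θ A) * L.length := by
  set c : ℝ := ⨅ q : {q : Fin n × Fin n // q.1 ≠ q.2},
      ∑ A ∈ Finset.univ.filter (fun A => q.1.1 ∈ A ∧ q.1.2 ∈ A), θ A with hc
  have hbdd : BddBelow (Set.range fun q : {q : Fin n × Fin n // q.1 ≠ q.2} =>
      ∑ A ∈ Finset.univ.filter (fun A => q.1.1 ∈ A ∧ q.1.2 ∈ A), θ A) :=
    (Set.finite_range _).bddBelow
  intro L
  induction L with
  | nil => intro _; simp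
  | cons q L ih =>
    intro hL
    have hq : q.1 ≠ q.2 := hL q (List.mem_cons_self)
    have hstep : ∀ A : Finset (Fin n),
        (((q :: L).filter (fun q => ¬(q.1 ∈ A ∧ q.2 ∈ A))).length : ℝ)
          = ((L.filter (fun q => ¬(q.1 ∈ A ∧ q.2 ∈ A))).length : ℝ)
            + (if ¬(q.1 ∈ A ∧ q.2 ∈ A) then (1:ℝ) else 0) := by
      intro A
      by_cases h : q.1 ∈ A ∧ q.2 ∈ A
      · simp [List.filter_cons, h]
      · rcases not_and_or.mp h with h' | h' <;> simp [List.filter_cons, h, h']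
    have key : ∑ A : Finset (Fin n), θ A * (if ¬(q.1 ∈ A ∧ q.2 ∈ A) then (1:ℝ) else 0)
        ≤ 1 - c := by
      have h1 : ∑ A : Finset (Fin n), θ A * (if ¬(q.1 ∈ A ∧ q.2 ∈ A) then (1:ℝ) else 0)
          = ∑ A ∈ Finset.univ.filter (fun A => ¬(q.1 ∈ A ∧ q.2 ∈ A)), θ A := by
        rw [Finset.sum_filter]
        exact Finset.sum_congr rfl (fun A _ => by by_cases h : q.1 ∈ A ∧ q.2 ∈ A <;> simp [h])
      have h2 : ∑ A ∈ Finset.univ.filter (fun A => q.1 ∈ A ∧ q.2 ∈ A), θ A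
          + ∑ A ∈ Finset.univ.filter (fun A => ¬(q.1 ∈ A ∧ q.2 ∈ A)), θ A = 1 := by
        rw [Finset.sum_filter_add_sum_filter_not, hθ1]
      have h3 : c ≤ ∑ A ∈ Finset.univ.filter (fun A => q.1 ∈ A ∧ q.2 ∈ A), θ A :=
        ciInf_le hbdd ⟨q, hq⟩
      rw [h1]
      linarith
    have ihL := ih (fun r hr => hL r (List.mem_cons_of_mem _ hr))
    calc ∑ A : Finset (Fin n), θ A * (((q :: L).filter (fun q => ¬(q.1 ∈ A ∧ q.2 ∈ A))).length : ℝ)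
        = ∑ A : Finset (Fin n), (θ A * ((L.filter (fun q => ¬(q.1 ∈ A ∧ q.2 ∈ A))).length : ℝ)
            + θ A * (if ¬(q.1 ∈ A ∧ q.2 ∈ A) then (1:ℝ) else 0)) := by
          refine Finset.sum_congr rfl (fun A _ => ?_)
          rw [hstep A, mul_add]
      _ = ∑ A : Finset (Fin n), θ A * ((L.filter (fun q => ¬(q.1 ∈ A ∧ q.2 ∈ A))).length : ℝ)
            + ∑ A : Finset (Fin n), θ A * (if ¬(q.1 ∈ A ∧ q.2 ∈ A) then (1:ℝ) else 0) :=
          Finset.sum_add_distrib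
      _ ≤ (1 - c) * L.length + (1 - c) := add_le_add ihL key
      _ = (1 - c) * (q :: L).length := by
          rw [List.length_cons]
          push_cast
          ring

end Stmt15Aux

open Stmt15Aux

/-- Transposition-distance curvature for block shuffles: (1) `W_∞(T_A(σ,·),T_A(η,·)) ≤
dist(σ,η)`; (2) if `σ,η` differ by the transposition of positions `i ≠ j` then
`W₁(T_A(σ,·),T_A(η,·)) = 0` if `{i,j} ⊆ A` and `≤ 1` otherwise; (3) hence
`∑_A θ_A W₁(T_A(σ,·),T_A(η,·)) ≤ (1-θ⋆⋆) dist(σ,η)` for every probability vector `θ`,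
where `θ⋆⋆ = min_{i≠j} ∑_{A ⊇ {i,j}} θ_A`. All Wasserstein bounds are witnessed by
couplings. -/
theorem stmt_15 {n : ℕ} (hn : 2 ≤ n) :
    (∀ (A : Finset (Fin n)) (σ η : Equiv.Perm (Fin n)),
      ∃ π : Measure (Equiv.Perm (Fin n) × Equiv.Perm (Fin n)), IsProbabilityMeasure π ∧
        π.map Prod.fst = shuffleKernel A σ ∧ π.map Prod.snd = shuffleKernel A η ∧
        ∀ᵐ p ∂π, permDist p.1 p.2 ≤ permDist σ η) ∧
    (∀ (A : Finset (Fin n)) (σ : Equiv.Perm (Fin n)) (i j : Fin n), i ≠ j →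
      (i ∈ A → j ∈ A →
        ∃ π : Measure (Equiv.Perm (Fin n) × Equiv.Perm (Fin n)), IsProbabilityMeasure π ∧
          π.map Prod.fst = shuffleKernel A σ ∧
          π.map Prod.snd = shuffleKernel A (σ * Equiv.swap i j) ∧
          ∀ᵐ p ∂π, p.1 = p.2) ∧
      (∃ π : Measure (Equiv.Perm (Fin n) × Equiv.Perm (Fin n)), IsProbabilityMeasure π ∧
        π.map Prod.fst = shuffleKernel A σ ∧
        π.map Prod.snd = shuffleKernel A (σ * Equiv.swap i j) ∧
        ∫ p, (permDist p.1 p.2 : ℝ) ∂π ≤ 1)) ∧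
    (∀ (θ : Finset (Fin n) → ℝ), (∀ A, 0 ≤ θ A) → (∑ A, θ A = 1) →
      ∀ σ η : Equiv.Perm (Fin n),
        ∃ π : Finset (Fin n) → Measure (Equiv.Perm (Fin n) × Equiv.Perm (Fin n)),
          (∀ A, IsProbabilityMeasure (π A)) ∧
          (∀ A, (π A).map Prod.fst = shuffleKernel A σ) ∧
          (∀ A, (π A).map Prod.snd = shuffleKernel A η) ∧
          ∑ A : Finset (Fin n), θ A * ∫ p, (permDist p.1 p.2 : ℝ) ∂(π A)
            ≤ (1 - ⨅ q : {q : Fin n × Fin n // q.1 ≠ q.2},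
                  ∑ A ∈ Finset.univ.filter (fun A => q.1.1 ∈ A ∧ q.1.2 ∈ A), θ A)
                * (permDist σ η : ℝ)) := by
  refine ⟨?_, ?_, ?_⟩
  · -- Part 1
    intro A σ η
    obtain ⟨π, hprob, hfst, hsnd, hae, _⟩ := coupling A σ η 1 (one_mem_Sset A)
    rw [mul_one] at hae
    exact ⟨π, hprob, hfst, hsnd, hae⟩
  · -- Part 2
    intro A σ i j hij
    constructor
    · -- 2a: both positions in A, diagonal coupling
      intro hi hj
      refine ⟨(uniformOn (Sset A)).map (fun x => (σ * x, σ * x)), ?_, ?_, ?_, ?_⟩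
      · exact Measure.isProbabilityMeasure_map (measP _).aemeasurable
      · rw [Measure.map_map measurable_fst (measP _)]; rfl
      · rw [Measure.map_map measurable_snd (measP _),
          shuffleKernel_mul A σ (swap_mem_Sset hi hj)]
        rfl
      · exact ae_map' (fun x => rfl)
    · -- 2b: general bound ≤ 1
      obtain ⟨π, hprob, hfst, hsnd, _, hint⟩ :=
        coupling A σ (σ * Equiv.swap i j) 1 (one_mem_Sset A)
      refine ⟨π, hprob, hfst, hsnd, hint.trans ?_⟩
      have h1 : permDist σ (σ * Equiv.swap i j * 1) ≤ 1 := by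
        simp only [mul_one]
        have := permDist_le (σ := σ) (η := σ * Equiv.swap i j) (l := [Equiv.swap i j])
          (fun τ hτ => by
            rcases List.mem_singleton.1 hτ with rfl
            exact ⟨i, j, hij, rfl⟩) (by simp)
        simpa using this
      exact_mod_cast h1
  · -- Part 3
    intro θ hθ0 hθ1 σ η
    obtain ⟨l, hsw, hlen, hprod⟩ := exists_list σ η
    obtain ⟨L, hLpair, hLmap⟩ := list_to_pairs l hsw
    have hLlen : (L.length : ℝ) = (permDist σ η : ℝ) := by
      rw [← hlen, ← hLmap, List.length_map]
    have key : ∀ A : Finset (Fin n),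
        ∃ π : Measure (Equiv.Perm (Fin n) × Equiv.Perm (Fin n)), IsProbabilityMeasure π ∧
          π.map Prod.fst = shuffleKernel A σ ∧ π.map Prod.snd = shuffleKernel A η ∧
          ∫ p, (permDist p.1 p.2 : ℝ) ∂π
            ≤ ((L.filter (fun q => ¬(q.1 ∈ A ∧ q.2 ∈ A))).length : ℝ) := by
      intro A
      obtain ⟨l', ρ, hsw', hρ, hprod', hlen'⟩ := push A L hLpair
      rw [hLmap] at hprod'
      -- σ * l'.prod = η * ρ⁻¹
      have h2 : σ * l'.prod = η * ρ⁻¹ := by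
        have : σ * (l'.prod * ρ) = η := by rw [← hprod']; exact hprod
        calc σ * l'.prod = σ * (l'.prod * ρ) * ρ⁻¹ := by group
          _ = η * ρ⁻¹ := by rw [this]
      have hd : permDist σ (η * ρ⁻¹) ≤ (L.filter (fun q => ¬(q.1 ∈ A ∧ q.2 ∈ A))).length :=
        hlen' ▸ permDist_le hsw' h2
      obtain ⟨π, hprob, hfst, hsnd, _, hint⟩ := coupling A σ η ρ⁻¹ (inv_mem_Sset hρ)
      exact ⟨π, hprob, hfst, hsnd, hint.trans (by exact_mod_cast hd)⟩
    choose π hprob hfst hsnd hint using key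
    refine ⟨π, hprob, hfst, hsnd, ?_⟩
    calc ∑ A : Finset (Fin n), θ A * ∫ p, (permDist p.1 p.2 : ℝ) ∂(π A)
        ≤ ∑ A : Finset (Fin n), θ A * ((L.filter (fun q => ¬(q.1 ∈ A ∧ q.2 ∈ A))).length : ℝ) :=
          Finset.sum_le_sum (fun A _ => mul_le_mul_of_nonneg_left (hint A) (hθ0 A))
      _ ≤ (1 - ⨅ q : {q : Fin n × Fin n // q.1 ≠ q.2},
            ∑ A ∈ Finset.univ.filter (fun A => q.1.1 ∈ A ∧ q.1.2 ∈ A), θ A) * L.length :=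
          count_bound θ hθ1 L hLpair
      _ = _ := by rw [hLlen]
end
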